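/- arXiv:2405.06142 — 6 statements merged into one kernel-verified Lean document; each statement's English description precedes it below -/
import Mathlib

section
/- Let r ≥ 3 and let ω(2^{2r} − 1) denote the number of distinct prime factors of 2^{2r} − 1. If r > ω(2^{2r} − 1), then there exists z ∈ GF(2^{2r}) such that 1 + z³ is a primitive element of GF(2^{2r}). -/
open Finset

namespace Stmt12

open scoped Classical

variable {F : Type} [Field F] [Fintype F]

noncomputable instance : Fintype (MulChar F ℂ) := Fintype.ofFinite _

private lemma hasEnough (k : ℕ) (hk : k ≠ 0) : HasEnoughRootsOfUnity ℂ k := by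
  haveI : NeZero ((k : ℕ) : ℂ) := ⟨by exact_mod_cast hk⟩
  infer_instance

private lemma hn0 : Fintype.card F - 1 ≠ 0 := by
  have := Fintype.one_lt_card (α := F)
  omega

private lemma card_units' : Fintype.card Fˣ = Fintype.card F - 1 := Fintype.card_units F

private lemma cyclicM : IsCyclic (MulChar F ℂ) := by
  haveI := hasEnough (Monoid.exponent Fˣ) Monoid.exponent_ne_zero_of_finite
  obtain ⟨e⟩ := MulChar.mulEquiv_units F ℂ
  exact isCyclic_of_surjective e.symm.toMonoidHom e.symm.surjective

private lemma cardM : Fintype.card (MulChar F ℂ) = Fintype.card F - 1 := by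
  haveI := hasEnough (Monoid.exponent Fˣ) Monoid.exponent_ne_zero_of_finite
  have h := MulChar.card_eq_card_units_of_hasEnoughRootsOfUnity F ℂ
  rwa [Nat.card_eq_fintype_card, Nat.card_eq_fintype_card, card_units'] at h

private lemma exists_gen :
    ∃ χ₀ : MulChar F ℂ, orderOf χ₀ = Fintype.card F - 1 ∧
      (∀ χ : MulChar F ℂ, ∃ k : ℕ, χ₀ ^ k = χ) ∧
      (∀ b : Fˣ, χ₀ (b : F) = 1 → b = 1) := by
  haveI := hasEnough (Monoid.exponent Fˣ) Monoid.exponent_ne_zero_of_finite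
  haveI : IsCyclic (MulChar F ℂ) := cyclicM
  have hcard : Fintype.card (MulChar F ℂ) = Fintype.card F - 1 := cardM
  obtain ⟨χ₀, hχ₀⟩ := IsCyclic.exists_generator (α := MulChar F ℂ)
  have hpow : ∀ χ : MulChar F ℂ, ∃ k : ℕ, χ₀ ^ k = χ := by
    intro χ
    have := hχ₀ χ
    rw [← mem_powers_iff_mem_zpowers, Submonoid.mem_powers_iff] at this
    exact this
  refine ⟨χ₀, ?_, hpow, ?_⟩
  · rw [orderOf_eq_card_of_forall_mem_zpowers hχ₀, Nat.card_eq_fintype_card, hcard]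
  · intro b hb
    by_contra hb1
    have hbF : (b : F) ≠ 1 := fun h => hb1 (Units.val_eq_one.mp h)
    obtain ⟨χ, hχ⟩ := MulChar.exists_apply_ne_one_of_hasEnoughRootsOfUnity F ℂ hbF
    obtain ⟨k, rfl⟩ := hpow χ
    rw [MulChar.pow_apply_coe, hb, one_pow] at hχ
    exact hχ rfl

variable (χ₀ : MulChar F ℂ)

private lemma ord_pow_div (h0 : orderOf χ₀ = Fintype.card F - 1)
    {d : ℕ} (hd : d ∣ Fintype.card F - 1) :
    orderOf (χ₀ ^ ((Fintype.card F - 1) / d)) = d := by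
  rw [orderOf_pow, h0, Nat.gcd_eq_right (Nat.div_dvd_of_dvd hd),
    Nat.div_div_self hd hn0]

private lemma filter_eq_image (h0 : orderOf χ₀ = Fintype.card F - 1)
    (hgen : ∀ χ : MulChar F ℂ, ∃ k : ℕ, χ₀ ^ k = χ)
    {d : ℕ} (hd : d ∣ Fintype.card F - 1) (hd0 : 0 < d) :
    univ.filter (fun χ : MulChar F ℂ => χ ^ d = 1)
      = (range d).image (fun j => (χ₀ ^ ((Fintype.card F - 1) / d)) ^ j) := by
  have hn : Fintype.card F - 1 ≠ 0 := hn0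
  have hords := ord_pow_div χ₀ h0 hd
  ext χ
  simp only [mem_filter, mem_univ, true_and, mem_image, mem_range]
  constructor
  · intro hχ
    obtain ⟨k, rfl⟩ := hgen χ
    rw [← pow_mul] at hχ
    have hdvd : (Fintype.card F - 1) ∣ k * d := by
      rwa [← h0, orderOf_dvd_iff_pow_eq_one]
    obtain ⟨t, ht⟩ := hdvd
    have hnd : (Fintype.card F - 1) / d * d = Fintype.card F - 1 := Nat.div_mul_cancel hd
    have hk : k = (Fintype.card F - 1) / d * t := by
      have h2 : k * d = ((Fintype.card F - 1) / d * t) * d := by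
        rw [ht]; rw [mul_right_comm, hnd]
      exact Nat.eq_of_mul_eq_mul_right hd0 h2
    refine ⟨t % d, Nat.mod_lt _ hd0, ?_⟩
    show (χ₀ ^ ((Fintype.card F - 1) / d)) ^ (t % d) = χ₀ ^ k
    have hmod := pow_mod_orderOf (χ₀ ^ ((Fintype.card F - 1) / d)) t
    rw [hords] at hmod
    rw [hmod, ← pow_mul, ← hk]
  · rintro ⟨j, hj, rfl⟩
    rw [← pow_mul, ← pow_mul]
    have h2 : (Fintype.card F - 1) / d * (j * d) = (Fintype.card F - 1) * j := by
      rw [← mul_assoc, mul_right_comm, Nat.div_mul_cancel hd]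
    rw [h2, pow_mul, ← h0, pow_orderOf_eq_one, one_pow]

private lemma inj_on_range (h0 : orderOf χ₀ = Fintype.card F - 1)
    {d : ℕ} (hd : d ∣ Fintype.card F - 1) :
    Set.InjOn (fun j => (χ₀ ^ ((Fintype.card F - 1) / d)) ^ j) ↑(range d) := by
  intro i hi j hj hij
  have hords := ord_pow_div χ₀ h0 hd
  simp only [coe_range, Set.mem_Iio] at hi hj
  exact pow_injOn_Iio_orderOf (by rwa [hords]) (by rwa [hords]) hij

private lemma key_card (h0 : orderOf χ₀ = Fintype.card F - 1)
    (hgen : ∀ χ : MulChar F ℂ, ∃ k : ℕ, χ₀ ^ k = χ)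
    {d : ℕ} (hd : d ∣ Fintype.card F - 1) (hd0 : 0 < d) :
    (univ.filter (fun χ : MulChar F ℂ => χ ^ d = 1)).card = d := by
  rw [filter_eq_image χ₀ h0 hgen hd hd0, Finset.card_image_of_injOn (inj_on_range χ₀ h0 hd),
    card_range]

private lemma key_sum (h0 : orderOf χ₀ = Fintype.card F - 1)
    (hgen : ∀ χ : MulChar F ℂ, ∃ k : ℕ, χ₀ ^ k = χ)
    (hfaith : ∀ b : Fˣ, χ₀ (b : F) = 1 → b = 1)
    {d : ℕ} (hd : d ∣ Fintype.card F - 1) (hd0 : 0 < d) (a : Fˣ) :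
    ∑ χ ∈ univ.filter (fun χ : MulChar F ℂ => χ ^ d = 1), χ (a : F)
      = if a ^ ((Fintype.card F - 1) / d) = 1 then (d : ℂ) else 0 := by
  rw [filter_eq_image χ₀ h0 hgen hd hd0,
    Finset.sum_image (fun i hi j hj hij => inj_on_range χ₀ h0 hd (by simpa using hi) (by simpa using hj) hij)]
  have hxi : ∀ j : ℕ, ((χ₀ ^ ((Fintype.card F - 1) / d)) ^ j) (a : F)
      = (χ₀ ((a : Fˣ) ^ ((Fintype.card F - 1) / d) : Fˣ)) ^ j := by
    intro j
    rw [MulChar.pow_apply_coe, MulChar.pow_apply_coe, ← map_pow, Units.val_pow_eq_pow_val]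
  simp only [hxi]
  by_cases ha : a ^ ((Fintype.card F - 1) / d) = 1
  · rw [if_pos ha, ha]
    simp [Units.val_one]
  · rw [if_neg ha]
    set ξ : ℂ := χ₀ ((a ^ ((Fintype.card F - 1) / d) : Fˣ) : F) with hξ
    have hξ1 : ξ ≠ 1 := fun h => ha (hfaith _ h)
    have hξd : ξ ^ d = 1 := by
      rw [hξ, ← map_pow, ← Units.val_pow_eq_pow_val, ← pow_mul, Nat.div_mul_cancel hd,
        ← card_units', pow_card_eq_one, Units.val_one, map_one]
    rw [geom_sum_eq hξ1 d, hξd, sub_self, zero_div]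

private lemma exists_root {d : ℕ} (hd : d ∣ Fintype.card F - 1) (a : Fˣ)
    (ha : a ^ ((Fintype.card F - 1) / d) = 1) : ∃ v : Fˣ, v ^ d = a := by
  have hd0 : 0 < d := by
    rcases Nat.eq_zero_or_pos d with h | h
    · exfalso; apply hn0 (F := F); simpa [h] using hd
    · exact h
  obtain ⟨g, hg⟩ := IsCyclic.exists_generator (α := Fˣ)
  have hog : orderOf g = Fintype.card F - 1 := by
    rw [orderOf_eq_card_of_forall_mem_zpowers hg, Nat.card_eq_fintype_card, card_units']
  obtain ⟨k, hk⟩ : ∃ k : ℕ, g ^ k = a := by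
    have := hg a
    rwa [← mem_powers_iff_mem_zpowers, Submonoid.mem_powers_iff] at this
  have hdvd : (Fintype.card F - 1) ∣ k * ((Fintype.card F - 1) / d) := by
    rw [← hog, orderOf_dvd_iff_pow_eq_one, pow_mul, hk]
    rw [hog]
    exact ha
  obtain ⟨t, ht⟩ := hdvd
  have hnd0 : 0 < (Fintype.card F - 1) / d :=
    Nat.div_pos (Nat.le_of_dvd (Nat.pos_of_ne_zero hn0) hd) hd0
  have hk2 : k = d * t := by
    have h2 : k * ((Fintype.card F - 1) / d) = d * t * ((Fintype.card F - 1) / d) := by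
      rw [ht]
      conv_lhs => rw [← Nat.mul_div_cancel' hd]
      ring
    exact Nat.eq_of_mul_eq_mul_right hnd0 h2
  exact ⟨g ^ t, by rw [← pow_mul, mul_comm t d, ← hk2, hk]⟩

private lemma sum_units_eq (f : F → ℂ) :
    ∑ u : Fˣ, f (u : F) = ∑ x ∈ univ.erase (0 : F), f x := by
  refine Finset.sum_bij' (fun (u : Fˣ) _ => (u : F))
    (fun x hx => Units.mk0 x (Finset.ne_of_mem_erase hx)) ?_ ?_ ?_ ?_ ?_
  · intro u _
    exact Finset.mem_erase.mpr ⟨u.ne_zero, mem_univ _⟩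
  · intro x hx
    exact mem_univ _
  · intro u _
    exact Units.ext rfl
  · intro x hx
    rfl
  · intro u _
    rfl

private lemma sum_units_jacobi (hchar : ringChar F = 2) (χ lam : MulChar F ℂ) :
    ∑ u : Fˣ, χ (u : F) * lam ((u : F) - 1) = jacobiSum χ lam := by
  haveI : CharP F 2 := by rw [← hchar]; exact ringChar.charP F
  have h1 : ∀ x : F, x - 1 = 1 - x := fun x => by
    rw [CharTwo.sub_eq_add, CharTwo.sub_eq_add, add_comm]
  rw [jacobiSum, ← Finset.add_sum_erase _ _ (mem_univ (0 : F)), MulChar.map_zero χ, zero_mul,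
    zero_add, sum_units_eq (fun x => χ x * lam (x - 1))]
  exact sum_congr rfl fun x _ => by rw [h1]

private lemma jacobi_conj (χ lam : MulChar F ℂ) :
    jacobiSum χ⁻¹ lam⁻¹ = (starRingEnd ℂ) (jacobiSum χ lam) := by
  rw [← MulChar.star_eq_inv, ← MulChar.star_eq_inv, jacobiSum, jacobiSum, map_sum]
  exact sum_congr rfl fun x _ => by
    rw [MulChar.star_apply, MulChar.star_apply, map_mul]
    rfl

private lemma jacobi_abs (hchar : ringChar F = 2) {χ lam : MulChar F ℂ}
    (hχ : χ ≠ 1) (hlam : lam ≠ 1) :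
    ‖jacobiSum χ lam‖ ≤ Real.sqrt (Fintype.card F) := by
  by_cases h : χ * lam = 1
  · have hlam_eq : lam = χ⁻¹ := eq_inv_of_mul_eq_one_left (by rwa [mul_comm])
    rw [hlam_eq, jacobiSum_nontrivial_inv hχ]
    haveI : CharP F 2 := by rw [← hchar]; exact ringChar.charP F
    rw [CharTwo.neg_eq (1 : F), map_one]
    have h1 : ‖(-(1 : ℂ))‖ = 1 := by simp
    rw [h1, ← Real.sqrt_one]
    exact Real.sqrt_le_sqrt (by exact_mod_cast Fintype.one_lt_card.le)
  · have hne : ringChar ℂ ≠ ringChar F := by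
      rw [hchar, ringChar.eq ℂ 0]
      norm_num
    have h2 := jacobiSum_mul_jacobiSum_inv hne hχ hlam h
    rw [jacobi_conj, Complex.mul_conj] at h2
    have h3 : Complex.normSq (jacobiSum χ lam) = (Fintype.card F : ℝ) := by
      exact_mod_cast h2
    rw [Complex.norm_def, h3]

/-! ### Number-theoretic helper lemmas -/

private lemma squarefree_prod_primes {S : Finset ℕ} (hS : ∀ p ∈ S, p.Prime) :
    Squarefree (∏ p ∈ S, p) := by
  induction S using Finset.cons_induction with
  | empty => simpa using squarefree_one
  | cons p S hp ih =>
    rw [Finset.prod_cons]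
    have hpp := hS p (Finset.mem_cons_self _ _)
    have hS' : ∀ q ∈ S, q.Prime := fun q hq => hS q (Finset.mem_cons_of_mem hq)
    have hcop : Nat.Coprime p (∏ q ∈ S, q) := Nat.Coprime.prod_right fun q hq =>
      (Nat.coprime_primes hpp (hS' q hq)).mpr (by rintro rfl; exact hp hq)
    rw [Nat.squarefree_mul hcop]
    exact ⟨hpp.squarefree, ih hS'⟩

private lemma moebius_indicator {n o : ℕ} (hn : n ≠ 0) (ho : o ∣ n) :
    ∑ S ∈ n.primeFactors.powerset, ((-1 : ℂ)) ^ S.card * (if (∏ p ∈ S, p) ∣ n / o then 1 else 0)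
      = if o = n then 1 else 0 := by
  have ho0 : o ≠ 0 := by rintro rfl; exact hn (zero_dvd_iff.mp ho)
  have hno : n / o ≠ 0 := Nat.div_ne_zero_iff.mpr ⟨ho0, Nat.le_of_dvd (Nat.pos_of_ne_zero hn) ho⟩
  have hsub : (n / o).primeFactors ⊆ n.primeFactors :=
    Nat.primeFactors_mono (Nat.div_dvd_of_dvd ho) hn
  have hcond : ∀ S ∈ n.primeFactors.powerset,
      ((∏ p ∈ S, p) ∣ n / o ↔ S ⊆ (n / o).primeFactors) := by
    intro S hS
    rw [mem_powerset] at hS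
    constructor
    · intro h p hp
      exact Nat.mem_primeFactors.mpr ⟨Nat.prime_of_mem_primeFactors (hS hp),
        dvd_trans (Finset.dvd_prod_of_mem _ hp) h, hno⟩
    · intro h
      exact dvd_trans (prod_dvd_prod_of_subset _ _ _ h) (Nat.prod_primeFactors_dvd _)
  have step1 : ∑ S ∈ n.primeFactors.powerset,
      ((-1 : ℂ)) ^ S.card * (if (∏ p ∈ S, p) ∣ n / o then 1 else 0)
      = ∑ S ∈ (n / o).primeFactors.powerset, ((-1 : ℂ)) ^ S.card := by
    have hconv : ∀ S ∈ n.primeFactors.powerset,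
        ((-1 : ℂ)) ^ S.card * (if (∏ p ∈ S, p) ∣ n / o then 1 else 0)
        = if (∏ p ∈ S, p) ∣ n / o then ((-1 : ℂ)) ^ S.card else 0 := by
      intro S _; split_ifs <;> ring
    rw [Finset.sum_congr rfl hconv, ← Finset.sum_filter]
    have hfe : n.primeFactors.powerset.filter (fun S => (∏ p ∈ S, p) ∣ n / o)
        = (n / o).primeFactors.powerset := by
      ext S
      simp only [mem_filter, mem_powerset]
      constructor
      · rintro ⟨h1, h2⟩
        exact (hcond S (mem_powerset.mpr h1)).mp h2
      · intro h
        exact ⟨h.trans hsub, (hcond S (mem_powerset.mpr (h.trans hsub))).mpr h⟩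
    rw [hfe]
  rw [step1]
  have hint : ∑ S ∈ (n / o).primeFactors.powerset, ((-1 : ℂ)) ^ S.card
      = (((∑ S ∈ (n / o).primeFactors.powerset, ((-1 : ℤ)) ^ S.card : ℤ)) : ℂ) := by
    push_cast
    rfl
  rw [hint, Finset.sum_powerset_neg_one_pow_card]
  have hiff : ((n / o).primeFactors = ∅) ↔ o = n := by
    rw [Nat.primeFactors_eq_empty]
    constructor
    · rintro (h | h)
      · exact absurd h hno
      · have h2 := Nat.mul_div_cancel' ho
        rw [h, mul_one] at h2
        exact h2
    · rintro rfl
      exact Or.inr (Nat.div_self (Nat.pos_of_ne_zero hn))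
  split_ifs with h1 h2 h2
  · norm_num
  · exact absurd (hiff.mp h1) h2
  · exact absurd (hiff.mpr h2) h1
  · norm_num

private lemma prod_one_sub_inv {W : Finset ℕ} :
    ∑ T ∈ W.powerset, (-1 : ℂ) ^ T.card / ((∏ p ∈ T, p : ℕ) : ℂ)
      = ∏ p ∈ W, (1 - (p : ℂ)⁻¹) := by
  have h := Finset.prod_add (fun p : ℕ => -(p : ℂ)⁻¹) (fun _ => (1 : ℂ)) W
  have h2 : ∀ p : ℕ, -(p:ℂ)⁻¹ + 1 = 1 - (p:ℂ)⁻¹ := fun p => by ring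
  simp only [h2, Finset.prod_const_one, mul_one] at h
  rw [h]
  refine Finset.sum_congr rfl fun T _ => ?_
  have h3 : ∏ i ∈ T, -(i : ℂ)⁻¹ = ∏ i ∈ T, (-1) * (i : ℂ)⁻¹ := by
    exact Finset.prod_congr rfl fun i _ => (neg_one_mul _).symm
  rw [h3, Finset.prod_mul_distrib, Finset.prod_const, Finset.prod_inv_distrib,
    div_eq_mul_inv, Nat.cast_prod]

private lemma coeff_zero' {n e : ℕ} (he : ¬ Squarefree e) :
    ∑ S ∈ n.primeFactors.powerset,
      (if e ∣ ∏ p ∈ S, p then ((-1 : ℂ) ^ S.card / ((∏ p ∈ S, p : ℕ) : ℂ)) else 0) = 0 := by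
  refine Finset.sum_eq_zero fun S hS => if_neg fun h => he ?_
  rw [mem_powerset] at hS
  exact Squarefree.squarefree_of_dvd h
    (squarefree_prod_primes fun p hp => Nat.prime_of_mem_primeFactors (hS hp))

private lemma coeff_eval {n e : ℕ} (hn : n ≠ 0) (he : e ∣ n) (hesq : Squarefree e) :
    ∑ S ∈ n.primeFactors.powerset,
      (if e ∣ ∏ p ∈ S, p then ((-1 : ℂ) ^ S.card / ((∏ p ∈ S, p : ℕ) : ℂ)) else 0)
      = (-1 : ℂ) ^ e.primeFactors.card * ((e : ℂ))⁻¹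
        * ∏ p ∈ n.primeFactors \ e.primeFactors, (1 - (p : ℂ)⁻¹) := by
  have hEsub : e.primeFactors ⊆ n.primeFactors := Nat.primeFactors_mono he hn
  have hprodE : ∏ p ∈ e.primeFactors, p = e := Nat.prod_primeFactors_of_squarefree hesq
  have hcond : ∀ S ∈ n.primeFactors.powerset, (e ∣ ∏ p ∈ S, p ↔ e.primeFactors ⊆ S) := by
    intro S hS
    rw [mem_powerset] at hS
    constructor
    · intro h p hp
      have hpp : p.Prime := Nat.prime_of_mem_primeFactors hp
      have hpd : (p : ℕ) ∣ ∏ q ∈ S, q := dvd_trans (Nat.dvd_of_mem_primeFactors hp) h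
      obtain ⟨q, hq, hpq⟩ := (Prime.dvd_finset_prod_iff hpp.prime _).mp hpd
      rwa [(Nat.prime_dvd_prime_iff_eq hpp (Nat.prime_of_mem_primeFactors (hS hq))).mp hpq]
    · intro h
      calc e = ∏ p ∈ e.primeFactors, p := hprodE.symm
        _ ∣ ∏ p ∈ S, p := prod_dvd_prod_of_subset _ _ _ h
  have step1 : ∑ S ∈ n.primeFactors.powerset,
      (if e ∣ ∏ p ∈ S, p then ((-1 : ℂ) ^ S.card / ((∏ p ∈ S, p : ℕ) : ℂ)) else 0)
      = ∑ S ∈ n.primeFactors.powerset.filter (fun S => e.primeFactors ⊆ S),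
          (-1 : ℂ) ^ S.card / ((∏ p ∈ S, p : ℕ) : ℂ) := by
    rw [Finset.sum_filter]
    exact Finset.sum_congr rfl fun S hS => if_congr (hcond S hS) rfl rfl
  rw [step1]
  have step2 : ∑ S ∈ n.primeFactors.powerset.filter (fun S => e.primeFactors ⊆ S),
      (-1 : ℂ) ^ S.card / ((∏ p ∈ S, p : ℕ) : ℂ)
      = ∑ T ∈ (n.primeFactors \ e.primeFactors).powerset,
          (-1 : ℂ) ^ (T ∪ e.primeFactors).card / ((∏ p ∈ T ∪ e.primeFactors, p : ℕ) : ℂ) := by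
    refine Finset.sum_bij' (fun S _ => S \ e.primeFactors) (fun T _ => T ∪ e.primeFactors)
      ?_ ?_ ?_ ?_ ?_
    · intro S hS
      rw [mem_filter, mem_powerset] at hS
      rw [mem_powerset]
      exact Finset.sdiff_subset_sdiff hS.1 (le_refl _)
    · intro T hT
      rw [mem_powerset] at hT
      rw [mem_filter, mem_powerset]
      exact ⟨Finset.union_subset (hT.trans (Finset.sdiff_subset)) hEsub,
        Finset.subset_union_right⟩
    · intro S hS
      rw [mem_filter] at hS
      show S \ e.primeFactors ∪ e.primeFactors = S
      exact Finset.sdiff_union_of_subset hS.2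
    · intro T hT
      rw [mem_powerset] at hT
      have hdisj : Disjoint T e.primeFactors :=
        Finset.disjoint_of_subset_left hT (Finset.sdiff_disjoint)
      show (T ∪ e.primeFactors) \ e.primeFactors = T
      exact Finset.union_sdiff_cancel_right hdisj
    · intro S hS
      rw [mem_filter] at hS
      show _ = (-1 : ℂ) ^ (S \ e.primeFactors ∪ e.primeFactors).card
        / ((∏ p ∈ S \ e.primeFactors ∪ e.primeFactors, p : ℕ) : ℂ)
      rw [Finset.sdiff_union_of_subset hS.2]
  rw [step2]
  have step3 : ∀ T ∈ (n.primeFactors \ e.primeFactors).powerset,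
      (-1 : ℂ) ^ (T ∪ e.primeFactors).card / ((∏ p ∈ T ∪ e.primeFactors, p : ℕ) : ℂ)
      = ((-1 : ℂ) ^ e.primeFactors.card * ((e : ℂ))⁻¹)
        * ((-1 : ℂ) ^ T.card / ((∏ p ∈ T, p : ℕ) : ℂ)) := by
    intro T hT
    rw [mem_powerset] at hT
    have hdisj : Disjoint T e.primeFactors :=
      Finset.disjoint_of_subset_left hT (Finset.sdiff_disjoint)
    rw [Finset.card_union_of_disjoint hdisj, Finset.prod_union hdisj, hprodE, pow_add,
      Nat.cast_mul, div_eq_mul_inv, div_eq_mul_inv, mul_inv]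
    ring
  rw [Finset.sum_congr rfl step3, ← Finset.mul_sum, prod_one_sub_inv]

/-! ### Character-level glue -/

variable (χ₀ : MulChar F ℂ)

private lemma step_indicator (h0 : orderOf χ₀ = Fintype.card F - 1)
    (hgen : ∀ χ : MulChar F ℂ, ∃ k : ℕ, χ₀ ^ k = χ)
    (hfaith : ∀ b : Fˣ, χ₀ (b : F) = 1 → b = 1) (u : Fˣ) :
    (if orderOf u = Fintype.card F - 1 then (1 : ℂ) else 0)
      = ∑ S ∈ (Fintype.card F - 1).primeFactors.powerset,
          ((-1 : ℂ) ^ S.card / ((∏ p ∈ S, p : ℕ) : ℂ))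
            * ∑ χ ∈ univ.filter (fun χ : MulChar F ℂ => χ ^ (∏ p ∈ S, p) = 1), χ (u : F) := by
  have ho : orderOf u ∣ Fintype.card F - 1 := by
    rw [← card_units']; exact orderOf_dvd_card
  rw [← moebius_indicator hn0 ho]
  refine Finset.sum_congr rfl fun S hS => ?_
  rw [mem_powerset] at hS
  have hdn : (∏ p ∈ S, p) ∣ Fintype.card F - 1 :=
    dvd_trans (prod_dvd_prod_of_subset _ _ _ hS) (Nat.prod_primeFactors_dvd _)
  have hd0 : 0 < ∏ p ∈ S, p :=
    Finset.prod_pos fun p hp => (Nat.prime_of_mem_primeFactors (hS hp)).pos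
  rw [key_sum χ₀ h0 hgen hfaith hdn hd0 u]
  have hiff : (u ^ ((Fintype.card F - 1) / (∏ p ∈ S, p)) = 1)
      ↔ ((∏ p ∈ S, p) ∣ (Fintype.card F - 1) / orderOf u) := by
    rw [← orderOf_dvd_iff_pow_eq_one, Nat.dvd_div_iff_mul_dvd hdn,
      Nat.dvd_div_iff_mul_dvd ho, mul_comm]
  rw [if_congr hiff rfl rfl]
  have hd0' : ((∏ p ∈ S, p : ℕ) : ℂ) ≠ 0 := Nat.cast_ne_zero.mpr hd0.ne'
  split_ifs
  · rw [mul_one, div_mul_cancel₀ _ hd0']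
  · rw [mul_zero, mul_zero]

private lemma T_one (h3 : 3 ∣ Fintype.card F - 1)
    (h0 : orderOf χ₀ = Fintype.card F - 1)
    (hgen : ∀ χ : MulChar F ℂ, ∃ k : ℕ, χ₀ ^ k = χ) :
    ∑ lam ∈ univ.filter (fun lam : MulChar F ℂ => lam ^ 3 = 1), jacobiSum (1 : MulChar F ℂ) lam
      = (Fintype.card F : ℂ) - 4 := by
  have hcard3 : (univ.filter (fun lam : MulChar F ℂ => lam ^ 3 = 1)).card = 3 :=
    key_card χ₀ h0 hgen h3 (by norm_num)
  have h1mem : (1 : MulChar F ℂ) ∈ univ.filter (fun lam : MulChar F ℂ => lam ^ 3 = 1) := by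
    simp
  rw [← Finset.add_sum_erase _ _ h1mem, jacobiSum_one_one]
  have hrest : ∀ lam ∈ (univ.filter (fun lam : MulChar F ℂ => lam ^ 3 = 1)).erase 1,
      jacobiSum (1 : MulChar F ℂ) lam = -1 := fun lam hlam =>
    jacobiSum_one_nontrivial (Finset.ne_of_mem_erase hlam)
  rw [Finset.sum_congr rfl hrest, Finset.sum_const, Finset.card_erase_of_mem h1mem, hcard3]
  norm_num
  ring

private lemma T_bound (hchar : ringChar F = 2) (h3 : 3 ∣ Fintype.card F - 1)
    (h0 : orderOf χ₀ = Fintype.card F - 1)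
    (hgen : ∀ χ : MulChar F ℂ, ∃ k : ℕ, χ₀ ^ k = χ)
    {χ : MulChar F ℂ} (hχ : χ ≠ 1) :
    ‖∑ lam ∈ univ.filter (fun lam : MulChar F ℂ => lam ^ 3 = 1), jacobiSum χ lam‖
      ≤ 1 + 2 * Real.sqrt (Fintype.card F) := by
  have hcard3 : (univ.filter (fun lam : MulChar F ℂ => lam ^ 3 = 1)).card = 3 :=
    key_card χ₀ h0 hgen h3 (by norm_num)
  have h1mem : (1 : MulChar F ℂ) ∈ univ.filter (fun lam : MulChar F ℂ => lam ^ 3 = 1) := by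
    simp
  rw [← Finset.add_sum_erase _ _ h1mem]
  have hJ1 : jacobiSum χ (1 : MulChar F ℂ) = -1 := by
    rw [jacobiSum_comm]; exact jacobiSum_one_nontrivial hχ
  rw [hJ1]
  calc ‖-1 + ∑ lam ∈ (univ.filter (fun lam : MulChar F ℂ => lam ^ 3 = 1)).erase 1,
        jacobiSum χ lam‖
      ≤ ‖(-1 : ℂ)‖ + ‖∑ lam ∈ (univ.filter
          (fun lam : MulChar F ℂ => lam ^ 3 = 1)).erase 1, jacobiSum χ lam‖ := by
        exact norm_add_le _ _
    _ ≤ 1 + ∑ lam ∈ (univ.filter (fun lam : MulChar F ℂ => lam ^ 3 = 1)).erase 1,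
          ‖jacobiSum χ lam‖ := by
        simp only [norm_neg, norm_one]
        exact add_le_add_right (norm_sum_le _ _) 1
    _ ≤ 1 + ∑ lam ∈ (univ.filter (fun lam : MulChar F ℂ => lam ^ 3 = 1)).erase 1,
          Real.sqrt (Fintype.card F) := by
        refine add_le_add_right (Finset.sum_le_sum fun lam hlam => ?_) 1
        exact jacobi_abs hchar hχ (Finset.ne_of_mem_erase hlam)
    _ = 1 + 2 * Real.sqrt (Fintype.card F) := by
        rw [Finset.sum_const, Finset.card_erase_of_mem h1mem, hcard3]
        norm_num

private lemma swap1 {ι κ : Type*} (A : Finset ι) (B : Finset κ) (a : ι → ℂ)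
    (V : ι → κ → ℂ) (G : κ → ℂ) :
    ∑ u ∈ B, (∑ i ∈ A, a i * V i u) * G u = ∑ i ∈ A, a i * ∑ u ∈ B, V i u * G u := by
  simp_rw [Finset.sum_mul, Finset.mul_sum, mul_assoc]
  rw [Finset.sum_comm]

private lemma swap2 {M ι : Type*} [Fintype M] (A : Finset ι) (a : ι → ℂ)
    (P : ι → M → Prop) [∀ i x, Decidable (P i x)] (T : M → ℂ) :
    ∑ i ∈ A, a i * ∑ χ ∈ univ.filter (P i), T χ
      = ∑ χ : M, (∑ i ∈ A, if P i χ then a i else 0) * T χ := by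
  simp only [Finset.sum_filter, Finset.mul_sum, Finset.sum_mul, ite_mul, zero_mul,
    mul_ite, mul_zero]
  rw [Finset.sum_comm]

private lemma swap3 {M κ : Type*} (Uc : Finset M) (B : Finset κ) (V : M → κ → ℂ) (G : κ → ℂ) :
    ∑ u ∈ B, (∑ χ ∈ Uc, V χ u) * G u = ∑ χ ∈ Uc, ∑ u ∈ B, V χ u * G u := by
  simp_rw [Finset.sum_mul]
  rw [Finset.sum_comm]

private theorem generic (hchar : ringChar F = 2) {r : ℕ} (hr : 3 ≤ r)
    (hq : Fintype.card F = 2 ^ (2 * r))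
    (hω : (Fintype.card F - 1).primeFactors.card < r) :
    ∃ z : F, IsPrimitiveRoot (1 + z ^ 3) (Fintype.card F - 1) := by
  classical
  haveI : IsCyclic (MulChar F ℂ) := cyclicM
  obtain ⟨χ₀, h0, hgen, hfaith⟩ := exists_gen (F := F)
  have hq64 : (64 : ℕ) ≤ Fintype.card F := by
    rw [hq]
    calc (64 : ℕ) = 2 ^ 6 := by norm_num
      _ ≤ 2 ^ (2 * r) := Nat.pow_le_pow_right (by norm_num) (by omega)
  have hn0' : Fintype.card F - 1 ≠ 0 := hn0
  have h3 : 3 ∣ Fintype.card F - 1 := by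
    rw [hq]
    have h4 : 2 ^ (2 * r) = 4 ^ r := by rw [pow_mul]; norm_num
    rw [h4]
    have hm : 4 ^ r % 3 = 1 := by rw [Nat.pow_mod]; norm_num
    have h1 : 1 ≤ 4 ^ r := Nat.one_le_pow _ _ (by norm_num)
    omega
  set K := (Fintype.card F - 1).primeFactors with hK
  set U3 : Finset (MulChar F ℂ) := univ.filter (fun lam : MulChar F ℂ => lam ^ 3 = 1) with hU3
  set T : MulChar F ℂ → ℂ := fun χ => ∑ lam ∈ U3, jacobiSum χ lam with hT
  set coeff : MulChar F ℂ → ℂ := fun χ => ∑ S ∈ K.powerset,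
      if χ ^ (∏ p ∈ S, p) = 1 then ((-1 : ℂ) ^ S.card / ((∏ p ∈ S, p : ℕ) : ℂ)) else 0
    with hcoeff
  set N : ℂ := ∑ u : Fˣ, (if orderOf u = Fintype.card F - 1 then (1 : ℂ) else 0)
      * (∑ lam ∈ U3, lam ((u : F) - 1)) with hN
  -- Step 1: expand the indicator and swap sums
  have hstep1 : N = ∑ S ∈ K.powerset, ((-1 : ℂ) ^ S.card / ((∏ p ∈ S, p : ℕ) : ℂ))
      * ∑ χ ∈ univ.filter (fun χ : MulChar F ℂ => χ ^ (∏ p ∈ S, p) = 1), T χ := by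
    rw [hN]
    have e1 : ∀ u : Fˣ, (if orderOf u = Fintype.card F - 1 then (1 : ℂ) else 0)
        * (∑ lam ∈ U3, lam ((u : F) - 1))
        = ∑ S ∈ K.powerset, ((((-1 : ℂ) ^ S.card / ((∏ p ∈ S, p : ℕ) : ℂ))
            * ∑ χ ∈ univ.filter (fun χ : MulChar F ℂ => χ ^ (∏ p ∈ S, p) = 1), χ (u : F))
            * (∑ lam ∈ U3, lam ((u : F) - 1))) := by
      intro u
      rw [← Finset.sum_mul, ← step_indicator χ₀ h0 hgen hfaith u]
    rw [Finset.sum_congr rfl fun u _ => e1 u, Finset.sum_comm]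
    refine Finset.sum_congr rfl fun S _ => ?_
    simp_rw [mul_assoc, ← Finset.mul_sum]
    congr 1
    rw [swap3]
    refine Finset.sum_congr rfl fun χ _ => ?_
    simp only [hT]
    simp_rw [Finset.mul_sum]
    rw [Finset.sum_comm]
    exact Finset.sum_congr rfl fun lam _ => sum_units_jacobi hchar χ lam
  have hN1 : N = ∑ χ : MulChar F ℂ, coeff χ * T χ := by
    rw [hstep1, swap2 K.powerset _ (fun S (χ : MulChar F ℂ) => χ ^ (∏ p ∈ S, p) = 1) T]
  -- the main coefficient
  set C : ℝ := ∏ p ∈ K, (1 - (p : ℝ)⁻¹) with hCdef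
  have hfac_pos : ∀ p ∈ K, (0 : ℝ) < 1 - (p : ℝ)⁻¹ := by
    intro p hp
    have hp2 : (2 : ℝ) ≤ (p : ℝ) := by
      exact_mod_cast (Nat.prime_of_mem_primeFactors hp).two_le
    have hinv : (p : ℝ)⁻¹ < 1 := by
      apply inv_lt_one_of_one_lt₀
      linarith
    linarith
  have hCpos : 0 < C := Finset.prod_pos hfac_pos
  have hcoeff1 : coeff 1 = ((C : ℝ) : ℂ) := by
    simp only [hcoeff]
    have e2 : ∀ S ∈ K.powerset, (if (1 : MulChar F ℂ) ^ (∏ p ∈ S, p) = 1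
        then ((-1 : ℂ) ^ S.card / ((∏ p ∈ S, p : ℕ) : ℂ)) else 0)
        = (-1 : ℂ) ^ S.card / ((∏ p ∈ S, p : ℕ) : ℂ) := fun S _ => if_pos (one_pow _)
    rw [Finset.sum_congr rfl e2, prod_one_sub_inv, hCdef]
    rw [Complex.ofReal_prod]
    refine Finset.prod_congr rfl fun p _ => ?_
    push_cast
    ring
  have hT1 : T 1 = (Fintype.card F : ℂ) - 4 := by
    simp only [hT]; exact T_one χ₀ h3 h0 hgen
  -- weight function bound for nontrivial characters
  set wfn : MulChar F ℂ → ℝ := fun χ => if Squarefree (orderOf χ) then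
      ((orderOf χ : ℝ))⁻¹ * ∏ p ∈ K \ (orderOf χ).primeFactors, (1 - (p : ℝ)⁻¹) else 0
    with hwfn
  have habs : ∀ χ : MulChar F ℂ, ‖coeff χ‖ = wfn χ := by
    intro χ
    have hodvd : orderOf χ ∣ Fintype.card F - 1 := MulChar.orderOf_dvd_card_sub_one F χ
    have hconv : coeff χ = ∑ S ∈ K.powerset,
        if (orderOf χ) ∣ ∏ p ∈ S, p then ((-1 : ℂ) ^ S.card / ((∏ p ∈ S, p : ℕ) : ℂ)) else 0 := by
      simp only [hcoeff]
      exact Finset.sum_congr rfl fun S _ => if_congr (orderOf_dvd_iff_pow_eq_one).symm rfl rfl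
    by_cases hsq : Squarefree (orderOf χ)
    · rw [hconv, hK, coeff_eval hn0' hodvd hsq]
      simp only [hwfn, if_pos hsq]
      have hsub : (orderOf χ).primeFactors ⊆ K := Nat.primeFactors_mono hodvd hn0'
      have hP : (∏ p ∈ (Fintype.card F - 1).primeFactors \ (orderOf χ).primeFactors,
          (1 - (p : ℂ)⁻¹))
          = (((∏ p ∈ K \ (orderOf χ).primeFactors, (1 - (p : ℝ)⁻¹) : ℝ)) : ℂ) := by
        rw [Complex.ofReal_prod, hK]
        refine Finset.prod_congr rfl fun p _ => ?_
        push_cast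
        ring
      rw [hP, norm_mul, norm_mul, norm_pow, norm_neg, norm_one, one_pow, one_mul,
        norm_inv, Complex.norm_natCast, Complex.norm_real, Real.norm_eq_abs]
      congr 1
      refine abs_of_nonneg (Finset.prod_nonneg fun p hp => ?_)
      exact (hfac_pos p (Finset.mem_sdiff.mp hp).1).le
    · rw [hconv, hK, coeff_zero' hsq, norm_zero]
      simp only [hwfn, if_neg hsq]
  -- sum of weights bound
  have hwnonneg : ∀ χ : MulChar F ℂ, 0 ≤ wfn χ := by
    intro χ
    simp only [hwfn]
    split_ifs with h
    · exact mul_nonneg (by positivity)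
        (Finset.prod_nonneg fun p hp => (hfac_pos p (Finset.mem_sdiff.mp hp).1).le)
    · exact le_refl 0
  have hsum_w : ∑ χ ∈ univ.erase (1 : MulChar F ℂ), wfn χ ≤ (2 ^ K.card - 1) * C := by
    set A : Finset (MulChar F ℂ) := (univ.erase 1).filter (fun χ => Squarefree (orderOf χ))
      with hA
    have hstep : ∑ χ ∈ univ.erase (1 : MulChar F ℂ), wfn χ = ∑ χ ∈ A, wfn χ := by
      symm
      apply Finset.sum_subset (Finset.filter_subset _ _)
      intro χ hχ hnA
      have hns : ¬ Squarefree (orderOf χ) := fun h => hnA (Finset.mem_filter.mpr ⟨hχ, h⟩)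
      simp only [hwfn, if_neg hns]
    rw [hstep]
    set t : Finset ℕ := (K.powerset.erase ∅).image (fun S => ∏ p ∈ S, p) with ht
    have hmaps : ∀ χ ∈ A, orderOf χ ∈ t := by
      intro χ hχ
      rw [hA, Finset.mem_filter, Finset.mem_erase] at hχ
      obtain ⟨⟨hχ1, -⟩, hsq⟩ := hχ
      have hodvd : orderOf χ ∣ Fintype.card F - 1 := MulChar.orderOf_dvd_card_sub_one F χ
      have hEsub : (orderOf χ).primeFactors ⊆ K := Nat.primeFactors_mono hodvd hn0'
      have hone : 1 < orderOf χ := by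
        have h1 : orderOf χ ≠ 1 := fun h => hχ1 (orderOf_eq_one_iff.mp h)
        have h2 : orderOf χ ≠ 0 := (orderOf_pos χ).ne'
        omega
      rw [ht, Finset.mem_image]
      refine ⟨(orderOf χ).primeFactors, ?_, Nat.prod_primeFactors_of_squarefree hsq⟩
      rw [Finset.mem_erase, Finset.mem_powerset]
      exact ⟨(Nat.nonempty_primeFactors.mpr hone).ne_empty, hEsub⟩
    rw [← Finset.sum_fiberwise_of_maps_to hmaps]
    have hcard_t : (t.card : ℝ) ≤ 2 ^ K.card - 1 := by
      have h1 : t.card ≤ 2 ^ K.card - 1 := by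
        calc t.card ≤ (K.powerset.erase ∅).card := Finset.card_image_le
          _ = 2 ^ K.card - 1 := by
            rw [Finset.card_erase_of_mem (Finset.empty_mem_powerset K), Finset.card_powerset]
      have h2 : (1 : ℕ) ≤ 2 ^ K.card := Nat.one_le_two_pow
      calc (t.card : ℝ) ≤ ((2 ^ K.card - 1 : ℕ) : ℝ) := by exact_mod_cast h1
        _ = 2 ^ K.card - 1 := by
          rw [Nat.cast_sub h2]
          push_cast
          ring
    have hfiber : ∀ e ∈ t, ∑ χ ∈ A.filter (fun χ => orderOf χ = e), wfn χ ≤ C := by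
      intro e he
      rw [ht, Finset.mem_image] at he
      obtain ⟨S, hS, rfl⟩ := he
      rw [Finset.mem_erase, Finset.mem_powerset] at hS
      obtain ⟨hSne, hSK⟩ := hS
      have hprimes : ∀ p ∈ S, p.Prime := fun p hp => Nat.prime_of_mem_primeFactors (hSK hp)
      have he0 : 0 < ∏ p ∈ S, p := Finset.prod_pos fun p hp => (hprimes p hp).pos
      have hPF : (∏ p ∈ S, p).primeFactors = S := Nat.primeFactors_prod hprimes
      have hsqe : Squarefree (∏ p ∈ S, p) := squarefree_prod_primes hprimes
      have hedvd : (∏ p ∈ S, p) ∣ Fintype.card F - 1 :=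
        dvd_trans (prod_dvd_prod_of_subset _ _ _ hSK) (Nat.prod_primeFactors_dvd _)
      have hxnn : (0:ℝ) ≤ ((∏ p ∈ S, p : ℕ) : ℝ)⁻¹ * ∏ p ∈ K \ S, (1 - (p:ℝ)⁻¹) :=
        mul_nonneg (by positivity)
          (Finset.prod_nonneg fun p hp => (hfac_pos p (Finset.mem_sdiff.mp hp).1).le)
      have hval : ∀ χ ∈ A.filter (fun χ => orderOf χ = ∏ p ∈ S, p),
          wfn χ = ((∏ p ∈ S, p : ℕ) : ℝ)⁻¹ * ∏ p ∈ K \ S, (1 - (p:ℝ)⁻¹) := by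
        intro χ hχ
        rw [Finset.mem_filter] at hχ
        simp only [hwfn]
        rw [hχ.2, if_pos hsqe, hPF]
      rw [Finset.sum_congr rfl hval, Finset.sum_const, nsmul_eq_mul]
      have hcount : ((A.filter (fun χ => orderOf χ = ∏ p ∈ S, p)).card : ℝ)
          ≤ (Nat.totient (∏ p ∈ S, p) : ℝ) := by
        have hsubf : A.filter (fun χ => orderOf χ = ∏ p ∈ S, p)
            ⊆ univ.filter (fun χ : MulChar F ℂ => orderOf χ = ∏ p ∈ S, p) :=
          Finset.filter_subset_filter _ (Finset.subset_univ A)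
        have h2 := IsCyclic.card_orderOf_eq_totient (α := MulChar F ℂ)
          (d := ∏ p ∈ S, p) (by rw [cardM]; exact hedvd)
        have h3 : (A.filter (fun χ => orderOf χ = ∏ p ∈ S, p)).card
            ≤ Nat.totient (∏ p ∈ S, p) := by
          rw [← h2]
          exact Finset.card_le_card hsubf
        exact_mod_cast h3
      have htotval : (Nat.totient (∏ p ∈ S, p) : ℝ)
          * (((∏ p ∈ S, p : ℕ) : ℝ)⁻¹ * ∏ p ∈ K \ S, (1 - (p:ℝ)⁻¹)) = C := by
        have htote : Nat.totient (∏ p ∈ S, p) = ∏ p ∈ S, (p - 1) := by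
          apply Nat.eq_of_mul_eq_mul_left he0
          have h1 := Nat.totient_mul_prod_primeFactors (∏ p ∈ S, p)
          rw [hPF] at h1
          rw [mul_comm (∏ p ∈ S, p) (Nat.totient _), h1]
        rw [htote]
        have hc1 : ((∏ p ∈ S, (p - 1) : ℕ) : ℝ) = ∏ p ∈ S, ((p:ℝ) - 1) := by
          rw [Nat.cast_prod]
          refine Finset.prod_congr rfl fun p hp => ?_
          have h2 := (hprimes p hp).one_lt
          rw [Nat.cast_sub h2.le, Nat.cast_one]
        have hc2 : ((∏ p ∈ S, p : ℕ) : ℝ) = ∏ p ∈ S, (p:ℝ) := Nat.cast_prod _ _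
        have hc3 : (∏ p ∈ S, ((p:ℝ) - 1)) * (∏ p ∈ S, (p:ℝ))⁻¹ = ∏ p ∈ S, (1 - (p:ℝ)⁻¹) := by
          rw [← Finset.prod_inv_distrib, ← Finset.prod_mul_distrib]
          refine Finset.prod_congr rfl fun p hp => ?_
          have hp0 : (p:ℝ) ≠ 0 := by exact_mod_cast (hprimes p hp).pos.ne'
          field_simp
        rw [hc1, hc2, ← mul_assoc, hc3, hCdef, ← Finset.prod_sdiff hSK]
        ring
      calc ((A.filter (fun χ => orderOf χ = ∏ p ∈ S, p)).card : ℝ)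
            * (((∏ p ∈ S, p : ℕ) : ℝ)⁻¹ * ∏ p ∈ K \ S, (1 - (p:ℝ)⁻¹))
          ≤ (Nat.totient (∏ p ∈ S, p) : ℝ)
            * (((∏ p ∈ S, p : ℕ) : ℝ)⁻¹ * ∏ p ∈ K \ S, (1 - (p:ℝ)⁻¹)) :=
            mul_le_mul_of_nonneg_right hcount hxnn
        _ = C := htotval
    calc ∑ e ∈ t, ∑ χ ∈ A.filter (fun χ => orderOf χ = e), wfn χ
        ≤ ∑ _e ∈ t, C := Finset.sum_le_sum hfiber
      _ = t.card * C := by rw [Finset.sum_const, nsmul_eq_mul]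
      _ ≤ (2 ^ K.card - 1) * C := mul_le_mul_of_nonneg_right hcard_t hCpos.le
  -- T bound
  have hTb : ∀ χ : MulChar F ℂ, χ ≠ 1 →
      ‖T χ‖ ≤ 1 + 2 * Real.sqrt (Fintype.card F) := by
    intro χ hχ
    simp only [hT]
    exact T_bound χ₀ hchar h3 h0 hgen hχ
  -- numeric bound
  have hsqrt : Real.sqrt (Fintype.card F) = 2 ^ r := by
    rw [hq]
    have : ((2 ^ (2 * r) : ℕ) : ℝ) = (2 : ℝ) ^ r * (2 : ℝ) ^ r := by
      push_cast
      rw [two_mul, pow_add]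
    rw [this, Real.sqrt_mul_self (by positivity)]
  have hnum : (1 + 2 * Real.sqrt (Fintype.card F)) * ((2 ^ K.card - 1) * C)
      < C * ((Fintype.card F : ℝ) - 4) := by
    rw [hsqrt]
    have hy4 : (4:ℝ) ≤ 2 ^ (r - 1) := by
      calc (4:ℝ) = 2 ^ 2 := by norm_num
        _ ≤ 2 ^ (r - 1) := pow_le_pow_right₀ (by norm_num) (by omega)
    have h2K : (2:ℝ) ^ K.card ≤ 2 ^ (r - 1) := pow_le_pow_right₀ (by norm_num) (by omega)
    have h2r : (2:ℝ) ^ r = 2 * 2 ^ (r - 1) := by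
      rw [← pow_succ']
      congr 1
      omega
    have hcardR : (Fintype.card F : ℝ) = (2 * 2 ^ (r - 1)) ^ 2 := by
      rw [hq]
      push_cast
      rw [mul_comm 2 r, pow_mul, h2r]
    have e1 : (2:ℝ) ^ K.card - 1 ≤ 2 ^ (r - 1) - 1 := by linarith
    have e2 : (0:ℝ) ≤ 2 ^ (r - 1) - 1 := by linarith
    have e3 : (1 + 2 * (2:ℝ) ^ r) * ((2 ^ K.card - 1) * C)
        ≤ (1 + 2 * 2 ^ r) * ((2 ^ (r - 1) - 1) * C) := by
      apply mul_le_mul_of_nonneg_left (mul_le_mul_of_nonneg_right e1 hCpos.le)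
      positivity
    refine lt_of_le_of_lt e3 ?_
    rw [hcardR, h2r]
    nlinarith [mul_pos hCpos (show (0:ℝ) < 3 * 2 ^ (r - 1) - 3 by linarith)]
  -- conclude N ≠ 0
  have hmain : ‖coeff 1 * T 1‖ = C * ((Fintype.card F : ℝ) - 4) := by
    rw [norm_mul, hcoeff1, hT1, Complex.norm_real, Real.norm_eq_abs, abs_of_pos hCpos]
    have hcast : (Fintype.card F : ℂ) - 4 = (((Fintype.card F : ℝ) - 4 : ℝ) : ℂ) := by
      push_cast
      ring
    rw [hcast, Complex.norm_real, Real.norm_eq_abs, abs_of_nonneg]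
    have h64 : (64:ℝ) ≤ (Fintype.card F : ℝ) := by exact_mod_cast hq64
    linarith
  have herr : ‖∑ χ ∈ univ.erase (1 : MulChar F ℂ), coeff χ * T χ‖
      ≤ (1 + 2 * Real.sqrt (Fintype.card F)) * ((2 ^ K.card - 1) * C) := by
    have hsqnn : (0:ℝ) ≤ 1 + 2 * Real.sqrt (Fintype.card F) := by positivity
    calc ‖∑ χ ∈ univ.erase (1 : MulChar F ℂ), coeff χ * T χ‖
        ≤ ∑ χ ∈ univ.erase (1 : MulChar F ℂ), ‖coeff χ * T χ‖ :=
          norm_sum_le _ _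
      _ ≤ ∑ χ ∈ univ.erase (1 : MulChar F ℂ), wfn χ * (1 + 2 * Real.sqrt (Fintype.card F)) := by
          refine Finset.sum_le_sum fun χ hχ => ?_
          rw [norm_mul, habs χ]
          exact mul_le_mul_of_nonneg_left (hTb χ (Finset.ne_of_mem_erase hχ)) (hwnonneg χ)
      _ = (∑ χ ∈ univ.erase (1 : MulChar F ℂ), wfn χ) * (1 + 2 * Real.sqrt (Fintype.card F)) :=
          (Finset.sum_mul _ _ _).symm
      _ ≤ ((2 ^ K.card - 1) * C) * (1 + 2 * Real.sqrt (Fintype.card F)) :=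
          mul_le_mul_of_nonneg_right hsum_w hsqnn
      _ = (1 + 2 * Real.sqrt (Fintype.card F)) * ((2 ^ K.card - 1) * C) := by ring
  have hNne : N ≠ 0 := by
    intro hN0
    have hsplit : coeff 1 * T 1 + ∑ χ ∈ univ.erase (1 : MulChar F ℂ), coeff χ * T χ = 0 := by
      rw [Finset.add_sum_erase _ (fun χ => coeff χ * T χ) (Finset.mem_univ (1 : MulChar F ℂ)),
        ← hN1, hN0]
    have heq : coeff 1 * T 1 = -(∑ χ ∈ univ.erase (1 : MulChar F ℂ), coeff χ * T χ) :=
      eq_neg_of_add_eq_zero_left hsplit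
    have habs2 : ‖coeff 1 * T 1‖
        = ‖∑ χ ∈ univ.erase (1 : MulChar F ℂ), coeff χ * T χ‖ := by
      rw [heq, norm_neg]
    rw [hmain] at habs2
    have := habs2.le.trans herr
    linarith
  -- extract the element
  rw [hN] at hNne
  obtain ⟨u, _, hu⟩ := Finset.exists_ne_zero_of_sum_ne_zero hNne
  have hord : orderOf u = Fintype.card F - 1 := by
    by_contra h
    rw [if_neg h, zero_mul] at hu
    exact hu rfl
  have hG3 : (∑ lam ∈ U3, lam ((u : F) - 1)) ≠ 0 := by
    intro h
    rw [h, mul_zero] at hu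
    exact hu rfl
  have hune : (u : F) ≠ 1 := by
    intro h
    have : u = 1 := Units.val_eq_one.mp h
    rw [this, orderOf_one] at hord
    omega
  have hvu : IsUnit ((u : F) - 1) := isUnit_iff_ne_zero.mpr (sub_ne_zero.mpr hune)
  have hG3' : (∑ lam ∈ U3, lam ((hvu.unit : Fˣ) : F)) ≠ 0 := by
    rwa [Finset.sum_congr rfl fun lam _ => by rw [hvu.unit_spec]]
  rw [hU3, key_sum χ₀ h0 hgen hfaith h3 (by norm_num) hvu.unit] at hG3'
  have hcube : hvu.unit ^ ((Fintype.card F - 1) / 3) = 1 := by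
    by_contra h
    rw [if_neg h] at hG3'
    exact hG3' rfl
  obtain ⟨v, hv⟩ := exists_root h3 hvu.unit hcube
  refine ⟨(v : F), ?_⟩
  have hz : 1 + (v : F) ^ 3 = (u : F) := by
    have h5 : ((v : F)) ^ 3 = (u : F) - 1 := by
      rw [← Units.val_pow_eq_pow_val, hv, hvu.unit_spec]
    rw [h5]
    ring
  rw [hz]
  rw [IsPrimitiveRoot.coe_units_iff]
  have := IsPrimitiveRoot.orderOf u
  rwa [hord] at this

end Stmt12

theorem stmt_12 (r : ℕ) (hr : 3 ≤ r) (hω : (2 ^ (2 * r) - 1).primeFactors.card < r) :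
    ∃ z : GaloisField 2 (2 * r), IsPrimitiveRoot (1 + z ^ 3) (2 ^ (2 * r) - 1) := by
  haveI : Fact (Nat.Prime 2) := ⟨Nat.prime_two⟩
  haveI : Fintype (GaloisField 2 (2 * r)) := Fintype.ofFinite _
  have hcard : Fintype.card (GaloisField 2 (2 * r)) = 2 ^ (2 * r) := by
    rw [← Nat.card_eq_fintype_card, GaloisField.card 2 (2 * r) (by omega)]
  have hchar : ringChar (GaloisField 2 (2 * r)) = 2 := ringChar.eq _ 2
  have h := Stmt12.generic (F := GaloisField 2 (2 * r)) hchar hr hcard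
    (by rw [hcard]; exact hω)
  rwa [hcard] at h
end

section
/- For every integer r ≥ 3, the number of distinct prime factors of 2^{2r} − 1 is strictly less than r. -/
lemma aux_pow_ineq : ∀ r : ℕ, 3 ≤ r → 4 ^ r ≤ 3 * 5 ^ (r - 1) := by
  intro r hr
  induction r, hr using Nat.le_induction with
  | base => norm_num
  | succ n hn ih =>
    have h1 : n + 1 - 1 = n := by omega
    have h2 : n - 1 + 1 = n := by omega
    rw [h1]
    calc 4 ^ (n + 1) = 4 * 4 ^ n := by ring
      _ ≤ 4 * (3 * 5 ^ (n - 1)) := by exact Nat.mul_le_mul_left 4 ih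
      _ ≤ 5 * (3 * 5 ^ (n - 1)) := Nat.mul_le_mul_right _ (by norm_num)
      _ = 3 * 5 ^ (n - 1 + 1) := by ring
      _ = 3 * 5 ^ n := by rw [h2]

theorem stmt_14 (r : ℕ) (hr : 3 ≤ r) : (2 ^ (2 * r) - 1).primeFactors.card < r := by
  by_contra h
  push_neg at h
  set n := 2 ^ (2 * r) - 1 with hn
  have hpow : 2 ^ 6 ≤ 2 ^ (2 * r) := Nat.pow_le_pow_right (by norm_num) (by omega)
  have hnpos : 0 < n := by simp only [hn]; omega
  have h2dvd : (2 : ℕ) ∣ 2 ^ (2 * r) := dvd_pow_self 2 (by omega)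
  have hodd : ¬ (2 : ℕ) ∣ n := by
    simp only [hn]
    obtain ⟨k, hk⟩ := h2dvd
    omega
  have hd : ∏ p ∈ n.primeFactors, p ∣ n := Nat.prod_primeFactors_dvd n
  have hle : ∏ p ∈ n.primeFactors, p ≤ n := Nat.le_of_dvd hnpos hd
  have h5 : ∀ p ∈ n.primeFactors, p ≠ 3 → 5 ≤ p := by
    intro p hp hp3
    have hpr := Nat.prime_of_mem_primeFactors hp
    have hpd := Nat.dvd_of_mem_primeFactors hp
    have hne2 : p ≠ 2 := by rintro rfl; exact hodd hpd
    have hne4 : p ≠ 4 := by rintro rfl; norm_num at hpr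
    have := hpr.two_le
    omega
  have key : 2 ^ (2 * r) ≤ ∏ p ∈ n.primeFactors, p := by
    have h4r : 2 ^ (2 * r) = 4 ^ r := by
      rw [pow_mul]; norm_num
    rw [h4r]
    by_cases h3 : 3 ∈ n.primeFactors
    · rw [← Finset.mul_prod_erase _ _ h3]
      have hcard : r - 1 ≤ (n.primeFactors.erase 3).card := by
        rw [Finset.card_erase_of_mem h3]; omega
      have hprod : 5 ^ (n.primeFactors.erase 3).card ≤ ∏ p ∈ n.primeFactors.erase 3, p := by
        rw [← Finset.prod_const]
        apply Finset.prod_le_prod'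
        intro p hp
        exact h5 p (Finset.mem_of_mem_erase hp) (Finset.ne_of_mem_erase hp)
      calc 4 ^ r ≤ 3 * 5 ^ (r - 1) := aux_pow_ineq r hr
        _ ≤ 3 * 5 ^ (n.primeFactors.erase 3).card :=
            Nat.mul_le_mul_left 3 (Nat.pow_le_pow_right (by norm_num) hcard)
        _ ≤ 3 * ∏ p ∈ n.primeFactors.erase 3, p := Nat.mul_le_mul_left 3 hprod
    · have hprod : 5 ^ n.primeFactors.card ≤ ∏ p ∈ n.primeFactors, p := by
        rw [← Finset.prod_const]
        apply Finset.prod_le_prod'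
        intro p hp
        exact h5 p hp (by rintro rfl; exact h3 hp)
      calc 4 ^ r ≤ 5 ^ r := Nat.pow_le_pow_left (by norm_num) r
        _ ≤ 5 ^ n.primeFactors.card := Nat.pow_le_pow_right (by norm_num) h
        _ ≤ ∏ p ∈ n.primeFactors, p := hprod
  omega
end

section
/- Let r ≥ 1, n = 2^{4r} − 1, and let α be a primitive element of GF(2^{4r}); set γ = α^{n/3} and β = α^{n/5}. Let U = {(1,1), (α,α), (α,α^{−1}), (α,1), (α³,1), (1,α), (1,α³), (1,γ), (β,β²), (α,α²), (α³,α^{−3})} ⊆ GF(2^{4r})² and let C_U = {c : (ℤ/nℤ)² → F₂ : Σ_{i,j=0}^{n−1} c(i,j)·u^i v^j = 0 for every (u,v) ∈ U}, with bits lifted to GF(2^{4r}). Let A be the adjacency matrix over F₂ of the lattice graph Λ_{n,n} on vertex set (ℤ/nℤ)² (vertices adjacent iff at Lee distance 1). Then for every x ∈ F₂^{(ℤ/nℤ)²} and every c ∈ C_U with (x, xA + c) ≠ (0,0), the symplectic weight of (x, xA + c) is at least 5. -/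
open Matrix

/-- The symplectic weight of a pair of binary vectors: the number of coordinates
where at least one of the two vectors is nonzero. -/
def sympWeight {V : Type*} [Fintype V] (x z : V → ZMod 2) : ℕ :=
  (Finset.univ.filter fun j => x j ≠ 0 ∨ z j ≠ 0).card

/-- Adjacency matrix (over F₂) of the 2-dimensional n×n lattice with periodic
boundary conditions on vertex set (ℤ/nℤ)²: vertices are adjacent iff they are
at Lee distance 1. -/
def torusMatrix (n : ℕ) [NeZero n] :
    Matrix (ZMod n × ZMod n) (ZMod n × ZMod n) (ZMod 2) :=
  fun p q =>
    if (p.1 = q.1 ∧ (q.2 = p.2 + 1 ∨ q.2 = p.2 - 1)) ∨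
       (p.2 = q.2 ∧ (q.1 = p.1 + 1 ∨ q.1 = p.1 - 1)) then 1 else 0

section Alg
variable {F : Type*} [Field F] [CharP F 2]



lemma addeq {a b : F} (h : a + b = 0) : a = b := by
  have := CharTwo.neg_eq (R := F) b
  have h' : a = -b := eq_neg_of_add_eq_zero_left h
  rw [this] at h'; exact h'

lemma addne {a b : F} (h : a ≠ b) : a + b ≠ 0 := fun hc => h (addeq hc)

lemma pair_lemma (a1 a2 a3 a4 : F)
    (h1 : a1 + a2 + a3 + a4 = 0) (h3 : a1^3 + a2^3 + a3^3 + a4^3 = 0) :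
    (a1 = a2 ∧ a3 = a4) ∨ (a1 = a3 ∧ a2 = a4) ∨ (a1 = a4 ∧ a2 = a3) := by
  have h2 : (2:F) = 0 := CharTwo.two_eq_zero
  have key : (a1+a2)*((a1+a3)*(a2+a3)) = 0 := by
    linear_combination (1) * h3 + (a4^2 + a3*a4 + a3^2 + a2*a4 + 2*a2*a3 + a2^2 + a1*a4 + 2*a1*a3 + 2*a1*a2 + a1^2) * h1 + (-1*a4^3 + -1*a3*a4^2 + -1*a3^2*a4 + -1*a3^3 + -1*a2*a4^2 + -2*a2*a3*a4 + -1*a2*a3^2 + -1*a2^2*a4 + -1*a2^2*a3 + -1*a2^3 + -1*a1*a4^2 + -2*a1*a3*a4 + -1*a1*a3^2 + -2*a1*a2*a4 + -2*a1*a2*a3 + -1*a1*a2^2 + -1*a1^2*a4 + -1*a1^2*a3 + -1*a1^2*a2 + -1*a1^3) * h2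
  rcases mul_eq_zero.mp key with h | h
  · left
    have e := addeq h
    exact ⟨e, addeq (by linear_combination h1 - h)⟩
  rcases mul_eq_zero.mp h with h | h
  · right; left
    have e := addeq h
    exact ⟨e, addeq (by linear_combination h1 - h)⟩
  · right; right
    exact ⟨addeq (by linear_combination h1 - h), addeq h⟩

lemma two_point (a1 b1 a2 b2 : F) (ha1 : a1 ≠ 0) (hb1 : b1 ≠ 0) (hb2 : b2 ≠ 0)
    (hne : (a1, b1) ≠ (a2, b2))
    (hm : a1*b1 + a2*b2 = 0) (hw : a1*b1⁻¹ + a2*b2⁻¹ = 0) : False := by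
  have h2 : (2:F) = 0 := CharTwo.two_eq_zero
  have hw' : a1*b2 + a2*b1 = 0 := by
    have e : (a1*b1⁻¹ + a2*b2⁻¹) * (b1*b2) = a1*b2 + a2*b1 := by
      field_simp
    rw [hw, zero_mul] at e; exact e.symm
  have h0 : (a1+a2)^2*(b1*b2) = 0 := by
    linear_combination (a1*b2) * hm + (-1*a2*b2) * hw' + (a2^2*b1*b2 + a1*a2*b1*b2) * h2
  have ea : a1 = a2 := by
    rcases mul_eq_zero.mp h0 with h | h
    · exact addeq (pow_eq_zero_iff (n := 2) (by norm_num) |>.mp h)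
    · exact absurd h (mul_ne_zero hb1 hb2)
  have eb : b2 = b1 := by
    have h0 : a2*(b2 + b1) = 0 := by linear_combination hw' + (-b2) * ea
    rcases mul_eq_zero.mp h0 with h | h
    · exact (ha1 (ea.trans h)).elim
    · exact addeq h
  exact hne (by rw [ea, eb])

lemma five_ne_zero {x : F} (hx : x^5 = 1) : x ≠ 0 := by
  intro h; rw [h] at hx; simp at hx

lemma five_three (x y z : F) (hx : x^5 = 1) (hy : y^5 = 1) (hz : z^5 = 1)
    (hs : x + y + z = 0) : False := by
  have h2 : (2:F) = 0 := CharTwo.two_eq_zero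
  have hxy : x + y = z := addeq hs
  have hz2 : (x+y)^5 = 1 := by rw [hxy]; exact hz
  have E1 : x^4*y + x*y^4 = 1 := by
    linear_combination (1:F) * hz2 + (-1:F) * hx + (-1:F) * hy + (-1 + -2*x*y^4 + -5*x^2*y^3 + -5*x^3*y^2 + -2*x^4*y) * h2
  have E2 : x^2 + x*y + y^2 = 0 := by
    linear_combination (-1*x*y) * E1 + (y^2) * hx + (x^2) * hy + (y^2 + x^2) * h2
  have E3 : x^3 + y^3 = 0 := by
    linear_combination (y + x) * E2 + (-1*x*y^2 + -1*x^2*y) * h2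
  have E4 : x^3*x^2 = x^3*y^2 := by
    linear_combination (1:F) * hx + (-1:F) * hy + (-1*y^2) * E3 + (y^5) * h2
  have hx0 : x ≠ 0 := five_ne_zero hx
  have E5 : x^2 = y^2 := mul_left_cancel₀ (pow_ne_zero 3 hx0) E4
  have E6 : x = y := by
    have : (x+y)^2 = 0 := by linear_combination E5 + (x*y + y^2)*h2
    exact addeq (pow_eq_zero_iff (n := 2) (by norm_num) |>.mp this)
  have : x^2 = 0 := by rw [← E6] at E2; linear_combination E2 + (-x^2)*h2
  exact hx0 (pow_eq_zero_iff (n := 2) (by norm_num) |>.mp this)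


lemma rect_case {A A' B B' : F} (hA : A ≠ A') (hB : B ≠ B')
    (h : A*B + A*B' + A'*B + A'*B' = 0 ∨ A*B^2 + A*B'^2 + A'*B^2 + A'*B'^2 = 0) : False := by
  have h2 : (2:F) = 0 := CharTwo.two_eq_zero
  rcases h with h | h
  · exact (mul_ne_zero (addne hA) (addne hB)) (by linear_combination h)
  · exact (mul_ne_zero (addne hA) (pow_ne_zero 2 (addne hB)))
      (by linear_combination h + (A*B*B' + A'*B*B')*h2)

lemma rect (a1 b1 a2 b2 a3 b3 a4 b4 : F)
    (h12 : (a1,b1) ≠ (a2,b2)) (h13 : (a1,b1) ≠ (a3,b3)) (h14 : (a1,b1) ≠ (a4,b4))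
    (h23 : (a2,b2) ≠ (a3,b3)) (h24 : (a2,b2) ≠ (a4,b4)) (h34 : (a3,b3) ≠ (a4,b4))
    (hsa : a1+a2+a3+a4 = 0) (hca : a1^3+a2^3+a3^3+a4^3 = 0)
    (hsb : b1+b2+b3+b4 = 0) (hcb : b1^3+b2^3+b3^3+b4^3 = 0)
    (hor : a1*b1+a2*b2+a3*b3+a4*b4 = 0 ∨ a1*b1^2+a2*b2^2+a3*b3^2+a4*b4^2 = 0) : False := by
  rcases pair_lemma a1 a2 a3 a4 hsa hca with ⟨ea,ea'⟩|⟨ea,ea'⟩|⟨ea,ea'⟩ <;>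
    rcases pair_lemma b1 b2 b3 b4 hsb hcb with ⟨eb,eb'⟩|⟨eb,eb'⟩|⟨eb,eb'⟩
  · exact h12 (by rw [ea, eb])
  · -- q1r2
    refine rect_case (A := a1) (A' := a3) (B := b1) (B' := b2)
      (fun h => h13 (by rw [h, eb])) (fun h => h12 (by rw [ea, h])) ?_
    rcases hor with h | h
    · exact Or.inl (by linear_combination h + (b2) * ea + (b4) * ea' + (a3) * eb + (a3) * eb')
    · exact Or.inr (by linear_combination h + (b2^2) * ea + (b4^2) * ea' + (a3*b3 + a3*b1) * eb + (a3*b4 + a3*b2) * eb')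
  · -- q1r3
    refine rect_case (A := a1) (A' := a3) (B := b1) (B' := b2)
      (fun h => h14 (by rw [h, ea', eb])) (fun h => h12 (by rw [ea, h])) ?_
    rcases hor with h | h
    · exact Or.inl (by linear_combination h + (b2) * ea + (b4) * ea' + (a3) * eb + (a3) * eb')
    · exact Or.inr (by linear_combination h + (b2^2) * ea + (b4^2) * ea' + (a3*b4 + a3*b1) * eb + (a3*b3 + a3*b2) * eb')
  · -- q2r1
    refine rect_case (A := a1) (A' := a2) (B := b1) (B' := b3)
      (fun h => h12 (by rw [h, eb])) (fun h => h13 (by rw [ea, h])) ?_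
    rcases hor with h | h
    · exact Or.inl (by linear_combination h + (b3) * ea + (b4) * ea' + (a2) * eb + (a2) * eb')
    · exact Or.inr (by linear_combination h + (b3^2) * ea + (b4^2) * ea' + (a2*b2 + a2*b1) * eb + (a2*b4 + a2*b3) * eb')
  · exact h13 (by rw [ea, eb])
  · -- q2r3
    refine rect_case (A := a1) (A' := a2) (B := b1) (B' := b2)
      (fun h => h14 (by rw [h, ← ea', ← eb])) (fun h => h13 (by rw [← ea, ← eb', h])) ?_
    rcases hor with h | h
    · exact Or.inl (by linear_combination h + (b3) * ea + (b4) * ea' + (a2) * eb + (a1) * eb')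
    · exact Or.inr (by linear_combination h + (b3^2) * ea + (b4^2) * ea' + (a2*b4 + a2*b1) * eb + (a1*b3 + a1*b2) * eb')
  · -- q3r1
    refine rect_case (A := a1) (A' := a2) (B := b1) (B' := b3)
      (fun h => h12 (by rw [h, eb])) (fun h => h14 (by rw [← ea, ← eb', h])) ?_
    rcases hor with h | h
    · exact Or.inl (by linear_combination h + (b4) * ea + (b3) * ea' + (a2) * eb + (a1) * eb')
    · exact Or.inr (by linear_combination h + (b4^2) * ea + (b3^2) * ea' + (a2*b2 + a2*b1) * eb + (a1*b4 + a1*b3) * eb')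
  · -- q3r2
    refine rect_case (A := a1) (A' := a2) (B := b1) (B' := b2)
      (fun h => h13 (by rw [h, ← ea', ← eb])) (fun h => h14 (by rw [← ea, ← eb', h])) ?_
    rcases hor with h | h
    · exact Or.inl (by linear_combination h + (b4) * ea + (b3) * ea' + (a2) * eb + (a1) * eb')
    · exact Or.inr (by linear_combination h + (b4^2) * ea + (b3^2) * ea' + (a2*b3 + a2*b1) * eb + (a1*b4 + a1*b2) * eb')
  · exact h14 (by rw [ea, eb])


lemma cm {a b c d : F} (hb : b ≠ 0) (hd : d ≠ 0) (h : a*b⁻¹ = c*d⁻¹) : a*d = c*b := by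
  have e : a*b⁻¹*(b*d) = c*d⁻¹*(b*d) := by rw [h]
  calc a*d = a*b⁻¹*(b*d) := by field_simp
    _ = c*d⁻¹*(b*d) := e
    _ = c*b := by field_simp

lemma eqpt {a1 b1 a2 b2 : F} (hb2 : b2 ≠ 0) (hb : b1 = b2) (X12 : a1*b2 = a2*b1) :
    (a1, b1) = (a2, b2) := by
  rw [hb] at X12
  rw [mul_right_cancel₀ hb2 X12, hb]

lemma hardA (s a1 b1 a2 b2 a3 b3 a4 b4 : F) (hs0 : s ≠ 0)
    (ha1 : a1 ≠ 0) (hb2 : b2 ≠ 0) (hbne : b1 ≠ b2)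
    (X12 : a1*b2 = a2*b1) (X13 : a1*b3 = a3*b1) (X24 : a2*b4 = a4*b2)
    (h2m : a1*b1 + a2*b2 + a3*b3 + a4*b4 = 0)
    (h5 : b1+b2+b3+b4 = s*(b1+b2)) : False := by
  have h2 : (2:F) = 0 := CharTwo.two_eq_zero
  have key : s^2*(b1+b2)^2*(a1*b2) = 0 := by
    linear_combination (b1*b2) * h2m + (b2*b3) * X13 + (b1*b4) * X24 + (b4^2 + b2^2) * X12 + (-1*a1*b2*b4 + -1*a1*b2*b3 + -1*a1*b2^2 + -1*a1*b1*b2 + -1*s*a1*b2^2 + -1*s*a1*b1*b2) * h5 + (a1*b2*b3*b4 + a1*b2^2*b4 + a1*b2^2*b3 + a1*b1*b2*b4 + a1*b1*b2*b3 + a1*b1*b2^2) * h2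
  exact (mul_ne_zero (mul_ne_zero (pow_ne_zero 2 hs0) (pow_ne_zero 2 (addne hbne)))
    (mul_ne_zero ha1 hb2)) key

lemma hardCross (s a1 b1 a2 b2 a3 b3 a4 b4 : F) (hs0 : s ≠ 0)
    (ha1 : a1 ≠ 0) (hb1 : b1 ≠ 0) (hb2 : b2 ≠ 0)
    (hcr : a1*b2 ≠ a2*b1)
    (X13 : a1*b3 = a3*b1) (X24 : a2*b4 = a4*b2)
    (h2m : a1*b1 + a2*b2 + a3*b3 + a4*b4 = 0)
    (h4 : a1+a2+a3+a4 = s*(a1+a2))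
    (h5 : b1+b2+b3+b4 = s*(b1+b2))
    (h10 : a1*b1^2 + a2*b2^2 + a3*b3^2 + a4*b4^2 = (s+s^2)*(a1*b1^2 + a2*b2^2)) : False := by
  have h2 : (2:F) = 0 := CharTwo.two_eq_zero
  have hcrs : a1*b2 + a2*b1 ≠ 0 := addne hcr
  have eb4 : b4 = (1+s)*b2 := by
    have key : (a1*b2 + a2*b1)*(b4 + (1+s)*b2) = 0 := by
      linear_combination (b1*b2) * h4 + (b2) * X13 + (b1) * X24 + (a1*b2) * h5 + (-1*a1*b2*b3 + -1*a1*b1*b2 + s*a2*b1*b2 + s*a1*b2^2 + s*a1*b1*b2) * h2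
    exact addeq ((mul_eq_zero.mp key).resolve_left hcrs)
  have eb3 : b3 = (1+s)*b1 := by
    have key : (a1*b2 + a2*b1)*(b3 + (1+s)*b1) = 0 := by
      linear_combination (b1*b2) * h4 + (b2) * X13 + (b1) * X24 + (a2*b1) * h5 + (-1*a2*b1*b4 + -1*a2*b1*b2 + s*a2*b1*b2 + s*a2*b1^2 + s*a1*b1*b2) * h2
    exact addeq ((mul_eq_zero.mp key).resolve_left hcrs)
  have ea3 : a3 = (1+s)*a1 :=
    (mul_right_cancel₀ hb1 (show ((1+s)*a1)*b1 = a3*b1 by linear_combination X13 - a1*eb3)).symm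
  have ea4 : a4 = (1+s)*a2 :=
    (mul_right_cancel₀ hb2 (show ((1+s)*a2)*b2 = a4*b2 by linear_combination X24 - a2*eb4)).symm
  have hP : s^2*(a1*b1 + a2*b2) = 0 := by
    linear_combination (1) * h2m + (-1*a3) * eb3 + (-1*a4) * eb4 + (-1*b1 + -1*s*b1) * ea3 + (-1*b2 + -1*s*b2) * ea4 + (-1*a2*b2 + -1*a1*b1 + -1*s*a2*b2 + -1*s*a1*b1) * h2
  have hPe : a1*b1 = a2*b2 :=
    addeq ((mul_eq_zero.mp hP).resolve_left (pow_ne_zero 2 hs0))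
  have hbne : b1 ≠ b2 := by
    intro h
    rw [h] at hPe
    exact hcr (by rw [mul_right_cancel₀ hb2 hPe, h])
  have key : s^3*(a1*b1*(b1+b2)) = 0 := by
    linear_combination (1) * h10 + (-1*a3*b3 + -1*a3*b1 + -1*s*a3*b1) * eb3 + (-1*a4*b4 + -1*a4*b2 + -1*s*a4*b2) * eb4 + (-1*b1^2 + -2*s*b1^2 + -1*s^2*b1^2) * ea3 + (-1*b2^2 + -2*s*b2^2 + -1*s^2*b2^2) * ea4 + (s^3*b2) * hPe + (-1*a2*b2^2 + -1*a1*b1^2 + -1*s*a2*b2^2 + -1*s*a1*b1^2 + -1*s^2*a2*b2^2 + -1*s^2*a1*b1^2) * h2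
  exact (mul_ne_zero (pow_ne_zero 3 hs0)
    (mul_ne_zero (mul_ne_zero ha1 hb1) (addne hbne))) key

lemma hardCase (s a1 b1 a2 b2 a3 b3 a4 b4 : F) (hs0 : s ≠ 0) (hs1 : s ≠ 1)
    (ha1 : a1 ≠ 0) (ha2 : a2 ≠ 0)
    (hb1 : b1 ≠ 0) (hb2 : b2 ≠ 0) (hb3 : b3 ≠ 0) (hb4 : b4 ≠ 0)
    (h12 : (a1,b1) ≠ (a2,b2))
    (h3 : a1*b1⁻¹ + a2*b2⁻¹ + a3*b3⁻¹ + a4*b4⁻¹ = 0)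
    (h3' : (a1*b1⁻¹)^3 + (a2*b2⁻¹)^3 + (a3*b3⁻¹)^3 + (a4*b4⁻¹)^3 = 0)
    (h2m : a1*b1 + a2*b2 + a3*b3 + a4*b4 = 0)
    (h4 : a1+a2+a3+a4 = s*(a1+a2))
    (h5 : b1+b2+b3+b4 = s*(b1+b2))
    (h10 : a1*b1^2 + a2*b2^2 + a3*b3^2 + a4*b4^2 = (s+s^2)*(a1*b1^2 + a2*b2^2)) : False := by
  have h2 : (2:F) = 0 := CharTwo.two_eq_zero
  have hσ : (1+s) ≠ 0 := fun h => hs1 (addeq h).symm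
  rcases pair_lemma (a1*b1⁻¹) (a2*b2⁻¹) (a3*b3⁻¹) (a4*b4⁻¹) h3 h3' with ⟨e1,e2⟩|⟨e1,e2⟩|⟨e1,e2⟩
  · -- pairing {12}{34}
    have X12 : a1*b2 = a2*b1 := cm hb1 hb2 e1
    have X34 : a3*b4 = a4*b3 := cm hb3 hb4 e2
    by_cases hb : b1 = b2
    · exact h12 (eqpt hb2 hb X12)
    · have R1a : (a1+a2)*b1 = a1*(b1+b2) := by linear_combination -X12
      have R2a : (a1+a2)*b2 = a2*(b1+b2) := by linear_combination X12
      have R3a : (a3+a4)*b3 = a3*(b3+b4) := by linear_combination -X34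
      have R4a : (a3+a4)*b4 = a4*(b3+b4) := by linear_combination X34
      have R13 : (1+s)*((a1+a2)*b3) = (1+s)*(a3*(b1+b2)) := by
        linear_combination (-1*b3) * h4 + (a3) * h5 + (1) * R3a + (-1*a3*b2 + -1*a3*b1 + a2*b3 + a1*b3) * h2
      have R24 : (1+s)*((a1+a2)*b4) = (1+s)*(a4*(b1+b2)) := by
        linear_combination (-1*b4) * h4 + (a4) * h5 + (1) * R4a + (-1*a4*b2 + -1*a4*b1 + a2*b4 + a1*b4) * h2
      have S13 := mul_left_cancel₀ hσ R13
      have S24 := mul_left_cancel₀ hσ R24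
      have X13 : a1*b3 = a3*b1 := mul_left_cancel₀ (addne hb)
        (show (b1+b2)*(a1*b3) = (b1+b2)*(a3*b1) by linear_combination -b3*R1a + b1*S13)
      have X24 : a2*b4 = a4*b2 := mul_left_cancel₀ (addne hb)
        (show (b1+b2)*(a2*b4) = (b1+b2)*(a4*b2) by linear_combination -b4*R2a + b2*S24)
      exact hardA s a1 b1 a2 b2 a3 b3 a4 b4 hs0 ha1 hb2 hb X12 X13 X24 h2m h5
  · -- pairing {13}{24}
    have X13 : a1*b3 = a3*b1 := cm hb1 hb3 e1
    have X24 : a2*b4 = a4*b2 := cm hb2 hb4 e2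
    by_cases hcr : a1*b2 = a2*b1
    · by_cases hb : b1 = b2
      · exact h12 (eqpt hb2 hb hcr)
      · exact hardA s a1 b1 a2 b2 a3 b3 a4 b4 hs0 ha1 hb2 hb hcr X13 X24 h2m h5
    · exact hardCross s a1 b1 a2 b2 a3 b3 a4 b4 hs0 ha1 hb1 hb2 hcr X13 X24 h2m h4 h5 h10
  · -- pairing {14}{23}: swap roles of points 3 and 4
    have X14 : a1*b4 = a4*b1 := cm hb1 hb4 e1
    have X23 : a2*b3 = a3*b2 := cm hb2 hb3 e2
    have h2m' : a1*b1 + a2*b2 + a4*b4 + a3*b3 = 0 := by linear_combination h2m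
    have h4' : a1+a2+a4+a3 = s*(a1+a2) := by linear_combination h4
    have h5' : b1+b2+b4+b3 = s*(b1+b2) := by linear_combination h5
    have h10' : a1*b1^2 + a2*b2^2 + a4*b4^2 + a3*b3^2 = (s+s^2)*(a1*b1^2 + a2*b2^2) := by
      linear_combination h10
    by_cases hcr : a1*b2 = a2*b1
    · by_cases hb : b1 = b2
      · exact h12 (eqpt hb2 hb hcr)
      · exact hardA s a1 b1 a2 b2 a4 b4 a3 b3 hs0 ha1 hb2 hb hcr X14 X23 h2m' h5'
    · exact hardCross s a1 b1 a2 b2 a4 b4 a3 b3 hs0 ha1 hb1 hb2 hcr X14 X23 h2m' h4' h5' h10'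



end Alg

section Extract
variable {β : Type*} [DecidableEq β]

lemma card_four {s : Finset β} (h : s.card = 4) :
    ∃ p1 p2 p3 p4 : β, p1 ≠ p2 ∧ p1 ≠ p3 ∧ p1 ≠ p4 ∧ p2 ≠ p3 ∧ p2 ≠ p4 ∧ p3 ≠ p4 ∧
      s = {p1, p2, p3, p4} := by
  obtain ⟨a, t, hat, hins, htc⟩ := Finset.card_eq_succ.mp h
  obtain ⟨b, c', d, hbc, hbd, hcd, hteq⟩ := Finset.card_eq_three.mp htc
  rw [hteq] at hat
  simp only [Finset.mem_insert, Finset.mem_singleton, not_or] at hat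
  exact ⟨a, b, c', d, hat.1, hat.2.1, hat.2.2, hbc, hbd, hcd, by rw [← hins, hteq]⟩

lemma sum_four {M : Type*} [AddCommMonoid M] (f : β → M) {p1 p2 p3 p4 : β}
    (h12 : p1 ≠ p2) (h13 : p1 ≠ p3) (h14 : p1 ≠ p4) (h23 : p2 ≠ p3) (h24 : p2 ≠ p4)
    (h34 : p3 ≠ p4) :
    ∑ p ∈ ({p1, p2, p3, p4} : Finset β), f p = f p1 + (f p2 + (f p3 + f p4)) := by
  rw [Finset.sum_insert (by simp [h12, h13, h14]),
    Finset.sum_insert (by simp [h23, h24]), Finset.sum_pair h34]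

end Extract

section Conv
variable {F : Type*} [Field F] [Algebra (ZMod 2) F] {n : ℕ} [NeZero n]



lemma pow_val_mod (w : F) (hw : w ^ n = 1) (m : ℕ) : w ^ (m % n) = w ^ m := by
  conv_rhs => rw [← Nat.div_add_mod m n]
  rw [pow_add, pow_mul, hw, one_pow, one_mul]

lemma pow_val_add_one (hlt : 1 < n) (w : F) (hw : w ^ n = 1) (a : ZMod n) :
    w ^ ((a + 1).val) = w ^ a.val * w := by
  haveI : Fact (1 < n) := ⟨hlt⟩
  rw [ZMod.val_add, pow_val_mod w hw, ZMod.val_one, pow_succ]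

lemma pow_val_sub_one (hlt : 1 < n) (w : F) (hw0 : w ≠ 0) (hw : w ^ n = 1) (a : ZMod n) :
    w ^ ((a - 1).val) = w ^ a.val * w⁻¹ := by
  have h := pow_val_add_one hlt w hw (a - 1)
  rw [sub_add_cancel] at h
  rw [eq_mul_inv_iff_mul_eq₀ hw0]
  exact h.symm

lemma conv_sum (hlt : 1 < n) (h2 : (2 : ZMod n) ≠ 0)
    (x : ZMod n × ZMod n → ZMod 2) (u v : F) (hu : u ≠ 0) (hv : v ≠ 0)
    (hun : u ^ n = 1) (hvn : v ^ n = 1) :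
    ∑ q : ZMod n × ZMod n, (algebraMap (ZMod 2) F) (Matrix.vecMul x (torusMatrix n) q) *
        (u ^ q.1.val * v ^ q.2.val)
    = (u + u⁻¹ + v + v⁻¹) * ∑ p : ZMod n × ZMod n,
        (algebraMap (ZMod 2) F) (x p) * (u ^ p.1.val * v ^ p.2.val) := by
  haveI : Fact (1 < n) := ⟨hlt⟩
  have h1 : (1 : ZMod n) ≠ 0 := one_ne_zero
  -- step 1: expand vecMul
  have e1 : ∀ q : ZMod n × ZMod n, (algebraMap (ZMod 2) F) (Matrix.vecMul x (torusMatrix n) q)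
      = ∑ p : ZMod n × ZMod n, (algebraMap (ZMod 2) F) (x p) * (algebraMap (ZMod 2) F) (torusMatrix n p q) := by
    intro q
    have : Matrix.vecMul x (torusMatrix n) q = ∑ p : ZMod n × ZMod n, x p * torusMatrix n p q := rfl
    rw [this, map_sum]
    exact Finset.sum_congr rfl fun p _ => map_mul _ _ _
  calc ∑ q : ZMod n × ZMod n, (algebraMap (ZMod 2) F) (Matrix.vecMul x (torusMatrix n) q) *
        (u ^ q.1.val * v ^ q.2.val)
      = ∑ q : ZMod n × ZMod n, ∑ p : ZMod n × ZMod n,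
          (algebraMap (ZMod 2) F) (x p) * ((algebraMap (ZMod 2) F) (torusMatrix n p q) * (u ^ q.1.val * v ^ q.2.val)) := by
        refine Finset.sum_congr rfl fun q _ => ?_
        rw [e1 q, Finset.sum_mul]
        exact Finset.sum_congr rfl fun p _ => by ring
    _ = ∑ p : ZMod n × ZMod n, (algebraMap (ZMod 2) F) (x p) *
          (∑ q : ZMod n × ZMod n, (algebraMap (ZMod 2) F) (torusMatrix n p q) * (u ^ q.1.val * v ^ q.2.val)) := by
        rw [Finset.sum_comm]
        exact Finset.sum_congr rfl fun p _ => by rw [Finset.mul_sum]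
    _ = (u + u⁻¹ + v + v⁻¹) * ∑ p : ZMod n × ZMod n,
          (algebraMap (ZMod 2) F) (x p) * (u ^ p.1.val * v ^ p.2.val) := by
        rw [Finset.mul_sum]
        refine Finset.sum_congr rfl fun p _ => ?_
        have inner : ∑ q : ZMod n × ZMod n, (algebraMap (ZMod 2) F) (torusMatrix n p q) * (u ^ q.1.val * v ^ q.2.val)
            = (u + u⁻¹ + v + v⁻¹) * (u ^ p.1.val * v ^ p.2.val) := by
          have efil : ∑ q : ZMod n × ZMod n, (algebraMap (ZMod 2) F) (torusMatrix n p q) * (u ^ q.1.val * v ^ q.2.val)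
              = ∑ q ∈ Finset.univ.filter (fun q : ZMod n × ZMod n =>
                  (p.1 = q.1 ∧ (q.2 = p.2 + 1 ∨ q.2 = p.2 - 1)) ∨
                  (p.2 = q.2 ∧ (q.1 = p.1 + 1 ∨ q.1 = p.1 - 1))), (u ^ q.1.val * v ^ q.2.val) := by
            rw [Finset.sum_filter]
            refine Finset.sum_congr rfl fun q _ => ?_
            by_cases hq : (p.1 = q.1 ∧ (q.2 = p.2 + 1 ∨ q.2 = p.2 - 1)) ∨
                  (p.2 = q.2 ∧ (q.1 = p.1 + 1 ∨ q.1 = p.1 - 1))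
            · simp [torusMatrix, hq]
            · simp [torusMatrix, hq]
          rw [efil]
          have hset : Finset.univ.filter (fun q : ZMod n × ZMod n =>
                  (p.1 = q.1 ∧ (q.2 = p.2 + 1 ∨ q.2 = p.2 - 1)) ∨
                  (p.2 = q.2 ∧ (q.1 = p.1 + 1 ∨ q.1 = p.1 - 1)))
              = {(p.1, p.2 + 1), (p.1, p.2 - 1), (p.1 + 1, p.2), (p.1 - 1, p.2)} := by
            ext q
            simp only [Finset.mem_filter, Finset.mem_univ, true_and, Finset.mem_insert,
              Finset.mem_singleton, Prod.ext_iff]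
            constructor
            · rintro (⟨hq1, hq2 | hq2⟩ | ⟨hq2, hq1 | hq1⟩)
              · exact Or.inl ⟨hq1.symm, hq2⟩
              · exact Or.inr (Or.inl ⟨hq1.symm, hq2⟩)
              · exact Or.inr (Or.inr (Or.inl ⟨hq1, hq2.symm⟩))
              · exact Or.inr (Or.inr (Or.inr ⟨hq1, hq2.symm⟩))
            · rintro (⟨hq1, hq2⟩ | ⟨hq1, hq2⟩ | ⟨hq1, hq2⟩ | ⟨hq1, hq2⟩)
              · exact Or.inl ⟨hq1.symm, Or.inl hq2⟩
              · exact Or.inl ⟨hq1.symm, Or.inr hq2⟩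
              · exact Or.inr ⟨hq2.symm, Or.inl hq1⟩
              · exact Or.inr ⟨hq2.symm, Or.inr hq1⟩
          rw [hset]
          have d1 : ((p.1, p.2 + 1) : ZMod n × ZMod n) ∉
              ({(p.1, p.2 - 1), (p.1 + 1, p.2), (p.1 - 1, p.2)} : Finset (ZMod n × ZMod n)) := by
            simp only [Finset.mem_insert, Finset.mem_singleton, Prod.ext_iff, not_or]
            refine ⟨fun h => h2 (by linear_combination h.2), fun h => h1 (by linear_combination -h.1), fun h => h1 (by linear_combination h.1)⟩
          have d2 : ((p.1, p.2 - 1) : ZMod n × ZMod n) ∉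
              ({(p.1 + 1, p.2), (p.1 - 1, p.2)} : Finset (ZMod n × ZMod n)) := by
            simp only [Finset.mem_insert, Finset.mem_singleton, Prod.ext_iff, not_or]
            exact ⟨fun h => h1 (by linear_combination -h.1), fun h => h1 (by linear_combination h.1)⟩
          have d3 : ((p.1 + 1, p.2) : ZMod n × ZMod n) ∉
              ({(p.1 - 1, p.2)} : Finset (ZMod n × ZMod n)) := by
            simp only [Finset.mem_singleton, Prod.ext_iff, not_and]
            intro h
            exact absurd (by linear_combination h : (2:ZMod n) = 0) h2
          rw [Finset.sum_insert d1, Finset.sum_insert d2, Finset.sum_insert d3, Finset.sum_singleton]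
          simp only
          rw [pow_val_add_one hlt v hvn, pow_val_sub_one hlt v hv hvn,
            pow_val_add_one hlt u hun, pow_val_sub_one hlt u hu hun]
          ring
        rw [inner]
        ring



end Conv

lemma core_stmt {F : Type*} [Field F] [CharP F 2] [Algebra (ZMod 2) F] {n : ℕ} [NeZero n]
    (hn15 : 15 ≤ n) (hdvd5 : 5 ∣ n)
    (α : F) (hα' : IsPrimitiveRoot α n)
    (γ β : F) (hβ : β = α ^ (n / 5))
    (U : Set (F × F))
    (hU : U = {(1, 1), (α, α), (α, α⁻¹), (α, 1), (α ^ 3, 1), (1, α), (1, α ^ 3),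
               (1, γ), (β, β ^ 2), (α, α ^ 2), (α ^ 3, (α ^ 3)⁻¹)})
    (x c : ZMod n × ZMod n → ZMod 2)
    (hC : ∀ uv ∈ U, ∑ p : ZMod n × ZMod n,
          algebraMap (ZMod 2) F (c p) * uv.1 ^ p.1.val * uv.2 ^ p.2.val = 0)
    (hne : ¬(x = 0 ∧ Matrix.vecMul x (torusMatrix n) + c = 0)) :
    5 ≤ sympWeight x (Matrix.vecMul x (torusMatrix n) + c) := by
  by_contra hlt5
  push_neg at hlt5
  set z : ZMod n × ZMod n → ZMod 2 := Matrix.vecMul x (torusMatrix n) + c with hz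
  -- numeric facts
  have hnlt : 1 < n := by omega
  haveI : Fact (1 < n) := ⟨hnlt⟩
  have hn2 : (2 : ZMod n) ≠ 0 := by
    intro h
    have h' : ((2:ℕ) : ZMod n) = 0 := by exact_mod_cast h
    have hd := (ZMod.natCast_eq_zero_iff 2 n).mp h'
    have := Nat.le_of_dvd (by norm_num) hd
    omega
  -- primitivity facts
  have hα1 : α ^ n = 1 := hα'.pow_eq_one
  have hα0 : α ≠ 0 := by
    intro h
    rw [h, zero_pow (by omega : n ≠ 0)] at hα1
    exact zero_ne_one hα1
  have hpowne : ∀ k : ℕ, 0 < k → k < n → α ^ k ≠ 1 :=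
    fun k h1 h2 => hα'.pow_ne_one_of_pos_of_lt h1.ne' h2
  have hinj : ∀ i j : ZMod n, α ^ i.val = α ^ j.val → i = j := fun i j h =>
    ZMod.val_injective n (hα'.pow_inj (ZMod.val_lt i) (ZMod.val_lt j) h)
  have ptinj : ∀ p q : ZMod n × ZMod n,
      α ^ p.1.val = α ^ q.1.val → α ^ p.2.val = α ^ q.2.val → p = q :=
    fun p q h1 h2 => Prod.ext_iff.mpr ⟨hinj _ _ h1, hinj _ _ h2⟩
  have h2F : (2 : F) = 0 := CharTwo.two_eq_zero
  -- s, s3 and friends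
  have genA : ∀ w : F, w ≠ 0 → w^2 ≠ 1 → w + w⁻¹ ≠ 0 := by
    intro w hw hw2 h
    have e := addeq h
    apply hw2
    rw [sq]
    nth_rewrite 2 [e]
    exact mul_inv_cancel₀ hw
  have genB : ∀ w : F, w ≠ 0 → w^3 ≠ 1 → w + w⁻¹ ≠ 1 := by
    intro w hw hw3 h
    have hinvw : w * w⁻¹ = 1 := mul_inv_cancel₀ hw
    have e : w^2 + w + 1 = 0 := by linear_combination w*h - hinvw + w*h2F
    apply hw3
    linear_combination (w+1)*e + (-w^2-w-1)*h2F
  set s : F := α + α⁻¹ with hs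
  set s3 : F := α^3 + (α^3)⁻¹ with hs3
  have hα30 : (α^3 : F) ≠ 0 := pow_ne_zero 3 hα0
  have hs0 : s ≠ 0 := genA α hα0 (hpowne 2 (by norm_num) (by omega))
  have hs1 : s ≠ 1 := genB α hα0 (hpowne 3 (by norm_num) (by omega))
  have hs30 : s3 ≠ 0 := genA (α^3) hα30
    (by rw [← pow_mul]; exact hpowne 6 (by norm_num) (by omega))
  have hs31 : s3 ≠ 1 := genB (α^3) hα30
    (by rw [← pow_mul]; exact hpowne 9 (by norm_num) (by omega))
  have hσ : (1:F) + s ≠ 0 := fun h => hs1 (addeq h).symm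
  have hσ3 : (1:F) + s3 ≠ 0 := fun h => hs31 (addeq h).symm
  have ht0 : s + s^2 ≠ 0 := by
    have e : s + s^2 = s*(1+s) := by ring
    rw [e]
    exact mul_ne_zero hs0 hσ
  -- β facts
  have hβ0 : β ≠ 0 := by rw [hβ]; exact pow_ne_zero _ hα0
  have hβ5 : β^5 = 1 := by rw [hβ, ← pow_mul, Nat.div_mul_cancel hdvd5, hα1]
  have hβne1 : β ≠ 1 := by
    rw [hβ]
    exact hpowne (n/5) (Nat.div_pos (by omega) (by norm_num)) (Nat.div_lt_self (by omega) (by norm_num))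
  have hgeo : β^4 + β^3 + β^2 + β + 1 = 0 := by
    have h0 : (β - 1) * (β^4+β^3+β^2+β+1) = 0 := by linear_combination hβ5
    rcases mul_eq_zero.mp h0 with h | h
    · exact absurd (by linear_combination h : β = 1) hβne1
    · exact h
  have hfβ : β + β⁻¹ + β^2 + (β^2)⁻¹ = 1 := by
    have e1 : β⁻¹ = β^4 := inv_eq_of_mul_eq_one_right (by rw [← pow_succ']; exact hβ5)
    have e2 : (β^2)⁻¹ = β^3 := inv_eq_of_mul_eq_one_right (by rw [← pow_add]; exact hβ5)
    rw [e1, e2]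
    linear_combination hgeo - h2F
  -- powers are n-th roots of unity
  have hpown : ∀ k : ℕ, ((α:F)^k)^n = 1 := fun k => by
    rw [← pow_mul, mul_comm, pow_mul, hα1, one_pow]
  have hinvn : ∀ w : F, w^n = 1 → (w⁻¹)^n = 1 := fun w h => by rw [inv_pow, h, inv_one]
  -- c in terms of z
  have hcz : ∀ p, c p = Matrix.vecMul x (torusMatrix n) p + z p := by
    intro p
    rw [hz, Pi.add_apply, ← add_assoc, CharTwo.add_self_eq_zero, zero_add]
  -- the master relation
  have hrel : ∀ u v : F, (u, v) ∈ U → u ≠ 0 → v ≠ 0 → u^n = 1 → v^n = 1 →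
      (∑ p : ZMod n × ZMod n, algebraMap (ZMod 2) F (z p) * (u ^ p.1.val * v ^ p.2.val))
      = (u + u⁻¹ + v + v⁻¹) * ∑ p : ZMod n × ZMod n,
          algebraMap (ZMod 2) F (x p) * (u ^ p.1.val * v ^ p.2.val) := by
    intro u v hmem hu hv hun hvn
    have h0 := hC (u, v) hmem
    have h0' : ∑ p : ZMod n × ZMod n, algebraMap (ZMod 2) F (c p) * (u ^ p.1.val * v ^ p.2.val) = 0 := by
      rw [← h0]
      exact Finset.sum_congr rfl fun p _ => by ring
    have hsplit : ∑ p : ZMod n × ZMod n, algebraMap (ZMod 2) F (c p) * (u ^ p.1.val * v ^ p.2.val)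
        = (∑ p : ZMod n × ZMod n, algebraMap (ZMod 2) F (Matrix.vecMul x (torusMatrix n) p) * (u ^ p.1.val * v ^ p.2.val))
          + ∑ p : ZMod n × ZMod n, algebraMap (ZMod 2) F (z p) * (u ^ p.1.val * v ^ p.2.val) := by
      rw [← Finset.sum_add_distrib]
      refine Finset.sum_congr rfl fun p _ => ?_
      rw [hcz p, map_add]
      ring
    rw [hsplit, conv_sum hnlt hn2 x u v hu hv hun hvn] at h0'
    exact (addeq h0').symm
  -- filtering
  have zmod2cases : ∀ a : ZMod 2, a = 0 ∨ a = 1 := by decide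
  have hfil : ∀ (e : ZMod n × ZMod n → ZMod 2) (g : ZMod n × ZMod n → F),
      ∑ p : ZMod n × ZMod n, algebraMap (ZMod 2) F (e p) * g p
      = ∑ p ∈ Finset.univ.filter (fun p => e p = 1), g p := by
    intro e g
    rw [Finset.sum_filter]
    refine Finset.sum_congr rfl fun p _ => ?_
    rcases zmod2cases (e p) with h | h
    · rw [h, RingHom.map_zero, zero_mul, if_neg (by decide : ¬(0:ZMod 2) = 1)]
    · rw [h, RingHom.map_one, one_mul, if_pos rfl]
  set T : Finset (ZMod n × ZMod n) := Finset.univ.filter (fun p => z p = 1) with hT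
  set Xf : Finset (ZMod n × ZMod n) := Finset.univ.filter (fun p => x p = 1) with hXf
  -- sympWeight and the union
  have hSuni : Finset.univ.filter (fun j : ZMod n × ZMod n => x j ≠ 0 ∨ z j ≠ 0) = T ∪ Xf := by
    ext p
    simp only [hT, hXf, Finset.mem_filter, Finset.mem_univ, true_and, Finset.mem_union]
    constructor
    · rintro (h | h)
      · exact Or.inr ((zmod2cases (x p)).resolve_left h)
      · exact Or.inl ((zmod2cases (z p)).resolve_left h)
    · rintro (h | h)
      · exact Or.inr (by rw [h]; exact one_ne_zero)
      · exact Or.inl (by rw [h]; exact one_ne_zero)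
  have hcard : (T ∪ Xf).card ≤ 4 := by
    have : sympWeight x z = (T ∪ Xf).card := by
      unfold sympWeight
      rw [hSuni]
    omega
  have hSne : (T ∪ Xf).Nonempty := by
    rw [Finset.nonempty_iff_ne_empty]
    intro hemp
    apply hne
    have hforall := Finset.eq_empty_iff_forall_notMem.mp hemp
    constructor
    · funext p
      rcases zmod2cases (x p) with h | h
      · exact h
      · exact absurd (Finset.mem_union_right T
          (by rw [hXf]; exact Finset.mem_filter.mpr ⟨Finset.mem_univ p, h⟩)) (hforall p)
    · funext p
      rcases zmod2cases (z p) with h | h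
      · exact h
      · exact absurd (Finset.mem_union_left Xf
          (by rw [hT]; exact Finset.mem_filter.mpr ⟨Finset.mem_univ p, h⟩)) (hforall p)
  -- catalogue builder
  have mk : ∀ (u v : F) (G : ZMod n × ZMod n → F), (u,v) ∈ U → u ≠ 0 → v ≠ 0 →
      u^n = 1 → v^n = 1 →
      (∀ p : ZMod n × ZMod n, u ^ p.1.val * v ^ p.2.val = G p) →
      ∑ p ∈ T, G p = (u + u⁻¹ + v + v⁻¹) * ∑ p ∈ Xf, G p := by
    intro u v G hmem hu hv hun hvn hG
    have h := hrel u v hmem hu hv hun hvn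
    calc ∑ p ∈ T, G p
        = ∑ p : ZMod n × ZMod n, algebraMap (ZMod 2) F (z p) * G p := (hfil z G).symm
      _ = ∑ p : ZMod n × ZMod n, algebraMap (ZMod 2) F (z p) * (u ^ p.1.val * v ^ p.2.val) :=
          Finset.sum_congr rfl fun p _ => by rw [hG p]
      _ = (u + u⁻¹ + v + v⁻¹) * ∑ p : ZMod n × ZMod n,
            algebraMap (ZMod 2) F (x p) * (u ^ p.1.val * v ^ p.2.val) := h
      _ = (u + u⁻¹ + v + v⁻¹) * ∑ p : ZMod n × ZMod n,
            algebraMap (ZMod 2) F (x p) * G p :=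
          congrArg _ (Finset.sum_congr rfl fun p _ => by rw [hG p])
      _ = (u + u⁻¹ + v + v⁻¹) * ∑ p ∈ Xf, G p := by rw [hfil x G]
  -- the ten relations
  have R1 : ∑ p ∈ T, (fun _ : ZMod n × ZMod n => (1:F)) p = 0 := by
    have h := mk 1 1 (fun _ => (1:F)) (by simp [hU]) one_ne_zero one_ne_zero
      (one_pow n) (one_pow n) (fun p => by rw [one_pow, one_pow, mul_one])
    have hfac : (1:F) + 1⁻¹ + 1 + 1⁻¹ = 0 := by rw [inv_one]; linear_combination 2*h2F
    rw [hfac, zero_mul] at h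
    exact h
  have R2 : ∑ p ∈ T, (fun p : ZMod n × ZMod n => α ^ p.1.val * α ^ p.2.val) p = 0 := by
    have h := mk α α _ (by simp [hU]) hα0 hα0 hα1 hα1 (fun p => rfl)
    have hfac : α + α⁻¹ + α + α⁻¹ = 0 := by linear_combination (α+α⁻¹)*h2F
    rw [hfac, zero_mul] at h
    exact h
  have R3 : ∑ p ∈ T, (fun p : ZMod n × ZMod n => α ^ p.1.val * (α ^ p.2.val)⁻¹) p = 0 := by
    have h := mk α α⁻¹ _ (by simp [hU]) hα0 (inv_ne_zero hα0) hα1 (hinvn α hα1)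
      (fun p => by rw [inv_pow])
    have hfac : α + α⁻¹ + α⁻¹ + (α⁻¹)⁻¹ = 0 := by
      rw [inv_inv]; linear_combination (α+α⁻¹)*h2F
    rw [hfac, zero_mul] at h
    exact h
  have R3' : ∑ p ∈ T, (fun p : ZMod n × ZMod n => (α ^ p.1.val * (α ^ p.2.val)⁻¹)^3) p = 0 := by
    have h := mk (α^3) ((α^3)⁻¹) _ (by simp [hU]) hα30 (inv_ne_zero hα30)
      (hpown 3) (hinvn _ (hpown 3))
      (fun p => by
        rw [pow_right_comm α 3 p.1.val, inv_pow (α^3) p.2.val, pow_right_comm α 3 p.2.val,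
          ← inv_pow (α ^ p.2.val) 3, ← mul_pow])
    have hfac : α^3 + (α^3)⁻¹ + (α^3)⁻¹ + ((α^3)⁻¹)⁻¹ = 0 := by
      rw [inv_inv]; linear_combination (α^3+(α^3)⁻¹)*h2F
    rw [hfac, zero_mul] at h
    exact h
  have R4 : ∑ p ∈ T, (fun p : ZMod n × ZMod n => α ^ p.1.val) p
      = s * ∑ p ∈ Xf, (fun p : ZMod n × ZMod n => α ^ p.1.val) p := by
    have h := mk α 1 _ (by simp [hU]) hα0 one_ne_zero hα1 (one_pow n)
      (fun p => by rw [one_pow, mul_one])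
    have hfac : α + α⁻¹ + 1 + 1⁻¹ = s := by rw [inv_one, hs]; linear_combination h2F
    rw [hfac] at h
    exact h
  have R5 : ∑ p ∈ T, (fun p : ZMod n × ZMod n => α ^ p.2.val) p
      = s * ∑ p ∈ Xf, (fun p : ZMod n × ZMod n => α ^ p.2.val) p := by
    have h := mk 1 α _ (by simp [hU]) one_ne_zero hα0 (one_pow n) hα1
      (fun p => by rw [one_pow, one_mul])
    have hfac : (1:F) + 1⁻¹ + α + α⁻¹ = s := by rw [inv_one, hs]; linear_combination h2F
    rw [hfac] at h
    exact h
  have R6 : ∑ p ∈ T, (fun p : ZMod n × ZMod n => (α ^ p.1.val)^3) p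
      = s3 * ∑ p ∈ Xf, (fun p : ZMod n × ZMod n => (α ^ p.1.val)^3) p := by
    have h := mk (α^3) 1 _ (by simp [hU]) hα30 one_ne_zero (hpown 3) (one_pow n)
      (fun p => by rw [one_pow, mul_one, pow_right_comm α 3 p.1.val])
    have hfac : α^3 + (α^3)⁻¹ + 1 + 1⁻¹ = s3 := by rw [inv_one, hs3]; linear_combination h2F
    rw [hfac] at h
    exact h
  have R7 : ∑ p ∈ T, (fun p : ZMod n × ZMod n => (α ^ p.2.val)^3) p
      = s3 * ∑ p ∈ Xf, (fun p : ZMod n × ZMod n => (α ^ p.2.val)^3) p := by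
    have h := mk 1 (α^3) _ (by simp [hU]) one_ne_zero hα30 (one_pow n) (hpown 3)
      (fun p => by rw [one_pow, one_mul, pow_right_comm α 3 p.2.val])
    have hfac : (1:F) + 1⁻¹ + α^3 + (α^3)⁻¹ = s3 := by rw [inv_one, hs3]; linear_combination h2F
    rw [hfac] at h
    exact h
  have R9 : ∑ p ∈ T, (fun p : ZMod n × ZMod n => (α ^ p.1.val * (α ^ p.2.val)^2)^(n/5)) p
      = ∑ p ∈ Xf, (fun p : ZMod n × ZMod n => (α ^ p.1.val * (α ^ p.2.val)^2)^(n/5)) p := by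
    have h := mk β (β^2) _ (by simp [hU]) hβ0 (pow_ne_zero 2 hβ0)
      (by rw [hβ]; exact hpown _) (by rw [hβ, pow_right_comm (α^(n/5)) 2 n, hpown, one_pow])
      (fun p => by
        rw [hβ, pow_right_comm α (n/5) p.1.val, pow_right_comm α (n/5) 2,
          pow_right_comm (α^2) (n/5) p.2.val, ← mul_pow, pow_right_comm α 2 p.2.val])
    rw [hfβ, one_mul] at h
    exact h
  have R10 : ∑ p ∈ T, (fun p : ZMod n × ZMod n => α ^ p.1.val * (α ^ p.2.val)^2) p
      = (s + s^2) * ∑ p ∈ Xf, (fun p : ZMod n × ZMod n => α ^ p.1.val * (α ^ p.2.val)^2) p := by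
    have h := mk α (α^2) _ (by simp [hU]) hα0 (pow_ne_zero 2 hα0) hα1 (hpown 2)
      (fun p => by rw [pow_right_comm α 2 p.2.val])
    have hfac : α + α⁻¹ + α^2 + (α^2)⁻¹ = s + s^2 := by
      rw [← inv_pow, hs]; linear_combination (-(α*α⁻¹))*h2F
    rw [hfac] at h
    exact h
  -- fifth powers
  have hH5 : ∀ p : ZMod n × ZMod n, ((α ^ p.1.val * (α ^ p.2.val)^2)^(n/5))^5 = 1 := by
    intro p
    rw [← pow_mul, Nat.div_mul_cancel hdvd5, mul_pow, pow_right_comm α p.1.val n, hα1,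
      one_pow, pow_right_comm (α^p.2.val) 2 n, pow_right_comm α p.2.val n, hα1, one_pow,
      one_pow, one_mul]
  have hH0 : ∀ p : ZMod n × ZMod n, (α ^ p.1.val * (α ^ p.2.val)^2)^(n/5) ≠ 0 :=
    fun p => pow_ne_zero _ (mul_ne_zero (pow_ne_zero _ hα0) (pow_ne_zero _ (pow_ne_zero _ hα0)))
  -- T card parity
  have hTeven : 2 ∣ T.card := by
    rw [Finset.sum_const, nsmul_eq_mul, mul_one] at R1
    exact (CharP.cast_eq_zero_iff F 2 T.card).mp R1
  have hTle : T.card ≤ 4 := le_trans (Finset.card_le_card Finset.subset_union_left) hcard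
  have hTcases : T.card = 0 ∨ T.card = 2 ∨ T.card = 4 := by omega
  have pneq : ∀ P Q : ZMod n × ZMod n, P ≠ Q →
      ((α ^ P.1.val : F), (α ^ P.2.val : F)) ≠ (α ^ Q.1.val, α ^ Q.2.val) := by
    intro P Q hPQ hEq
    exact hPQ (ptinj P Q (congrArg Prod.fst hEq) (congrArg Prod.snd hEq))
  rcases hTcases with h0c | h2c | h4c
  · -- T empty
    have hTemp : T = ∅ := Finset.card_eq_zero.mp h0c
    rw [hTemp, Finset.sum_empty] at R4 R5 R6 R7 R9 R10
    have hXA : ∑ p ∈ Xf, (fun p : ZMod n × ZMod n => α ^ p.1.val) p = 0 :=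
      (mul_eq_zero.mp R4.symm).resolve_left hs0
    have hXB : ∑ p ∈ Xf, (fun p : ZMod n × ZMod n => α ^ p.2.val) p = 0 :=
      (mul_eq_zero.mp R5.symm).resolve_left hs0
    have hXA3 : ∑ p ∈ Xf, (fun p : ZMod n × ZMod n => (α ^ p.1.val)^3) p = 0 :=
      (mul_eq_zero.mp R6.symm).resolve_left hs30
    have hXB3 : ∑ p ∈ Xf, (fun p : ZMod n × ZMod n => (α ^ p.2.val)^3) p = 0 :=
      (mul_eq_zero.mp R7.symm).resolve_left hs30
    have hXH : ∑ p ∈ Xf, (fun p : ZMod n × ZMod n => (α ^ p.1.val * (α ^ p.2.val)^2)^(n/5)) p = 0 :=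
      R9.symm
    have hXab2 : ∑ p ∈ Xf, (fun p : ZMod n × ZMod n => α ^ p.1.val * (α ^ p.2.val)^2) p = 0 :=
      (mul_eq_zero.mp R10.symm).resolve_left ht0
    have hXne : Xf.Nonempty := by
      rcases hSne with ⟨p, hp⟩
      rcases Finset.mem_union.mp hp with h | h
      · rw [hTemp] at h; exact absurd h (Finset.notMem_empty p)
      · exact ⟨p, h⟩
    have hXle : Xf.card ≤ 4 := le_trans (Finset.card_le_card Finset.subset_union_right) hcard
    have hXpos : 1 ≤ Xf.card := Finset.card_pos.mpr hXne
    have hXcases : Xf.card = 1 ∨ Xf.card = 2 ∨ Xf.card = 3 ∨ Xf.card = 4 := by omega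
    rcases hXcases with h1x | h2x | h3x | h4x
    · obtain ⟨P, hXeq⟩ := Finset.card_eq_one.mp h1x
      rw [hXeq, Finset.sum_singleton] at hXH
      exact hH0 P hXH
    · obtain ⟨P, Q, hPQ, hXeq⟩ := Finset.card_eq_two.mp h2x
      rw [hXeq, Finset.sum_pair hPQ] at hXA hXB
      exact hPQ (ptinj P Q (addeq hXA) (addeq hXB))
    · obtain ⟨P, Q, R, hPQ, hPR, hQR, hXeq⟩ := Finset.card_eq_three.mp h3x
      rw [hXeq, Finset.sum_insert (by simp [hPQ, hPR]), Finset.sum_pair hQR] at hXH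
      exact five_three _ _ _ (hH5 P) (hH5 Q) (hH5 R) (by linear_combination hXH)
    · obtain ⟨P1, P2, P3, P4, g12, g13, g14, g23, g24, g34, hXeq⟩ := card_four h4x
      rw [hXeq] at hXA hXB hXA3 hXB3 hXab2
      rw [sum_four _ g12 g13 g14 g23 g24 g34] at hXA hXB hXA3 hXB3 hXab2
      exact rect (α ^ P1.1.val) (α ^ P1.2.val) (α ^ P2.1.val) (α ^ P2.2.val)
        (α ^ P3.1.val) (α ^ P3.2.val) (α ^ P4.1.val) (α ^ P4.2.val)
        (pneq _ _ g12) (pneq _ _ g13) (pneq _ _ g14) (pneq _ _ g23) (pneq _ _ g24)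
        (pneq _ _ g34)
        (by linear_combination hXA) (by linear_combination hXA3)
        (by linear_combination hXB) (by linear_combination hXB3)
        (Or.inr (by linear_combination hXab2))
  · -- T has two elements
    obtain ⟨P, Q, hPQ, hTeq⟩ := Finset.card_eq_two.mp h2c
    rw [hTeq, Finset.sum_pair hPQ] at R2 R3
    exact two_point (α ^ P.1.val) (α ^ P.2.val) (α ^ Q.1.val) (α ^ Q.2.val)
      (pow_ne_zero _ hα0) (pow_ne_zero _ hα0) (pow_ne_zero _ hα0)
      (pneq _ _ hPQ) (by linear_combination R2) (by linear_combination R3)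
  · -- T has four elements
    have hST : T = T ∪ Xf :=
      Finset.eq_of_subset_of_card_le Finset.subset_union_left (by omega)
    have hXsub : Xf ⊆ T := by rw [hST]; exact Finset.subset_union_right
    have hEH : ∑ p ∈ T \ Xf, (fun p : ZMod n × ZMod n => (α ^ p.1.val * (α ^ p.2.val)^2)^(n/5)) p = 0 := by
      rw [Finset.sum_sdiff_eq_sub hXsub, R9, sub_self]
    have hEcard : (T \ Xf).card = 4 - Xf.card := by rw [Finset.card_sdiff_of_subset hXsub, h4c]
    have hXle : Xf.card ≤ 4 := h4c ▸ Finset.card_le_card hXsub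
    have hXcases : Xf.card = 0 ∨ Xf.card = 1 ∨ Xf.card = 2 ∨ Xf.card = 3 ∨ Xf.card = 4 := by
      omega
    rcases hXcases with h0x | h1x | h2x | h3x | h4x
    · -- x vanishes on the support
      have hXemp : Xf = ∅ := Finset.card_eq_zero.mp h0x
      rw [hXemp, Finset.sum_empty, mul_zero] at R4 R5 R6 R7
      obtain ⟨P1, P2, P3, P4, g12, g13, g14, g23, g24, g34, hTeq⟩ := card_four h4c
      rw [hTeq] at R2 R4 R5 R6 R7
      rw [sum_four _ g12 g13 g14 g23 g24 g34] at R2 R4 R5 R6 R7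
      exact rect (α ^ P1.1.val) (α ^ P1.2.val) (α ^ P2.1.val) (α ^ P2.2.val)
        (α ^ P3.1.val) (α ^ P3.2.val) (α ^ P4.1.val) (α ^ P4.2.val)
        (pneq _ _ g12) (pneq _ _ g13) (pneq _ _ g14) (pneq _ _ g23) (pneq _ _ g24)
        (pneq _ _ g34)
        (by linear_combination R4) (by linear_combination R6)
        (by linear_combination R5) (by linear_combination R7)
        (Or.inl (by linear_combination R2))
    · -- |Xf| = 1 : T \ Xf has three elements
      have h3e : (T \ Xf).card = 3 := by omega
      obtain ⟨P, Q, R, hPQ, hPR, hQR, hEeq⟩ := Finset.card_eq_three.mp h3e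
      rw [hEeq, Finset.sum_insert (by simp [hPQ, hPR]), Finset.sum_pair hQR] at hEH
      exact five_three _ _ _ (hH5 P) (hH5 Q) (hH5 R) (by linear_combination hEH)
    · -- |Xf| = 2 : the hard case
      have h2e : (T \ Xf).card = 2 := by omega
      obtain ⟨P1, P2, g12, hXeq⟩ := Finset.card_eq_two.mp h2x
      obtain ⟨P3, P4, g34, hEeq⟩ := Finset.card_eq_two.mp h2e
      have hsplit : ∀ g : ZMod n × ZMod n → F,
          ∑ p ∈ T, g p = (g P1 + g P2) + (g P3 + g P4) := by
        intro g
        rw [← Finset.union_sdiff_of_subset hXsub, Finset.sum_union Finset.disjoint_sdiff,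
          hEeq, hXeq, Finset.sum_pair g12, Finset.sum_pair g34]
      have hsplitX : ∀ g : ZMod n × ZMod n → F,
          ∑ p ∈ Xf, g p = g P1 + g P2 := by
        intro g
        rw [hXeq, Finset.sum_pair g12]
      rw [hsplit] at R2 R3 R3' R10
      rw [hsplit, hsplitX] at R4 R5
      rw [hsplitX] at R10
      exact hardCase s (α ^ P1.1.val) (α ^ P1.2.val) (α ^ P2.1.val) (α ^ P2.2.val)
        (α ^ P3.1.val) (α ^ P3.2.val) (α ^ P4.1.val) (α ^ P4.2.val)
        hs0 hs1 (pow_ne_zero _ hα0) (pow_ne_zero _ hα0)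
        (pow_ne_zero _ hα0) (pow_ne_zero _ hα0) (pow_ne_zero _ hα0) (pow_ne_zero _ hα0)
        (pneq _ _ g12)
        (by linear_combination R3) (by linear_combination R3')
        (by linear_combination R2) (by linear_combination R4)
        (by linear_combination R5) (by linear_combination R10)
    · -- |Xf| = 3 : T \ Xf is a singleton
      have h1e : (T \ Xf).card = 1 := by omega
      obtain ⟨P, hEeq⟩ := Finset.card_eq_one.mp h1e
      rw [hEeq, Finset.sum_singleton] at hEH
      exact hH0 P hEH
    · -- |Xf| = 4 : x is 1 on the whole support
      have hXT : Xf = T := Finset.eq_of_subset_of_card_le hXsub (by omega)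
      rw [hXT] at R4 R5 R6 R7
      have hTA : ∑ p ∈ T, (fun p : ZMod n × ZMod n => α ^ p.1.val) p = 0 := by
        have h0 : ((1:F)+s) * ∑ p ∈ T, (fun p : ZMod n × ZMod n => α ^ p.1.val) p = 0 := by
          linear_combination R4 + s*(∑ p ∈ T, (fun p : ZMod n × ZMod n => α ^ p.1.val) p)*h2F
        exact (mul_eq_zero.mp h0).resolve_left hσ
      have hTB : ∑ p ∈ T, (fun p : ZMod n × ZMod n => α ^ p.2.val) p = 0 := by
        have h0 : ((1:F)+s) * ∑ p ∈ T, (fun p : ZMod n × ZMod n => α ^ p.2.val) p = 0 := by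
          linear_combination R5 + s*(∑ p ∈ T, (fun p : ZMod n × ZMod n => α ^ p.2.val) p)*h2F
        exact (mul_eq_zero.mp h0).resolve_left hσ
      have hTA3 : ∑ p ∈ T, (fun p : ZMod n × ZMod n => (α ^ p.1.val)^3) p = 0 := by
        have h0 : ((1:F)+s3) * ∑ p ∈ T, (fun p : ZMod n × ZMod n => (α ^ p.1.val)^3) p = 0 := by
          linear_combination R6 + s3*(∑ p ∈ T, (fun p : ZMod n × ZMod n => (α ^ p.1.val)^3) p)*h2F
        exact (mul_eq_zero.mp h0).resolve_left hσ3
      have hTB3 : ∑ p ∈ T, (fun p : ZMod n × ZMod n => (α ^ p.2.val)^3) p = 0 := by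
        have h0 : ((1:F)+s3) * ∑ p ∈ T, (fun p : ZMod n × ZMod n => (α ^ p.2.val)^3) p = 0 := by
          linear_combination R7 + s3*(∑ p ∈ T, (fun p : ZMod n × ZMod n => (α ^ p.2.val)^3) p)*h2F
        exact (mul_eq_zero.mp h0).resolve_left hσ3
      obtain ⟨P1, P2, P3, P4, g12, g13, g14, g23, g24, g34, hTeq⟩ := card_four h4c
      rw [hTeq] at R2 hTA hTB hTA3 hTB3
      rw [sum_four _ g12 g13 g14 g23 g24 g34] at R2 hTA hTB hTA3 hTB3
      exact rect (α ^ P1.1.val) (α ^ P1.2.val) (α ^ P2.1.val) (α ^ P2.2.val)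
        (α ^ P3.1.val) (α ^ P3.2.val) (α ^ P4.1.val) (α ^ P4.2.val)
        (pneq _ _ g12) (pneq _ _ g13) (pneq _ _ g14) (pneq _ _ g23) (pneq _ _ g24)
        (pneq _ _ g34)
        (by linear_combination hTA) (by linear_combination hTA3)
        (by linear_combination hTB) (by linear_combination hTB3)
        (Or.inl (by linear_combination R2))

theorem stmt_15 (r : ℕ) (hr : 1 ≤ r) (n : ℕ) (hn : n = 2 ^ (4 * r) - 1) [NeZero n]
    (α : GaloisField 2 (4 * r)) (hα : IsPrimitiveRoot α (2 ^ (4 * r) - 1))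
    (γ β : GaloisField 2 (4 * r)) (hγ : γ = α ^ (n / 3)) (hβ : β = α ^ (n / 5))
    (U : Set (GaloisField 2 (4 * r) × GaloisField 2 (4 * r)))
    (hU : U = {(1, 1), (α, α), (α, α⁻¹), (α, 1), (α ^ 3, 1), (1, α), (1, α ^ 3),
               (1, γ), (β, β ^ 2), (α, α ^ 2), (α ^ 3, (α ^ 3)⁻¹)}) :
    ∀ x c : ZMod n × ZMod n → ZMod 2,
      (∀ uv ∈ U, ∑ p : ZMod n × ZMod n,
          algebraMap (ZMod 2) (GaloisField 2 (4 * r)) (c p) *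
            uv.1 ^ p.1.val * uv.2 ^ p.2.val = 0) →
      ¬(x = 0 ∧ Matrix.vecMul x (torusMatrix n) + c = 0) →
      5 ≤ sympWeight x (Matrix.vecMul x (torusMatrix n) + c) := by
  intro x c hC hne
  have hn15 : 15 ≤ n := by
    rw [hn]
    have : (2:ℕ)^4 ≤ 2^(4*r) := Nat.pow_le_pow_right (by norm_num) (by omega)
    omega
  have hdvd15 : 15 ∣ n := by
    rw [hn, pow_mul]
    have h := Nat.sub_dvd_pow_sub_pow (2^4) 1 r
    norm_num at h ⊢
    exact h
  have hdvd5 : 5 ∣ n := dvd_trans (by norm_num) hdvd15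
  have hα' : IsPrimitiveRoot α n := by rw [hn]; exact hα
  exact core_stmt hn15 hdvd5 α hα' γ β hβ U hU x c hC hne
end

section
/- Let r ≥ 1, n = 2^{4r} − 1, and let α be a primitive element of GF(2^{4r}); set γ = α^{n/3} and β = α^{n/5}. Let U = {(1,1), (α,α), (α,α^{−1}), (α,1), (α³,1), (1,α), (1,α³), (1,γ), (β,β²), (α,α²), (α³,α^{−3})} ⊆ GF(2^{4r})². Consider the F₂-linear map φ from functions c : (ℤ/nℤ)² → F₂ to GF(2^{4r})^{11} sending c to the tuple (Σ_{i,j=0}^{n−1} c(i,j)·u^i v^j)_{(u,v) ∈ U}, with bits lifted to GF(2^{4r}). Then the kernel of φ has F₂-dimension (2^{4r} − 1)² − 32r − 7. -/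
open Module Submodule

section GeneralLemmas

variable {F : Type*} [Field F] [Fintype F] [Algebra (ZMod 2) F]

lemma aux_not_dvd_of_between (n e k : ℕ) (h1 : n * k < e) (h2 : e < n * (k + 1)) : ¬ n ∣ e := by
  rintro ⟨c, rfl⟩
  have hk : k < c := by
    by_contra h
    push_neg at h
    exact absurd (Nat.mul_le_mul_left n h) (by omega)
  have hc : c < k + 1 := by
    by_contra h
    push_neg at h
    exact absurd (Nat.mul_le_mul_left n h) (by omega)
  omega

omit [Algebra (ZMod 2) F] in
lemma aux_inv_eq_pow_card_sub_two (x : F) (hx : x ≠ 0) :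
    x⁻¹ = x ^ (Fintype.card F - 2) := by
  have h1 : x * x ^ (Fintype.card F - 2) = 1 := by
    rw [← pow_succ']
    have : Fintype.card F - 2 + 1 = Fintype.card F - 1 := by
      have hc : 2 ≤ Fintype.card F := Fintype.one_lt_card
      omega
    rw [this]
    exact FiniteField.pow_card_sub_one_eq_one x hx
  exact (eq_inv_of_mul_eq_one_left (by rw [mul_comm] at h1; exact h1)).symm

/-- the subgroup of units lying in a subalgebra -/
def auxUnitsIn (K : Subalgebra (ZMod 2) F) : Subgroup Fˣ where
  carrier := {u | (u : F) ∈ K}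
  mul_mem' := by intro a b ha hb; exact K.mul_mem ha hb
  one_mem' := K.one_mem
  inv_mem' := by
    intro u hu
    show ((u⁻¹ : Fˣ) : F) ∈ K
    have : ((u⁻¹ : Fˣ) : F) = (u : F)⁻¹ := by simp
    rw [this, aux_inv_eq_pow_card_sub_two _ (Units.ne_zero u)]
    exact K.pow_mem hu _

noncomputable def auxUnitsInEquiv (K : Subalgebra (ZMod 2) F) :
    auxUnitsIn K ≃ {y : K // y ≠ 0} where
  toFun u := ⟨⟨(u : Fˣ), u.2⟩, by
    intro h
    have := congrArg (Subtype.val) h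
    exact Units.ne_zero (u : Fˣ) this⟩
  invFun y := ⟨Units.mk0 (y.1 : F) (by
      intro h; exact y.2 (by ext; exact h)), by
    show ((Units.mk0 _ _ : Fˣ) : F) ∈ K
    simpa using y.1.2⟩
  left_inv u := by ext; simp
  right_inv y := by ext; simp

lemma aux_card_unitsIn (K : Subalgebra (ZMod 2) F) :
    Nat.card (auxUnitsIn K) = Nat.card K - 1 := by
  rw [Nat.card_congr (auxUnitsInEquiv K)]
  haveI : Fintype K := Fintype.ofFinite K
  classical
  rw [Nat.card_eq_fintype_card, Nat.card_eq_fintype_card]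
  have := Fintype.card_subtype_compl (fun y : K => y = 0)
  have h1 : Fintype.card {y : K // y = 0} = 1 := Fintype.card_subtype_eq (0 : K)
  simp only [h1] at this
  convert this using 2

lemma aux_orderOf_dvd_card_sub_one (K : Subalgebra (ZMod 2) F) {x : F} (hx : x ∈ K)
    (hx0 : x ≠ 0) : orderOf x ∣ Nat.card K - 1 := by
  rw [← aux_card_unitsIn K]
  have hu : (Units.mk0 x hx0 : Fˣ) ∈ auxUnitsIn K := by
    show ((Units.mk0 x hx0 : Fˣ) : F) ∈ K; simpa using hx
  have h2 := Subgroup.orderOf_dvd_natCard (auxUnitsIn K) hu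
  have h3 : orderOf (Units.mk0 x hx0) = orderOf x := by
    rw [← orderOf_units]; simp
  rwa [h3] at h2

lemma aux_card_subalgebra (K : Subalgebra (ZMod 2) F) :
    Nat.card K = 2 ^ finrank (ZMod 2) K := by
  haveI : Fintype K := Fintype.ofFinite K
  rw [Nat.card_eq_fintype_card, card_eq_pow_finrank (K := ZMod 2), ZMod.card]

lemma aux_two_le_card_subalgebra (K : Subalgebra (ZMod 2) F) : 2 ≤ Nat.card K := by
  haveI : Fintype K := Fintype.ofFinite K
  rw [Nat.card_eq_fintype_card]
  exact Fintype.one_lt_card_iff_nontrivial.mpr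
    ⟨0, 1, by intro h; exact zero_ne_one (congrArg Subtype.val h)⟩

lemma aux_finrank_subalgebra_le (K : Subalgebra (ZMod 2) F) :
    finrank (ZMod 2) K ≤ finrank (ZMod 2) F := by
  haveI : FiniteDimensional (ZMod 2) F := Module.Finite.of_finite
  exact (Submodule.finrank_le (Subalgebra.toSubmodule K))

lemma aux_dvd_pow_finrank (K : Subalgebra (ZMod 2) F) {x : F} (hx : x ∈ K) (hx0 : x ≠ 0) :
    orderOf x ∣ 2 ^ finrank (ZMod 2) K - 1 := by
  have := aux_orderOf_dvd_card_sub_one K hx hx0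
  rwa [aux_card_subalgebra] at this

lemma aux_finrank_eq_of_orderOf_full {M : ℕ} (hfr : finrank (ZMod 2) F = M)
    (hM : 16 ≤ 2 ^ M) (K : Subalgebra (ZMod 2) F) (x : F) (hx : x ∈ K) (hx0 : x ≠ 0)
    (hord : orderOf x = 2 ^ M - 1) : finrank (ZMod 2) K = M := by
  set e := finrank (ZMod 2) K with he
  have h1 : (2 : ℕ) ^ M - 1 ∣ 2 ^ e - 1 := hord ▸ aux_dvd_pow_finrank K hx hx0
  have h2 : e ≤ M := hfr ▸ aux_finrank_subalgebra_le K
  have h3 : 2 ≤ 2 ^ e := by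
    have := aux_two_le_card_subalgebra K
    rwa [aux_card_subalgebra K, ← he] at this
  have h4 : 2 ^ M - 1 ≤ 2 ^ e - 1 := Nat.le_of_dvd (by omega) h1
  have h5 : (2:ℕ) ^ e ≤ 2 ^ M := Nat.pow_le_pow_right (by norm_num) h2
  have h6 : (2:ℕ) ^ e = 2 ^ M := by omega
  have := Nat.pow_right_injective (le_refl 2) h6
  omega

lemma aux_finrank_eq_of_orderOf_third {M : ℕ} (hfr : finrank (ZMod 2) F = M)
    (hM : 16 ≤ 2 ^ M) (K : Subalgebra (ZMod 2) F) (x : F) (hx : x ∈ K) (hx0 : x ≠ 0)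
    (hord : orderOf x = (2 ^ M - 1) / 3) (h3 : 3 ∣ 2 ^ M - 1) : finrank (ZMod 2) K = M := by
  set e := finrank (ZMod 2) K with he
  set q3 := (2 ^ M - 1) / 3 with hq3
  have hq3' : 3 * q3 = 2 ^ M - 1 := by
    rw [hq3]; exact Nat.mul_div_cancel' h3
  have h1 : q3 ∣ 2 ^ e - 1 := hord ▸ aux_dvd_pow_finrank K hx hx0
  have h2 : e ≤ M := hfr ▸ aux_finrank_subalgebra_le K
  have h3' : 2 ≤ 2 ^ e := by
    have := aux_two_le_card_subalgebra K
    rwa [aux_card_subalgebra K, ← he] at this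
  by_contra hne
  have heM : e + 1 ≤ M := by omega
  have h5 : (2:ℕ) ^ (e+1) ≤ 2 ^ M := Nat.pow_le_pow_right (by norm_num) heM
  rw [pow_succ] at h5
  have hlt : 2 ^ e - 1 < 2 * q3 := by omega
  obtain ⟨c, hc⟩ := h1
  have hc2 : c < 2 := by
    rcases Nat.lt_or_ge c 2 with h | h
    · exact h
    · exfalso; nlinarith [hc, hlt, h, Nat.one_le_iff_ne_zero.mpr (show q3 ≠ 0 by omega)]
  interval_cases c
  · omega
  · have key : 3 * 2 ^ e = 2 ^ M + 2 := by omega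
    rcases e with _ | _ | e
    · simp at key; omega
    · norm_num at key; omega
    · have : (2:ℕ) ^ (e + 2) = 4 * 2 ^ e := by ring
      rw [this] at key
      have hM4 : M ≥ 4 := by
        by_contra hM4
        push_neg at hM4
        have : (2:ℕ)^M ≤ 2^3 := Nat.pow_le_pow_right (by norm_num) (by omega)
        norm_num at this
        omega
      have h16 : (2:ℕ) ^ M = 16 * 2 ^ (M - 4) := by
        calc (2:ℕ)^M = 2^(4+(M-4)) := by rw [show 4+(M-4)=M by omega]
        _ = 16 * 2^(M-4) := by rw [pow_add]; norm_num
      omega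

lemma aux_finrank_ge_two_of_orderOf_three (K : Subalgebra (ZMod 2) F) (x : F) (hx : x ∈ K)
    (hx0 : x ≠ 0) (hord : orderOf x = 3) : 2 ≤ finrank (ZMod 2) K := by
  set e := finrank (ZMod 2) K with he
  have h1 : 3 ∣ 2 ^ e - 1 := hord ▸ aux_dvd_pow_finrank K hx hx0
  have h3' : 2 ≤ 2 ^ e := by
    have := aux_two_le_card_subalgebra K
    rwa [aux_card_subalgebra K, ← he] at this
  by_contra hne
  push_neg at hne
  interval_cases e <;> revert h1 h3' <;> norm_num

lemma aux_finrank_ge_four_of_orderOf_five (K : Subalgebra (ZMod 2) F) (x : F) (hx : x ∈ K)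
    (hx0 : x ≠ 0) (hord : orderOf x = 5) : 4 ≤ finrank (ZMod 2) K := by
  set e := finrank (ZMod 2) K with he
  have h1 : 5 ∣ 2 ^ e - 1 := hord ▸ aux_dvd_pow_finrank K hx hx0
  have h3' : 2 ≤ 2 ^ e := by
    have := aux_two_le_card_subalgebra K
    rwa [aux_card_subalgebra K, ← he] at this
  by_contra hne
  push_neg at hne
  interval_cases e <;> revert h1 h3' <;> norm_num

lemma aux_adjoin_le_span (S : Set F) (h1 : (1:F) ∈ Submodule.span (ZMod 2) S)
    (hmul : ∀ a ∈ S, ∀ b ∈ S, a * b ∈ span (ZMod 2) S)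
    (G : Set F) (hG : G ⊆ (span (ZMod 2) S : Set F)) :
    ∀ y ∈ Algebra.adjoin (ZMod 2) G, y ∈ span (ZMod 2) S := by
  have hmul2 : ∀ x ∈ span (ZMod 2) S, ∀ y ∈ span (ZMod 2) S, x * y ∈ span (ZMod 2) S := by
    intro x hx
    induction hx using Submodule.span_induction with
    | mem a ha =>
      intro y hy
      induction hy using Submodule.span_induction with
      | mem b hb => exact hmul a ha b hb
      | zero => rw [mul_zero]; exact zero_mem _
      | add y z _ _ iy iz => rw [mul_add]; exact add_mem iy iz
      | smul c y _ iy => rw [mul_smul_comm]; exact Submodule.smul_mem _ c iy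
    | zero => intro y _; rw [zero_mul]; exact zero_mem _
    | add x z _ _ ix iz => intro y hy; rw [add_mul]; exact add_mem (ix y hy) (iz y hy)
    | smul c x _ ix => intro y hy; rw [smul_mul_assoc]; exact Submodule.smul_mem _ c (ix y hy)
  intro y hy
  induction hy using Algebra.adjoin_induction with
  | mem a ha => exact hG ha
  | algebraMap r =>
    have : algebraMap (ZMod 2) F r = r • (1 : F) := by rw [Algebra.smul_def, mul_one]
    rw [this]
    exact Submodule.smul_mem _ r h1
  | add a b _ _ ia ib => exact add_mem ia ib
  | mul a b _ _ ia ib => exact hmul2 a ia b ib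

lemma aux_finrank_adjoin_le {G : Set F} {N : ℕ} (f : Fin N → F)
    (hmul : ∀ i j : Fin N, f i * f j ∈ span (ZMod 2) (Set.range f))
    (h1 : (1:F) ∈ Set.range f)
    (hG : G ⊆ (span (ZMod 2) (Set.range f) : Set F)) :
    finrank (ZMod 2) (Algebra.adjoin (ZMod 2) G) ≤ N := by
  classical
  haveI : FiniteDimensional (ZMod 2) F := Module.Finite.of_finite
  have hle : ∀ y ∈ Algebra.adjoin (ZMod 2) G, y ∈ span (ZMod 2) (Set.range f) :=
    aux_adjoin_le_span _ (Submodule.subset_span h1)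
      (by rintro a ⟨i, rfl⟩ b ⟨j, rfl⟩; exact hmul i j) G hG
  have hle2 : Subalgebra.toSubmodule (Algebra.adjoin (ZMod 2) G) ≤
      span (ZMod 2) (Set.range f) := fun x hx => hle x hx
  have step1 : finrank (ZMod 2) (Algebra.adjoin (ZMod 2) G) ≤
      finrank (ZMod 2) (span (ZMod 2) (Set.range f)) :=
    Submodule.finrank_mono hle2
  have step2 : finrank (ZMod 2) (span (ZMod 2) (Set.range f)) ≤ (Set.range f).toFinset.card :=
    finrank_span_le_card _
  have step3 : (Set.range f).toFinset.card ≤ N := by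
    have h := Fintype.card_range_le f
    rw [Set.toFinset_card]
    simpa using h
  omega

lemma aux_sep_pair {ι : Type*} (A : Subalgebra (ZMod 2) (ι → F))
    (hodd : Odd (Fintype.card F - 1)) (h2 : (2 : F) = 0)
    {w : ι → F} (hw : w ∈ A) {s t : ι}
    (hws : w s = 1) (hwt1 : w t ≠ 1) (hwt0 : w t ≠ 0) :
    (∃ g ∈ A, g s = 0 ∧ g t = 1) ∧ (∃ g ∈ A, g t = 0 ∧ g s = 1) := by
  have hq1 : Fintype.card F - 1 ≠ 0 := by
    intro h; rw [h] at hodd; exact (Nat.not_odd_iff_even.mpr Even.zero) hodd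
  have h1y : (1 : F) + w t ≠ 0 := fun h => hwt1 (by linear_combination h - h2)
  constructor
  · refine ⟨(w + w * w) ^ (Fintype.card F - 1), A.pow_mem (A.add_mem hw (A.mul_mem hw hw)) _,
      ?_, ?_⟩
    · have hz : (w + w * w) s = 0 := by
        simp only [Pi.add_apply, Pi.mul_apply, hws]; linear_combination h2
      simp only [Pi.pow_apply, hz]
      exact zero_pow hq1
    · have hne : (w + w * w) t ≠ 0 := by
        simp only [Pi.add_apply, Pi.mul_apply]
        intro h
        exact (mul_ne_zero hwt0 h1y) (by linear_combination h)
      simp only [Pi.pow_apply]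
      exact FiniteField.pow_card_sub_one_eq_one _ hne
  · set K := orderOf (w t) with hK
    have hKodd : Odd K := hodd.of_dvd_nat <|
      orderOf_dvd_of_pow_eq_one (FiniteField.pow_card_sub_one_eq_one _ hwt0)
    refine ⟨∑ i ∈ Finset.range K, w ^ i, Subalgebra.sum_mem A fun i _ => A.pow_mem hw i, ?_, ?_⟩
    · have heval : (∑ i ∈ Finset.range K, w ^ i) t = ∑ i ∈ Finset.range K, (w t) ^ i := by
        simp
      rw [heval]
      have hmul : (∑ i ∈ Finset.range K, (w t) ^ i) * (w t - 1) = 0 := by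
        rw [geom_sum_mul, pow_orderOf_eq_one, sub_self]
      rcases mul_eq_zero.mp hmul with h | h
      · exact h
      · exact absurd (by linear_combination h) hwt1
    · have heval : (∑ i ∈ Finset.range K, w ^ i) s = ∑ i ∈ Finset.range K, (w s) ^ i := by
        simp
      rw [heval, hws]
      simp only [one_pow, Finset.sum_const, Finset.card_range, nsmul_eq_mul, mul_one]
      obtain ⟨j, hj⟩ := hKodd
      rw [hj]
      push_cast
      linear_combination (j : F) * h2

omit [Fintype F] in
lemma aux_pow_val_cast (n : ℕ) [NeZero n] (x : F) (hx : x ^ n = 1) (k : ℕ) :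
    x ^ ((k : ZMod n)).val = x ^ k := by
  have h1 : ((k : ZMod n)).val = k % n := ZMod.val_natCast n k
  rw [h1]
  conv_rhs => rw [← Nat.mod_add_div k n]
  rw [pow_add, pow_mul, hx, one_pow, mul_one]

omit [Fintype F] in
lemma aux_adjoin_eq_span_col {ι : Type*} (n : ℕ) [NeZero n] (hn1 : 1 < n) (u v : ι → F)
    (hu : ∀ t, (u t) ^ n = 1) (hv : ∀ t, (v t) ^ n = 1) :
    Subalgebra.toSubmodule (Algebra.adjoin (ZMod 2) ({u, v} : Set (ι → F))) =
      Submodule.span (ZMod 2)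
        (Set.range (fun p : ZMod n × ZMod n => fun t => u t ^ p.1.val * v t ^ p.2.val)) := by
  rw [Algebra.adjoin_eq_span]
  congr 1
  set col : ZMod n × ZMod n → (ι → F) := fun p t => u t ^ p.1.val * v t ^ p.2.val with hcol
  have hcolmul : ∀ p q, col p * col q = col (p + q) := by
    intro p q
    funext t
    simp only [hcol, Pi.mul_apply]
    have e1 : u t ^ (p.1 + q.1).val = u t ^ p.1.val * u t ^ q.1.val := by
      have h : (p.1 + q.1).val = (p.1.val + q.1.val) % n := by rw [ZMod.val_add]
      rw [h]
      have h2 := aux_pow_val_cast n (u t) (hu t) (p.1.val + q.1.val)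
      rw [ZMod.val_natCast] at h2
      rw [h2, pow_add]
    have e2 : v t ^ (p.2 + q.2).val = v t ^ p.2.val * v t ^ q.2.val := by
      have h : (p.2 + q.2).val = (p.2.val + q.2.val) % n := by rw [ZMod.val_add]
      rw [h]
      have h2 := aux_pow_val_cast n (v t) (hv t) (p.2.val + q.2.val)
      rw [ZMod.val_natCast] at h2
      rw [h2, pow_add]
    show u t ^ p.1.val * v t ^ p.2.val * (u t ^ q.1.val * v t ^ q.2.val) = _
    rw [Prod.fst_add, Prod.snd_add, e1, e2]
    ring
  have hone : (1 : ι → F) ∈ Set.range col := by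
    refine ⟨((0 : ZMod n), (0 : ZMod n)), ?_⟩
    funext t
    simp [hcol, ZMod.val_zero]
  let colM : Submonoid (ι → F) :=
    { carrier := Set.range col
      mul_mem' := by
        rintro a b ⟨p, rfl⟩ ⟨q, rfl⟩
        exact ⟨p + q, (hcolmul p q).symm⟩
      one_mem' := hone }
  apply Set.eq_of_subset_of_subset
  · show (Submonoid.closure ({u, v} : Set (ι → F)) : Set (ι → F)) ⊆ colM
    apply Submonoid.closure_le.mpr
    rintro w (rfl | hw)
    · refine ⟨((1 : ZMod n), (0 : ZMod n)), ?_⟩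
      funext t
      simp only [hcol]
      rw [ZMod.val_one'' (by omega), ZMod.val_zero]
      simp
    · simp only [Set.mem_singleton_iff] at hw
      subst hw
      refine ⟨((0 : ZMod n), (1 : ZMod n)), ?_⟩
      funext t
      simp only [hcol]
      rw [ZMod.val_one'' (by omega), ZMod.val_zero]
      simp
  · show Set.range col ⊆ (Submonoid.closure ({u, v} : Set (ι → F)) : Set (ι → F))
    rintro w ⟨p, rfl⟩
    have h : col p = u ^ p.1.val * v ^ p.2.val := by
      funext t; simp [hcol]
    show col p ∈ Submonoid.closure ({u, v} : Set (ι → F))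
    rw [h]
    exact Submonoid.mul_mem _
      (Submonoid.pow_mem _ (Submonoid.subset_closure (by simp)) _)
      (Submonoid.pow_mem _ (Submonoid.subset_closure (by simp)) _)

omit [Fintype F] in
lemma aux_pi_adj {ι : Type*} [Fintype ι] [DecidableEq ι] (u v : ι → F)
    (hsep : ∀ s t : ι, s ≠ t →
      ∃ g ∈ Algebra.adjoin (ZMod 2) ({u, v} : Set (ι → F)), g s = 0 ∧ g t = 1) :
    Subalgebra.toSubmodule (Algebra.adjoin (ZMod 2) ({u, v} : Set (ι → F))) =
      Submodule.pi Set.univ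
        (fun t => Subalgebra.toSubmodule (Algebra.adjoin (ZMod 2) ({u t, v t} : Set F))) := by
  set A := Algebra.adjoin (ZMod 2) ({u, v} : Set (ι → F)) with hA
  set K : ι → Subalgebra (ZMod 2) F := fun t => Algebra.adjoin (ZMod 2) ({u t, v t} : Set F)
    with hKdef
  have hup : ∀ x ∈ A, ∀ t, x t ∈ K t := by
    intro x hx
    induction hx using Algebra.adjoin_induction with
    | mem a ha =>
      intro t
      rcases ha with rfl | ha
      · exact Algebra.subset_adjoin (by simp)
      · simp only [Set.mem_singleton_iff] at ha
        subst ha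
        exact Algebra.subset_adjoin (by simp)
    | algebraMap r => intro t; exact (K t).algebraMap_mem r
    | add a b _ _ ia ib => intro t; exact (K t).add_mem (ia t) (ib t)
    | mul a b _ _ ia ib => intro t; exact (K t).mul_mem (ia t) (ib t)
  have hchoice : ∀ s t : ι, ∃ g : ι → F, g ∈ A ∧ (s ≠ t → g s = 0 ∧ g t = 1) := by
    intro s t
    by_cases h : s = t
    · exact ⟨1, A.one_mem, fun hc => absurd h hc⟩
    · obtain ⟨g, hg, h0, h1⟩ := hsep s t h
      exact ⟨g, hg, fun _ => ⟨h0, h1⟩⟩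
  choose g hgA hgval using hchoice
  have hidem : ∀ t : ι, ∃ e : ι → F, e ∈ A ∧ e t = 1 ∧ ∀ s, s ≠ t → e s = 0 := by
    intro t
    refine ⟨∏ s ∈ Finset.univ.erase t, g s t, Subalgebra.prod_mem A fun s _ => hgA s t, ?_, ?_⟩
    · rw [Finset.prod_apply]
      apply Finset.prod_eq_one
      intro s hs
      exact (hgval s t (Finset.ne_of_mem_erase hs)).2
    · intro s hs
      rw [Finset.prod_apply]
      apply Finset.prod_eq_zero (Finset.mem_erase.mpr ⟨hs, Finset.mem_univ s⟩)
      exact (hgval s t hs).1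
  have hdelta : ∀ t : ι, ∀ x ∈ K t, (fun s => if s = t then x else 0) ∈ A := by
    intro t x hx
    obtain ⟨e, heA, het, hes⟩ := hidem t
    induction hx using Algebra.adjoin_induction with
    | mem a ha =>
      have hwv : ∃ w : ι → F, w ∈ A ∧ w t = a := by
        rcases ha with rfl | ha
        · exact ⟨u, Algebra.subset_adjoin (by simp), rfl⟩
        · simp only [Set.mem_singleton_iff] at ha
          subst ha
          exact ⟨v, Algebra.subset_adjoin (by simp), rfl⟩
      obtain ⟨w, hwA, hwt⟩ := hwv
      have h : (fun s => if s = t then a else 0) = e * w := by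
        funext s
        by_cases h : s = t
        · subst h; simp [het, hwt]
        · simp [h, hes s h]
      rw [h]
      exact A.mul_mem heA hwA
    | algebraMap r =>
      have h : (fun s => if s = t then algebraMap (ZMod 2) F r else 0) =
          r • fun s => if s = t then (1 : F) else 0 := by
        funext s
        by_cases h : s = t <;> simp [h, Algebra.smul_def]
      rw [h]
      apply Submodule.smul_mem (Subalgebra.toSubmodule A) r
      have h' : (fun s => if s = t then (1 : F) else 0) = e := by
        funext s
        by_cases h : s = t
        · subst h; simp [het]
        · simp [h, hes s h]
      rw [h']
      exact heA
    | add a b ha hb ia ib =>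
      have h : (fun s => if s = t then a + b else 0) =
          (fun s => if s = t then a else 0) + fun s => if s = t then b else 0 := by
        funext s; by_cases h : s = t <;> simp [h]
      rw [h]; exact A.add_mem ia ib
    | mul a b ha hb ia ib =>
      have h : (fun s => if s = t then a * b else 0) =
          (fun s => if s = t then a else 0) * fun s => if s = t then b else 0 := by
        funext s; by_cases h : s = t <;> simp [h]
      rw [h]; exact A.mul_mem ia ib
  apply le_antisymm
  · intro x hx t _
    exact hup x hx t
  · intro x hx
    have h : x = ∑ t : ι, fun s => if s = t then x t else 0 := by
      funext s
      rw [Finset.sum_apply]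
      simp
    rw [h]
    apply Submodule.sum_mem
    intro t _
    exact hdelta t (x t) (hx t (Set.mem_univ t))

end GeneralLemmas

lemma aux_finrank_pi_submodule {R : Type*} [Field R] {F : Type*} [AddCommGroup F] [Module R F]
    [FiniteDimensional R F] {ι : Type*} [Fintype ι] [DecidableEq ι]
    (p : ι → Submodule R F) :
    finrank R (Submodule.pi Set.univ p) = ∑ t, finrank R (p t) := by
  let f : (∀ t, p t) →ₗ[R] (ι → F) :=
    { toFun := fun x => fun t => (x t : F)
      map_add' := fun x y => rfl
      map_smul' := fun c x => rfl }
  have hinj : Function.Injective f := by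
    intro x y h
    funext t
    exact Subtype.ext (congrFun h t)
  have hrange : LinearMap.range f = Submodule.pi Set.univ p := by
    ext x
    constructor
    · rintro ⟨y, rfl⟩ t _
      exact (y t).2
    · intro hx
      exact ⟨fun t => ⟨x t, hx t (Set.mem_univ t)⟩, rfl⟩
  have e1 := LinearEquiv.ofInjective f hinj
  rw [← hrange, ← (LinearEquiv.finrank_eq e1), Module.finrank_pi_fintype]

def eaF (q5 : ℕ) : Fin 11 → ℕ := ![0,1,1,1,3,0,0,0,q5,1,3]
def ebF (n q3 q5 : ℕ) : Fin 11 → ℕ := ![0,1,n-1,0,0,1,3,q3,2*q5,2,n-3]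
def uF {F : Type*} [Field F] (α γ β : F) : Fin 11 → F := ![1,α,α,α,α^3,1,1,1,β,α,α^3]
def vF {F : Type*} [Field F] (α γ β : F) : Fin 11 → F :=
  ![1,α,α⁻¹,1,1,α,α^3,γ,β^2,α^2,(α^3)⁻¹]
def dimsF (M : ℕ) : Fin 11 → ℕ := ![1,M,M,M,M,M,M,2,4,M,M]


set_option maxHeartbeats 4000000 in
theorem stmt_16 (r : ℕ) (hr : 1 ≤ r) (n : ℕ) (hn : n = 2 ^ (4 * r) - 1) [NeZero n]
    (α : GaloisField 2 (4 * r)) (hα : IsPrimitiveRoot α (2 ^ (4 * r) - 1))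
    (γ β : GaloisField 2 (4 * r)) (hγ : γ = α ^ (n / 3)) (hβ : β = α ^ (n / 5))
    (U : Set (GaloisField 2 (4 * r) × GaloisField 2 (4 * r)))
    (hU : U = {(1, 1), (α, α), (α, α⁻¹), (α, 1), (α ^ 3, 1), (1, α), (1, α ^ 3),
               (1, γ), (β, β ^ 2), (α, α ^ 2), (α ^ 3, (α ^ 3)⁻¹)})
    (K : Submodule (ZMod 2) (ZMod n × ZMod n → ZMod 2))
    (hK : ∀ c : ZMod n × ZMod n → ZMod 2,
      c ∈ K ↔ ∀ uv ∈ U, ∑ p : ZMod n × ZMod n,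
        algebraMap (ZMod 2) (GaloisField 2 (4 * r)) (c p) *
          uv.1 ^ p.1.val * uv.2 ^ p.2.val = 0) :
    Module.finrank (ZMod 2) K = (2 ^ (4 * r) - 1) ^ 2 - 32 * r - 7 := by
  classical
  haveI : Fintype (GaloisField 2 (4 * r)) := Fintype.ofFinite _
  have hM0 : 4 * r ≠ 0 := by omega
  have h16 : (16:ℕ) ≤ 2 ^ (4*r) := by
    calc (16:ℕ) = 2^4 := by norm_num
    _ ≤ 2^(4*r) := Nat.pow_le_pow_right (by norm_num) (by omega)
  have h15 : (15:ℕ) ∣ n := by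
    rw [hn]
    have h : (2:ℕ)^(4*r) = 16^r := by rw [pow_mul]; norm_num
    rw [h]
    simpa using Nat.sub_dvd_pow_sub_pow 16 1 r
  obtain ⟨m, hm⟩ := h15
  have hm1 : 1 ≤ m := by omega
  have h2e : (2:ℕ)^(4*r) = 2 * 2^(4*r-1) := by
    rw [← pow_succ']
    congr 1
    omega
  have hmodd : m % 2 = 1 := by omega
  have hfr : finrank (ZMod 2) (GaloisField 2 (4 * r)) = 4*r := GaloisField.finrank 2 hM0
  have hcard : Fintype.card (GaloisField 2 (4 * r)) = 2^(4*r) := by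
    rw [← Nat.card_eq_fintype_card]; exact GaloisField.card 2 _ hM0
  have hcard1 : Fintype.card (GaloisField 2 (4 * r)) - 1 = n := by omega
  have h2F : (2 : GaloisField 2 (4 * r)) = 0 := by
    exact_mod_cast CharP.cast_eq_zero (GaloisField 2 (4 * r)) 2
  rw [← hn] at hα
  have hα1 : α ^ n = 1 := hα.pow_eq_one
  have hordα : orderOf α = n := (hα.eq_orderOf).symm
  have hα0 : α ≠ 0 := by
    intro h
    rw [h, zero_pow (by omega : n ≠ 0)] at hα1
    exact zero_ne_one hα1
  have hpow1 : ∀ e : ℕ, n ∣ e → α ^ e = 1 := fun e he => (hα.pow_eq_one_iff_dvd e).mpr he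
  have hpowne : ∀ e : ℕ, ¬ (n ∣ e) → α ^ e ≠ 1 :=
    fun e he h => he ((hα.pow_eq_one_iff_dvd e).mp h)
  have hpow0 : ∀ e : ℕ, α ^ e ≠ 0 := fun e => pow_ne_zero e hα0
  have hinv1 : α⁻¹ = α ^ (n - 1) := by
    have h : α * α ^ (n-1) = 1 := by
      rw [← pow_succ', show n-1+1 = n by omega]
      exact hα1
    exact inv_eq_of_mul_eq_one_right h
  have hinv3 : (α^3)⁻¹ = α ^ (n - 3) := by
    have h : α^3 * α ^ (n-3) = 1 := by
      rw [← pow_add, show 3+(n-3) = n by omega]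
      exact hα1
    exact inv_eq_of_mul_eq_one_right h
  -- orders
  have hord3 : orderOf (α^3) = n / 3 := by
    rw [orderOf_pow' α (by norm_num : (3:ℕ) ≠ 0), hordα, Nat.gcd_comm,
      Nat.gcd_eq_left (⟨5*m, by omega⟩ : (3:ℕ) ∣ n)]
  have hordγ : orderOf γ = 3 := by
    rw [hγ, orderOf_pow' α (by omega : n/3 ≠ 0), hordα, Nat.gcd_comm,
      Nat.gcd_eq_left (⟨3, by omega⟩ : n/3 ∣ n), show n/3 = 5*m by omega,
      show n = 5*m*3 by omega, Nat.mul_div_cancel_left 3 (by omega : 0 < 5*m)]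
  have hordβ : orderOf β = 5 := by
    rw [hβ, orderOf_pow' α (by omega : n/5 ≠ 0), hordα, Nat.gcd_comm,
      Nat.gcd_eq_left (⟨5, by omega⟩ : n/5 ∣ n), show n/5 = 3*m by omega,
      show n = 3*m*5 by omega, Nat.mul_div_cancel_left 5 (by omega : 0 < 3*m)]
  have hγ0 : γ ≠ 0 := hγ ▸ hpow0 _
  have hβ0 : β ≠ 0 := hβ ▸ hpow0 _
  have hγ1 : γ ≠ 1 := by
    intro h
    rw [h, orderOf_one] at hordγ
    omega
  have hβ1 : β ≠ 1 := by
    intro h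
    rw [h, orderOf_one] at hordβ
    omega
  have hγ3 : γ ^ 3 = 1 := hordγ ▸ pow_orderOf_eq_one γ
  have hβ5 : β ^ 5 = 1 := hordβ ▸ pow_orderOf_eq_one β
  have hγ2 : γ * γ = 1 + γ := by
    have hfac : (γ - 1) * (γ*γ + γ + 1) = 0 := by linear_combination hγ3
    rcases mul_eq_zero.mp hfac with h | h
    · exact absurd (by linear_combination h) hγ1
    · linear_combination h + (-1 - γ) * h2F
  have hβ4 : β^4 = 1 + β + β^2 + β^3 := by
    have hfac : (β - 1) * (β^4 + β^3 + β^2 + β + 1) = 0 := by linear_combination hβ5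
    rcases mul_eq_zero.mp hfac with h | h
    · exact absurd (by linear_combination h) hβ1
    · linear_combination h + (-1 - β - β^2 - β^3) * h2F
  have hβ2pow : β^2 = α ^ (2*(n/5)) := by
    rw [hβ, ← pow_mul]; congr 1; omega
  have haux : ∀ t : Fin 11, uF α γ β t = α ^ eaF (n / 5) t ∧ vF α γ β t = α ^ ebF n (n / 3) (n / 5) t := by
    intro t
    fin_cases t
    · exact ⟨(pow_zero α).symm, (pow_zero α).symm⟩
    · exact ⟨(pow_one α).symm, (pow_one α).symm⟩
    · exact ⟨(pow_one α).symm, hinv1⟩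
    · exact ⟨(pow_one α).symm, (pow_zero α).symm⟩
    · exact ⟨rfl, (pow_zero α).symm⟩
    · exact ⟨(pow_zero α).symm, (pow_one α).symm⟩
    · exact ⟨(pow_zero α).symm, rfl⟩
    · exact ⟨(pow_zero α).symm, hγ⟩
    · exact ⟨hβ, hβ2pow⟩
    · exact ⟨(pow_one α).symm, rfl⟩
    · exact ⟨rfl, hinv3⟩
  have hval : ∀ (a b : ℕ) (t : Fin 11),
      (uF α γ β ^ a * vF α γ β ^ b) t = α ^ (eaF (n / 5) t * a + ebF n (n / 3) (n / 5) t * b) := by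
    intro a b t
    rw [Pi.mul_apply, Pi.pow_apply, Pi.pow_apply, (haux t).1, (haux t).2,
      ← pow_mul, ← pow_mul, ← pow_add]
  have hwA : ∀ a b : ℕ, uF α γ β ^ a * vF α γ β ^ b ∈ Algebra.adjoin (ZMod 2) ({uF α γ β, vF α γ β} : Set (Fin 11 → GaloisField 2 (4 * r))) := fun a b =>
    mul_mem (pow_mem (Algebra.subset_adjoin (by simp)) a)
      (pow_mem (Algebra.subset_adjoin (by simp)) b)
  have hodd : Odd (Fintype.card (GaloisField 2 (4 * r)) - 1) := by
    rw [hcard1]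
    exact Nat.odd_iff.mpr (by omega)
  have hsep2 : ∀ (s t : Fin 11) (a b : ℕ), n ∣ (eaF (n / 5) s * a + ebF n (n / 3) (n / 5) s * b) →
      ¬ n ∣ (eaF (n / 5) t * a + ebF n (n / 3) (n / 5) t * b) →
      (∃ g ∈ Algebra.adjoin (ZMod 2) ({uF α γ β, vF α γ β} : Set (Fin 11 → GaloisField 2 (4 * r))), g s = 0 ∧ g t = 1) ∧ (∃ g ∈ Algebra.adjoin (ZMod 2) ({uF α γ β, vF α γ β} : Set (Fin 11 → GaloisField 2 (4 * r))), g t = 0 ∧ g s = 1) := by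
    intro s t a b hs ht
    refine aux_sep_pair _ hodd h2F (hwA a b) ?_ ?_ ?_
    · rw [hval a b s]
      exact hpow1 _ hs
    · rw [hval a b t]
      exact hpowne _ ht
    · rw [hval a b t]
      exact hpow0 _
  have sepAll : ∀ s t : Fin 11, s ≠ t → ∃ g ∈ Algebra.adjoin (ZMod 2) ({uF α γ β, vF α γ β} : Set (Fin 11 → GaloisField 2 (4 * r))), g s = 0 ∧ g t = 1 := by
    intro s t hst
    fin_cases s <;> fin_cases t
    · exact absurd rfl hst
    · exact (hsep2 0 1 (1) (0) (by show n ∣ (0) * (1) + (0) * (0); exact ⟨0, by omega⟩) (by show ¬ n ∣ (1) * (1) + (1) * (0); exact aux_not_dvd_of_between n _ 0 (by omega) (by omega))).1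
    · exact (hsep2 0 2 (1) (0) (by show n ∣ (0) * (1) + (0) * (0); exact ⟨0, by omega⟩) (by show ¬ n ∣ (1) * (1) + (n - 1) * (0); exact aux_not_dvd_of_between n _ 0 (by omega) (by omega))).1
    · exact (hsep2 0 3 (1) (0) (by show n ∣ (0) * (1) + (0) * (0); exact ⟨0, by omega⟩) (by show ¬ n ∣ (1) * (1) + (0) * (0); exact aux_not_dvd_of_between n _ 0 (by omega) (by omega))).1
    · exact (hsep2 0 4 (1) (0) (by show n ∣ (0) * (1) + (0) * (0); exact ⟨0, by omega⟩) (by show ¬ n ∣ (3) * (1) + (0) * (0); exact aux_not_dvd_of_between n _ 0 (by omega) (by omega))).1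
    · exact (hsep2 0 5 (0) (1) (by show n ∣ (0) * (0) + (0) * (1); exact ⟨0, by omega⟩) (by show ¬ n ∣ (0) * (0) + (1) * (1); exact aux_not_dvd_of_between n _ 0 (by omega) (by omega))).1
    · exact (hsep2 0 6 (0) (1) (by show n ∣ (0) * (0) + (0) * (1); exact ⟨0, by omega⟩) (by show ¬ n ∣ (0) * (0) + (3) * (1); exact aux_not_dvd_of_between n _ 0 (by omega) (by omega))).1
    · exact (hsep2 0 7 (0) (1) (by show n ∣ (0) * (0) + (0) * (1); exact ⟨0, by omega⟩) (by show ¬ n ∣ (0) * (0) + (n / 3) * (1); exact aux_not_dvd_of_between n _ 0 (by omega) (by omega))).1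
    · exact (hsep2 0 8 (1) (0) (by show n ∣ (0) * (1) + (0) * (0); exact ⟨0, by omega⟩) (by show ¬ n ∣ (n / 5) * (1) + (2 * (n / 5)) * (0); exact aux_not_dvd_of_between n _ 0 (by omega) (by omega))).1
    · exact (hsep2 0 9 (1) (0) (by show n ∣ (0) * (1) + (0) * (0); exact ⟨0, by omega⟩) (by show ¬ n ∣ (1) * (1) + (2) * (0); exact aux_not_dvd_of_between n _ 0 (by omega) (by omega))).1
    · exact (hsep2 0 10 (1) (0) (by show n ∣ (0) * (1) + (0) * (0); exact ⟨0, by omega⟩) (by show ¬ n ∣ (3) * (1) + (n - 3) * (0); exact aux_not_dvd_of_between n _ 0 (by omega) (by omega))).1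
    · exact (hsep2 0 1 (1) (0) (by show n ∣ (0) * (1) + (0) * (0); exact ⟨0, by omega⟩) (by show ¬ n ∣ (1) * (1) + (1) * (0); exact aux_not_dvd_of_between n _ 0 (by omega) (by omega))).2
    · exact absurd rfl hst
    · exact (hsep2 2 1 (1) (1) (by show n ∣ (1) * (1) + (n - 1) * (1); exact ⟨1, by omega⟩) (by show ¬ n ∣ (1) * (1) + (1) * (1); exact aux_not_dvd_of_between n _ 0 (by omega) (by omega))).2
    · exact (hsep2 3 1 (0) (1) (by show n ∣ (1) * (0) + (0) * (1); exact ⟨0, by omega⟩) (by show ¬ n ∣ (1) * (0) + (1) * (1); exact aux_not_dvd_of_between n _ 0 (by omega) (by omega))).2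
    · exact (hsep2 4 1 (0) (1) (by show n ∣ (3) * (0) + (0) * (1); exact ⟨0, by omega⟩) (by show ¬ n ∣ (1) * (0) + (1) * (1); exact aux_not_dvd_of_between n _ 0 (by omega) (by omega))).2
    · exact (hsep2 5 1 (1) (0) (by show n ∣ (0) * (1) + (1) * (0); exact ⟨0, by omega⟩) (by show ¬ n ∣ (1) * (1) + (1) * (0); exact aux_not_dvd_of_between n _ 0 (by omega) (by omega))).2
    · exact (hsep2 6 1 (1) (0) (by show n ∣ (0) * (1) + (3) * (0); exact ⟨0, by omega⟩) (by show ¬ n ∣ (1) * (1) + (1) * (0); exact aux_not_dvd_of_between n _ 0 (by omega) (by omega))).2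
    · exact (hsep2 7 1 (1) (0) (by show n ∣ (0) * (1) + (n / 3) * (0); exact ⟨0, by omega⟩) (by show ¬ n ∣ (1) * (1) + (1) * (0); exact aux_not_dvd_of_between n _ 0 (by omega) (by omega))).2
    · exact (hsep2 8 1 (1) (2) (by show n ∣ (n / 5) * (1) + (2 * (n / 5)) * (2); exact ⟨1, by omega⟩) (by show ¬ n ∣ (1) * (1) + (1) * (2); exact aux_not_dvd_of_between n _ 0 (by omega) (by omega))).2
    · exact (hsep2 9 1 (n - 2) (1) (by show n ∣ (1) * (n - 2) + (2) * (1); exact ⟨1, by omega⟩) (by show ¬ n ∣ (1) * (n - 2) + (1) * (1); exact aux_not_dvd_of_between n _ 0 (by omega) (by omega))).2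
    · exact (hsep2 10 1 (1) (1) (by show n ∣ (3) * (1) + (n - 3) * (1); exact ⟨1, by omega⟩) (by show ¬ n ∣ (1) * (1) + (1) * (1); exact aux_not_dvd_of_between n _ 0 (by omega) (by omega))).2
    · exact (hsep2 0 2 (1) (0) (by show n ∣ (0) * (1) + (0) * (0); exact ⟨0, by omega⟩) (by show ¬ n ∣ (1) * (1) + (n - 1) * (0); exact aux_not_dvd_of_between n _ 0 (by omega) (by omega))).2
    · exact (hsep2 2 1 (1) (1) (by show n ∣ (1) * (1) + (n - 1) * (1); exact ⟨1, by omega⟩) (by show ¬ n ∣ (1) * (1) + (1) * (1); exact aux_not_dvd_of_between n _ 0 (by omega) (by omega))).1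
    · exact absurd rfl hst
    · exact (hsep2 3 2 (0) (1) (by show n ∣ (1) * (0) + (0) * (1); exact ⟨0, by omega⟩) (by show ¬ n ∣ (1) * (0) + (n - 1) * (1); exact aux_not_dvd_of_between n _ 0 (by omega) (by omega))).2
    · exact (hsep2 4 2 (0) (1) (by show n ∣ (3) * (0) + (0) * (1); exact ⟨0, by omega⟩) (by show ¬ n ∣ (1) * (0) + (n - 1) * (1); exact aux_not_dvd_of_between n _ 0 (by omega) (by omega))).2
    · exact (hsep2 5 2 (1) (0) (by show n ∣ (0) * (1) + (1) * (0); exact ⟨0, by omega⟩) (by show ¬ n ∣ (1) * (1) + (n - 1) * (0); exact aux_not_dvd_of_between n _ 0 (by omega) (by omega))).2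
    · exact (hsep2 6 2 (1) (0) (by show n ∣ (0) * (1) + (3) * (0); exact ⟨0, by omega⟩) (by show ¬ n ∣ (1) * (1) + (n - 1) * (0); exact aux_not_dvd_of_between n _ 0 (by omega) (by omega))).2
    · exact (hsep2 7 2 (1) (0) (by show n ∣ (0) * (1) + (n / 3) * (0); exact ⟨0, by omega⟩) (by show ¬ n ∣ (1) * (1) + (n - 1) * (0); exact aux_not_dvd_of_between n _ 0 (by omega) (by omega))).2
    · exact (hsep2 8 2 (1) (2) (by show n ∣ (n / 5) * (1) + (2 * (n / 5)) * (2); exact ⟨1, by omega⟩) (by show ¬ n ∣ (1) * (1) + (n - 1) * (2); exact aux_not_dvd_of_between n _ 1 (by omega) (by omega))).2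
    · exact (hsep2 2 9 (1) (1) (by show n ∣ (1) * (1) + (n - 1) * (1); exact ⟨1, by omega⟩) (by show ¬ n ∣ (1) * (1) + (2) * (1); exact aux_not_dvd_of_between n _ 0 (by omega) (by omega))).1
    · exact (hsep2 10 2 (n / 3) (0) (by show n ∣ (3) * (n / 3) + (n - 3) * (0); exact ⟨1, by omega⟩) (by show ¬ n ∣ (1) * (n / 3) + (n - 1) * (0); exact aux_not_dvd_of_between n _ 0 (by omega) (by omega))).2
    · exact (hsep2 0 3 (1) (0) (by show n ∣ (0) * (1) + (0) * (0); exact ⟨0, by omega⟩) (by show ¬ n ∣ (1) * (1) + (0) * (0); exact aux_not_dvd_of_between n _ 0 (by omega) (by omega))).2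
    · exact (hsep2 3 1 (0) (1) (by show n ∣ (1) * (0) + (0) * (1); exact ⟨0, by omega⟩) (by show ¬ n ∣ (1) * (0) + (1) * (1); exact aux_not_dvd_of_between n _ 0 (by omega) (by omega))).1
    · exact (hsep2 3 2 (0) (1) (by show n ∣ (1) * (0) + (0) * (1); exact ⟨0, by omega⟩) (by show ¬ n ∣ (1) * (0) + (n - 1) * (1); exact aux_not_dvd_of_between n _ 0 (by omega) (by omega))).1
    · exact absurd rfl hst
    · exact (hsep2 4 3 (n / 3) (0) (by show n ∣ (3) * (n / 3) + (0) * (0); exact ⟨1, by omega⟩) (by show ¬ n ∣ (1) * (n / 3) + (0) * (0); exact aux_not_dvd_of_between n _ 0 (by omega) (by omega))).2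
    · exact (hsep2 5 3 (1) (0) (by show n ∣ (0) * (1) + (1) * (0); exact ⟨0, by omega⟩) (by show ¬ n ∣ (1) * (1) + (0) * (0); exact aux_not_dvd_of_between n _ 0 (by omega) (by omega))).2
    · exact (hsep2 6 3 (1) (0) (by show n ∣ (0) * (1) + (3) * (0); exact ⟨0, by omega⟩) (by show ¬ n ∣ (1) * (1) + (0) * (0); exact aux_not_dvd_of_between n _ 0 (by omega) (by omega))).2
    · exact (hsep2 7 3 (1) (0) (by show n ∣ (0) * (1) + (n / 3) * (0); exact ⟨0, by omega⟩) (by show ¬ n ∣ (1) * (1) + (0) * (0); exact aux_not_dvd_of_between n _ 0 (by omega) (by omega))).2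
    · exact (hsep2 8 3 (5) (0) (by show n ∣ (n / 5) * (5) + (2 * (n / 5)) * (0); exact ⟨1, by omega⟩) (by show ¬ n ∣ (1) * (5) + (0) * (0); exact aux_not_dvd_of_between n _ 0 (by omega) (by omega))).2
    · exact (hsep2 3 9 (0) (1) (by show n ∣ (1) * (0) + (0) * (1); exact ⟨0, by omega⟩) (by show ¬ n ∣ (1) * (0) + (2) * (1); exact aux_not_dvd_of_between n _ 0 (by omega) (by omega))).1
    · exact (hsep2 3 10 (0) (1) (by show n ∣ (1) * (0) + (0) * (1); exact ⟨0, by omega⟩) (by show ¬ n ∣ (3) * (0) + (n - 3) * (1); exact aux_not_dvd_of_between n _ 0 (by omega) (by omega))).1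
    · exact (hsep2 0 4 (1) (0) (by show n ∣ (0) * (1) + (0) * (0); exact ⟨0, by omega⟩) (by show ¬ n ∣ (3) * (1) + (0) * (0); exact aux_not_dvd_of_between n _ 0 (by omega) (by omega))).2
    · exact (hsep2 4 1 (0) (1) (by show n ∣ (3) * (0) + (0) * (1); exact ⟨0, by omega⟩) (by show ¬ n ∣ (1) * (0) + (1) * (1); exact aux_not_dvd_of_between n _ 0 (by omega) (by omega))).1
    · exact (hsep2 4 2 (0) (1) (by show n ∣ (3) * (0) + (0) * (1); exact ⟨0, by omega⟩) (by show ¬ n ∣ (1) * (0) + (n - 1) * (1); exact aux_not_dvd_of_between n _ 0 (by omega) (by omega))).1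
    · exact (hsep2 4 3 (n / 3) (0) (by show n ∣ (3) * (n / 3) + (0) * (0); exact ⟨1, by omega⟩) (by show ¬ n ∣ (1) * (n / 3) + (0) * (0); exact aux_not_dvd_of_between n _ 0 (by omega) (by omega))).1
    · exact absurd rfl hst
    · exact (hsep2 5 4 (1) (0) (by show n ∣ (0) * (1) + (1) * (0); exact ⟨0, by omega⟩) (by show ¬ n ∣ (3) * (1) + (0) * (0); exact aux_not_dvd_of_between n _ 0 (by omega) (by omega))).2
    · exact (hsep2 6 4 (1) (0) (by show n ∣ (0) * (1) + (3) * (0); exact ⟨0, by omega⟩) (by show ¬ n ∣ (3) * (1) + (0) * (0); exact aux_not_dvd_of_between n _ 0 (by omega) (by omega))).2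
    · exact (hsep2 7 4 (1) (0) (by show n ∣ (0) * (1) + (n / 3) * (0); exact ⟨0, by omega⟩) (by show ¬ n ∣ (3) * (1) + (0) * (0); exact aux_not_dvd_of_between n _ 0 (by omega) (by omega))).2
    · exact (hsep2 4 8 (0) (1) (by show n ∣ (3) * (0) + (0) * (1); exact ⟨0, by omega⟩) (by show ¬ n ∣ (n / 5) * (0) + (2 * (n / 5)) * (1); exact aux_not_dvd_of_between n _ 0 (by omega) (by omega))).1
    · exact (hsep2 4 9 (0) (1) (by show n ∣ (3) * (0) + (0) * (1); exact ⟨0, by omega⟩) (by show ¬ n ∣ (1) * (0) + (2) * (1); exact aux_not_dvd_of_between n _ 0 (by omega) (by omega))).1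
    · exact (hsep2 4 10 (0) (1) (by show n ∣ (3) * (0) + (0) * (1); exact ⟨0, by omega⟩) (by show ¬ n ∣ (3) * (0) + (n - 3) * (1); exact aux_not_dvd_of_between n _ 0 (by omega) (by omega))).1
    · exact (hsep2 0 5 (0) (1) (by show n ∣ (0) * (0) + (0) * (1); exact ⟨0, by omega⟩) (by show ¬ n ∣ (0) * (0) + (1) * (1); exact aux_not_dvd_of_between n _ 0 (by omega) (by omega))).2
    · exact (hsep2 5 1 (1) (0) (by show n ∣ (0) * (1) + (1) * (0); exact ⟨0, by omega⟩) (by show ¬ n ∣ (1) * (1) + (1) * (0); exact aux_not_dvd_of_between n _ 0 (by omega) (by omega))).1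
    · exact (hsep2 5 2 (1) (0) (by show n ∣ (0) * (1) + (1) * (0); exact ⟨0, by omega⟩) (by show ¬ n ∣ (1) * (1) + (n - 1) * (0); exact aux_not_dvd_of_between n _ 0 (by omega) (by omega))).1
    · exact (hsep2 5 3 (1) (0) (by show n ∣ (0) * (1) + (1) * (0); exact ⟨0, by omega⟩) (by show ¬ n ∣ (1) * (1) + (0) * (0); exact aux_not_dvd_of_between n _ 0 (by omega) (by omega))).1
    · exact (hsep2 5 4 (1) (0) (by show n ∣ (0) * (1) + (1) * (0); exact ⟨0, by omega⟩) (by show ¬ n ∣ (3) * (1) + (0) * (0); exact aux_not_dvd_of_between n _ 0 (by omega) (by omega))).1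
    · exact absurd rfl hst
    · exact (hsep2 6 5 (0) (n / 3) (by show n ∣ (0) * (0) + (3) * (n / 3); exact ⟨1, by omega⟩) (by show ¬ n ∣ (0) * (0) + (1) * (n / 3); exact aux_not_dvd_of_between n _ 0 (by omega) (by omega))).2
    · exact (hsep2 7 5 (0) (3) (by show n ∣ (0) * (0) + (n / 3) * (3); exact ⟨1, by omega⟩) (by show ¬ n ∣ (0) * (0) + (1) * (3); exact aux_not_dvd_of_between n _ 0 (by omega) (by omega))).2
    · exact (hsep2 5 8 (1) (0) (by show n ∣ (0) * (1) + (1) * (0); exact ⟨0, by omega⟩) (by show ¬ n ∣ (n / 5) * (1) + (2 * (n / 5)) * (0); exact aux_not_dvd_of_between n _ 0 (by omega) (by omega))).1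
    · exact (hsep2 5 9 (1) (0) (by show n ∣ (0) * (1) + (1) * (0); exact ⟨0, by omega⟩) (by show ¬ n ∣ (1) * (1) + (2) * (0); exact aux_not_dvd_of_between n _ 0 (by omega) (by omega))).1
    · exact (hsep2 5 10 (1) (0) (by show n ∣ (0) * (1) + (1) * (0); exact ⟨0, by omega⟩) (by show ¬ n ∣ (3) * (1) + (n - 3) * (0); exact aux_not_dvd_of_between n _ 0 (by omega) (by omega))).1
    · exact (hsep2 0 6 (0) (1) (by show n ∣ (0) * (0) + (0) * (1); exact ⟨0, by omega⟩) (by show ¬ n ∣ (0) * (0) + (3) * (1); exact aux_not_dvd_of_between n _ 0 (by omega) (by omega))).2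
    · exact (hsep2 6 1 (1) (0) (by show n ∣ (0) * (1) + (3) * (0); exact ⟨0, by omega⟩) (by show ¬ n ∣ (1) * (1) + (1) * (0); exact aux_not_dvd_of_between n _ 0 (by omega) (by omega))).1
    · exact (hsep2 6 2 (1) (0) (by show n ∣ (0) * (1) + (3) * (0); exact ⟨0, by omega⟩) (by show ¬ n ∣ (1) * (1) + (n - 1) * (0); exact aux_not_dvd_of_between n _ 0 (by omega) (by omega))).1
    · exact (hsep2 6 3 (1) (0) (by show n ∣ (0) * (1) + (3) * (0); exact ⟨0, by omega⟩) (by show ¬ n ∣ (1) * (1) + (0) * (0); exact aux_not_dvd_of_between n _ 0 (by omega) (by omega))).1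
    · exact (hsep2 6 4 (1) (0) (by show n ∣ (0) * (1) + (3) * (0); exact ⟨0, by omega⟩) (by show ¬ n ∣ (3) * (1) + (0) * (0); exact aux_not_dvd_of_between n _ 0 (by omega) (by omega))).1
    · exact (hsep2 6 5 (0) (n / 3) (by show n ∣ (0) * (0) + (3) * (n / 3); exact ⟨1, by omega⟩) (by show ¬ n ∣ (0) * (0) + (1) * (n / 3); exact aux_not_dvd_of_between n _ 0 (by omega) (by omega))).1
    · exact absurd rfl hst
    · exact (hsep2 7 6 (0) (3) (by show n ∣ (0) * (0) + (n / 3) * (3); exact ⟨1, by omega⟩) (by show ¬ n ∣ (0) * (0) + (3) * (3); exact aux_not_dvd_of_between n _ 0 (by omega) (by omega))).2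
    · exact (hsep2 6 8 (1) (0) (by show n ∣ (0) * (1) + (3) * (0); exact ⟨0, by omega⟩) (by show ¬ n ∣ (n / 5) * (1) + (2 * (n / 5)) * (0); exact aux_not_dvd_of_between n _ 0 (by omega) (by omega))).1
    · exact (hsep2 6 9 (1) (0) (by show n ∣ (0) * (1) + (3) * (0); exact ⟨0, by omega⟩) (by show ¬ n ∣ (1) * (1) + (2) * (0); exact aux_not_dvd_of_between n _ 0 (by omega) (by omega))).1
    · exact (hsep2 6 10 (1) (0) (by show n ∣ (0) * (1) + (3) * (0); exact ⟨0, by omega⟩) (by show ¬ n ∣ (3) * (1) + (n - 3) * (0); exact aux_not_dvd_of_between n _ 0 (by omega) (by omega))).1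
    · exact (hsep2 0 7 (0) (1) (by show n ∣ (0) * (0) + (0) * (1); exact ⟨0, by omega⟩) (by show ¬ n ∣ (0) * (0) + (n / 3) * (1); exact aux_not_dvd_of_between n _ 0 (by omega) (by omega))).2
    · exact (hsep2 7 1 (1) (0) (by show n ∣ (0) * (1) + (n / 3) * (0); exact ⟨0, by omega⟩) (by show ¬ n ∣ (1) * (1) + (1) * (0); exact aux_not_dvd_of_between n _ 0 (by omega) (by omega))).1
    · exact (hsep2 7 2 (1) (0) (by show n ∣ (0) * (1) + (n / 3) * (0); exact ⟨0, by omega⟩) (by show ¬ n ∣ (1) * (1) + (n - 1) * (0); exact aux_not_dvd_of_between n _ 0 (by omega) (by omega))).1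
    · exact (hsep2 7 3 (1) (0) (by show n ∣ (0) * (1) + (n / 3) * (0); exact ⟨0, by omega⟩) (by show ¬ n ∣ (1) * (1) + (0) * (0); exact aux_not_dvd_of_between n _ 0 (by omega) (by omega))).1
    · exact (hsep2 7 4 (1) (0) (by show n ∣ (0) * (1) + (n / 3) * (0); exact ⟨0, by omega⟩) (by show ¬ n ∣ (3) * (1) + (0) * (0); exact aux_not_dvd_of_between n _ 0 (by omega) (by omega))).1
    · exact (hsep2 7 5 (0) (3) (by show n ∣ (0) * (0) + (n / 3) * (3); exact ⟨1, by omega⟩) (by show ¬ n ∣ (0) * (0) + (1) * (3); exact aux_not_dvd_of_between n _ 0 (by omega) (by omega))).1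
    · exact (hsep2 7 6 (0) (3) (by show n ∣ (0) * (0) + (n / 3) * (3); exact ⟨1, by omega⟩) (by show ¬ n ∣ (0) * (0) + (3) * (3); exact aux_not_dvd_of_between n _ 0 (by omega) (by omega))).1
    · exact absurd rfl hst
    · exact (hsep2 7 8 (1) (0) (by show n ∣ (0) * (1) + (n / 3) * (0); exact ⟨0, by omega⟩) (by show ¬ n ∣ (n / 5) * (1) + (2 * (n / 5)) * (0); exact aux_not_dvd_of_between n _ 0 (by omega) (by omega))).1
    · exact (hsep2 7 9 (1) (0) (by show n ∣ (0) * (1) + (n / 3) * (0); exact ⟨0, by omega⟩) (by show ¬ n ∣ (1) * (1) + (2) * (0); exact aux_not_dvd_of_between n _ 0 (by omega) (by omega))).1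
    · exact (hsep2 7 10 (1) (0) (by show n ∣ (0) * (1) + (n / 3) * (0); exact ⟨0, by omega⟩) (by show ¬ n ∣ (3) * (1) + (n - 3) * (0); exact aux_not_dvd_of_between n _ 0 (by omega) (by omega))).1
    · exact (hsep2 0 8 (1) (0) (by show n ∣ (0) * (1) + (0) * (0); exact ⟨0, by omega⟩) (by show ¬ n ∣ (n / 5) * (1) + (2 * (n / 5)) * (0); exact aux_not_dvd_of_between n _ 0 (by omega) (by omega))).2
    · exact (hsep2 8 1 (1) (2) (by show n ∣ (n / 5) * (1) + (2 * (n / 5)) * (2); exact ⟨1, by omega⟩) (by show ¬ n ∣ (1) * (1) + (1) * (2); exact aux_not_dvd_of_between n _ 0 (by omega) (by omega))).1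
    · exact (hsep2 8 2 (1) (2) (by show n ∣ (n / 5) * (1) + (2 * (n / 5)) * (2); exact ⟨1, by omega⟩) (by show ¬ n ∣ (1) * (1) + (n - 1) * (2); exact aux_not_dvd_of_between n _ 1 (by omega) (by omega))).1
    · exact (hsep2 8 3 (5) (0) (by show n ∣ (n / 5) * (5) + (2 * (n / 5)) * (0); exact ⟨1, by omega⟩) (by show ¬ n ∣ (1) * (5) + (0) * (0); exact aux_not_dvd_of_between n _ 0 (by omega) (by omega))).1
    · exact (hsep2 4 8 (0) (1) (by show n ∣ (3) * (0) + (0) * (1); exact ⟨0, by omega⟩) (by show ¬ n ∣ (n / 5) * (0) + (2 * (n / 5)) * (1); exact aux_not_dvd_of_between n _ 0 (by omega) (by omega))).2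
    · exact (hsep2 5 8 (1) (0) (by show n ∣ (0) * (1) + (1) * (0); exact ⟨0, by omega⟩) (by show ¬ n ∣ (n / 5) * (1) + (2 * (n / 5)) * (0); exact aux_not_dvd_of_between n _ 0 (by omega) (by omega))).2
    · exact (hsep2 6 8 (1) (0) (by show n ∣ (0) * (1) + (3) * (0); exact ⟨0, by omega⟩) (by show ¬ n ∣ (n / 5) * (1) + (2 * (n / 5)) * (0); exact aux_not_dvd_of_between n _ 0 (by omega) (by omega))).2
    · exact (hsep2 7 8 (1) (0) (by show n ∣ (0) * (1) + (n / 3) * (0); exact ⟨0, by omega⟩) (by show ¬ n ∣ (n / 5) * (1) + (2 * (n / 5)) * (0); exact aux_not_dvd_of_between n _ 0 (by omega) (by omega))).2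
    · exact absurd rfl hst
    · exact (hsep2 8 9 (5) (0) (by show n ∣ (n / 5) * (5) + (2 * (n / 5)) * (0); exact ⟨1, by omega⟩) (by show ¬ n ∣ (1) * (5) + (2) * (0); exact aux_not_dvd_of_between n _ 0 (by omega) (by omega))).1
    · exact (hsep2 10 8 (1) (1) (by show n ∣ (3) * (1) + (n - 3) * (1); exact ⟨1, by omega⟩) (by show ¬ n ∣ (n / 5) * (1) + (2 * (n / 5)) * (1); exact aux_not_dvd_of_between n _ 0 (by omega) (by omega))).2
    · exact (hsep2 0 9 (1) (0) (by show n ∣ (0) * (1) + (0) * (0); exact ⟨0, by omega⟩) (by show ¬ n ∣ (1) * (1) + (2) * (0); exact aux_not_dvd_of_between n _ 0 (by omega) (by omega))).2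
    · exact (hsep2 9 1 (n - 2) (1) (by show n ∣ (1) * (n - 2) + (2) * (1); exact ⟨1, by omega⟩) (by show ¬ n ∣ (1) * (n - 2) + (1) * (1); exact aux_not_dvd_of_between n _ 0 (by omega) (by omega))).1
    · exact (hsep2 2 9 (1) (1) (by show n ∣ (1) * (1) + (n - 1) * (1); exact ⟨1, by omega⟩) (by show ¬ n ∣ (1) * (1) + (2) * (1); exact aux_not_dvd_of_between n _ 0 (by omega) (by omega))).2
    · exact (hsep2 3 9 (0) (1) (by show n ∣ (1) * (0) + (0) * (1); exact ⟨0, by omega⟩) (by show ¬ n ∣ (1) * (0) + (2) * (1); exact aux_not_dvd_of_between n _ 0 (by omega) (by omega))).2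
    · exact (hsep2 4 9 (0) (1) (by show n ∣ (3) * (0) + (0) * (1); exact ⟨0, by omega⟩) (by show ¬ n ∣ (1) * (0) + (2) * (1); exact aux_not_dvd_of_between n _ 0 (by omega) (by omega))).2
    · exact (hsep2 5 9 (1) (0) (by show n ∣ (0) * (1) + (1) * (0); exact ⟨0, by omega⟩) (by show ¬ n ∣ (1) * (1) + (2) * (0); exact aux_not_dvd_of_between n _ 0 (by omega) (by omega))).2
    · exact (hsep2 6 9 (1) (0) (by show n ∣ (0) * (1) + (3) * (0); exact ⟨0, by omega⟩) (by show ¬ n ∣ (1) * (1) + (2) * (0); exact aux_not_dvd_of_between n _ 0 (by omega) (by omega))).2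
    · exact (hsep2 7 9 (1) (0) (by show n ∣ (0) * (1) + (n / 3) * (0); exact ⟨0, by omega⟩) (by show ¬ n ∣ (1) * (1) + (2) * (0); exact aux_not_dvd_of_between n _ 0 (by omega) (by omega))).2
    · exact (hsep2 8 9 (5) (0) (by show n ∣ (n / 5) * (5) + (2 * (n / 5)) * (0); exact ⟨1, by omega⟩) (by show ¬ n ∣ (1) * (5) + (2) * (0); exact aux_not_dvd_of_between n _ 0 (by omega) (by omega))).2
    · exact absurd rfl hst
    · exact (hsep2 10 9 (1) (1) (by show n ∣ (3) * (1) + (n - 3) * (1); exact ⟨1, by omega⟩) (by show ¬ n ∣ (1) * (1) + (2) * (1); exact aux_not_dvd_of_between n _ 0 (by omega) (by omega))).2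
    · exact (hsep2 0 10 (1) (0) (by show n ∣ (0) * (1) + (0) * (0); exact ⟨0, by omega⟩) (by show ¬ n ∣ (3) * (1) + (n - 3) * (0); exact aux_not_dvd_of_between n _ 0 (by omega) (by omega))).2
    · exact (hsep2 10 1 (1) (1) (by show n ∣ (3) * (1) + (n - 3) * (1); exact ⟨1, by omega⟩) (by show ¬ n ∣ (1) * (1) + (1) * (1); exact aux_not_dvd_of_between n _ 0 (by omega) (by omega))).1
    · exact (hsep2 10 2 (n / 3) (0) (by show n ∣ (3) * (n / 3) + (n - 3) * (0); exact ⟨1, by omega⟩) (by show ¬ n ∣ (1) * (n / 3) + (n - 1) * (0); exact aux_not_dvd_of_between n _ 0 (by omega) (by omega))).1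
    · exact (hsep2 3 10 (0) (1) (by show n ∣ (1) * (0) + (0) * (1); exact ⟨0, by omega⟩) (by show ¬ n ∣ (3) * (0) + (n - 3) * (1); exact aux_not_dvd_of_between n _ 0 (by omega) (by omega))).2
    · exact (hsep2 4 10 (0) (1) (by show n ∣ (3) * (0) + (0) * (1); exact ⟨0, by omega⟩) (by show ¬ n ∣ (3) * (0) + (n - 3) * (1); exact aux_not_dvd_of_between n _ 0 (by omega) (by omega))).2
    · exact (hsep2 5 10 (1) (0) (by show n ∣ (0) * (1) + (1) * (0); exact ⟨0, by omega⟩) (by show ¬ n ∣ (3) * (1) + (n - 3) * (0); exact aux_not_dvd_of_between n _ 0 (by omega) (by omega))).2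
    · exact (hsep2 6 10 (1) (0) (by show n ∣ (0) * (1) + (3) * (0); exact ⟨0, by omega⟩) (by show ¬ n ∣ (3) * (1) + (n - 3) * (0); exact aux_not_dvd_of_between n _ 0 (by omega) (by omega))).2
    · exact (hsep2 7 10 (1) (0) (by show n ∣ (0) * (1) + (n / 3) * (0); exact ⟨0, by omega⟩) (by show ¬ n ∣ (3) * (1) + (n - 3) * (0); exact aux_not_dvd_of_between n _ 0 (by omega) (by omega))).2
    · exact (hsep2 10 8 (1) (1) (by show n ∣ (3) * (1) + (n - 3) * (1); exact ⟨1, by omega⟩) (by show ¬ n ∣ (n / 5) * (1) + (2 * (n / 5)) * (1); exact aux_not_dvd_of_between n _ 0 (by omega) (by omega))).1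
    · exact (hsep2 10 9 (1) (1) (by show n ∣ (3) * (1) + (n - 3) * (1); exact ⟨1, by omega⟩) (by show ¬ n ∣ (1) * (1) + (2) * (1); exact aux_not_dvd_of_between n _ 0 (by omega) (by omega))).1
    · exact absurd rfl hst
  have hUiff : ∀ P : (GaloisField 2 (4 * r)) × (GaloisField 2 (4 * r)) → Prop,
      (∀ uv ∈ U, P uv) ↔ (∀ t : Fin 11, P (uF α γ β t, vF α γ β t)) := by
    intro P
    constructor
    · intro h t
      fin_cases t
      · exact h _ (by rw [hU]; exact Set.mem_insert _ _)
      · exact h _ (by rw [hU]; exact Set.mem_insert_of_mem _ (Set.mem_insert _ _))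
      · exact h _ (by rw [hU]; exact Set.mem_insert_of_mem _ (Set.mem_insert_of_mem _ (Set.mem_insert _ _)))
      · exact h _ (by rw [hU]; exact Set.mem_insert_of_mem _ (Set.mem_insert_of_mem _ (Set.mem_insert_of_mem _ (Set.mem_insert _ _))))
      · exact h _ (by rw [hU]; exact Set.mem_insert_of_mem _ (Set.mem_insert_of_mem _ (Set.mem_insert_of_mem _ (Set.mem_insert_of_mem _ (Set.mem_insert _ _)))))
      · exact h _ (by rw [hU]; exact Set.mem_insert_of_mem _ (Set.mem_insert_of_mem _ (Set.mem_insert_of_mem _ (Set.mem_insert_of_mem _ (Set.mem_insert_of_mem _ (Set.mem_insert _ _))))))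
      · exact h _ (by rw [hU]; exact Set.mem_insert_of_mem _ (Set.mem_insert_of_mem _ (Set.mem_insert_of_mem _ (Set.mem_insert_of_mem _ (Set.mem_insert_of_mem _ (Set.mem_insert_of_mem _ (Set.mem_insert _ _)))))))
      · exact h _ (by rw [hU]; exact Set.mem_insert_of_mem _ (Set.mem_insert_of_mem _ (Set.mem_insert_of_mem _ (Set.mem_insert_of_mem _ (Set.mem_insert_of_mem _ (Set.mem_insert_of_mem _ (Set.mem_insert_of_mem _ (Set.mem_insert _ _))))))))
      · exact h _ (by rw [hU]; exact Set.mem_insert_of_mem _ (Set.mem_insert_of_mem _ (Set.mem_insert_of_mem _ (Set.mem_insert_of_mem _ (Set.mem_insert_of_mem _ (Set.mem_insert_of_mem _ (Set.mem_insert_of_mem _ (Set.mem_insert_of_mem _ (Set.mem_insert _ _)))))))))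
      · exact h _ (by rw [hU]; exact Set.mem_insert_of_mem _ (Set.mem_insert_of_mem _ (Set.mem_insert_of_mem _ (Set.mem_insert_of_mem _ (Set.mem_insert_of_mem _ (Set.mem_insert_of_mem _ (Set.mem_insert_of_mem _ (Set.mem_insert_of_mem _ (Set.mem_insert_of_mem _ (Set.mem_insert _ _))))))))))
      · exact h _ (by rw [hU]; exact Set.mem_insert_of_mem _ (Set.mem_insert_of_mem _ (Set.mem_insert_of_mem _ (Set.mem_insert_of_mem _ (Set.mem_insert_of_mem _ (Set.mem_insert_of_mem _ (Set.mem_insert_of_mem _ (Set.mem_insert_of_mem _ (Set.mem_insert_of_mem _ (Set.mem_insert_of_mem _ (Set.mem_singleton _)))))))))))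
    · intro h uv huv
      rw [hU] at huv
      simp only [Set.mem_insert_iff, Set.mem_singleton_iff] at huv
      rcases huv with rfl|rfl|rfl|rfl|rfl|rfl|rfl|rfl|rfl|rfl|rfl
      · exact h 0
      · exact h 1
      · exact h 2
      · exact h 3
      · exact h 4
      · exact h 5
      · exact h 6
      · exact h 7
      · exact h 8
      · exact h 9
      · exact h 10
  set φl := Fintype.linearCombination (ZMod 2)
    (fun p : ZMod n × ZMod n => fun t : Fin 11 => uF α γ β t ^ p.1.val * vF α γ β t ^ p.2.val)
    with hφl
  have hphi : ∀ (c : ZMod n × ZMod n → ZMod 2) (t : Fin 11), φl c t =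
      ∑ p : ZMod n × ZMod n, algebraMap (ZMod 2) (GaloisField 2 (4 * r)) (c p) *
        uF α γ β t ^ p.1.val * vF α γ β t ^ p.2.val := by
    intro c t
    rw [hφl, Fintype.linearCombination_apply, Finset.sum_apply]
    refine Finset.sum_congr rfl (fun p _ => ?_)
    simp only [Pi.smul_apply, Algebra.smul_def, mul_assoc]
  have hKker : K = LinearMap.ker φl := by
    ext c
    rw [hK c, LinearMap.mem_ker]
    constructor
    · intro h
      have h2 := (hUiff _).mp h
      funext t
      rw [hphi c t]
      exact h2 t
    · intro h
      apply (hUiff (fun uv => ∑ p : ZMod n × ZMod n,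
        algebraMap (ZMod 2) (GaloisField 2 (4 * r)) (c p) * uv.1 ^ p.1.val * uv.2 ^ p.2.val = 0)).mpr
      intro t
      have h2 := congrFun h t
      rwa [hphi c t] at h2
  have hn1 : 1 < n := by omega
  have hun : ∀ t, (uF α γ β t) ^ n = 1 := by
    intro t
    rw [(haux t).1, ← pow_mul]
    exact hpow1 _ (dvd_mul_left n _)
  have hvn : ∀ t, (vF α γ β t) ^ n = 1 := by
    intro t
    rw [(haux t).2, ← pow_mul]
    exact hpow1 _ (dvd_mul_left n _)
  have hspan := aux_adjoin_eq_span_col n hn1 (uF α γ β) (vF α γ β) hun hvn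
  have hpi := aux_pi_adj (uF α γ β) (vF α γ β) sepAll
  have hordfull : orderOf α = 2 ^ (4*r) - 1 := by rw [hordα, hn]
  have hord3' : orderOf (α^3) = (2 ^ (4*r) - 1) / 3 := by rw [hord3, hn]
  have h3dvd : (3:ℕ) ∣ 2 ^ (4*r) - 1 := ⟨5*m, by omega⟩
  haveI : FiniteDimensional (ZMod 2) (GaloisField 2 (4 * r)) := Module.Finite.of_finite
  have hγspan : ∀ k : ℕ, γ ^ k ∈ span (ZMod 2) (Set.range (fun i : Fin 2 => γ ^ (i:ℕ))) := by
    intro k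
    have hk3 : γ ^ k = γ ^ (k % 3) := by
      conv_lhs => rw [← Nat.mod_add_div k 3]
      rw [pow_add, pow_mul, hγ3, one_pow, mul_one]
    have h3 : k % 3 = 0 ∨ k % 3 = 1 ∨ k % 3 = 2 := by omega
    rcases h3 with h|h|h <;> rw [hk3, h]
    · exact Submodule.subset_span ⟨0, rfl⟩
    · exact Submodule.subset_span ⟨1, rfl⟩
    · rw [show γ^2 = 1 + γ by rw [pow_two]; exact hγ2]
      exact add_mem (Submodule.subset_span ⟨0, pow_zero γ⟩)
        (Submodule.subset_span ⟨1, pow_one γ⟩)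
  have hβspan : ∀ k : ℕ, β ^ k ∈ span (ZMod 2) (Set.range (fun i : Fin 4 => β ^ (i:ℕ))) := by
    intro k
    have hk5 : β ^ k = β ^ (k % 5) := by
      conv_lhs => rw [← Nat.mod_add_div k 5]
      rw [pow_add, pow_mul, hβ5, one_pow, mul_one]
    have h5 : k % 5 = 0 ∨ k % 5 = 1 ∨ k % 5 = 2 ∨ k % 5 = 3 ∨ k % 5 = 4 := by omega
    rcases h5 with h|h|h|h|h <;> rw [hk5, h]
    · exact Submodule.subset_span ⟨0, rfl⟩
    · exact Submodule.subset_span ⟨1, rfl⟩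
    · exact Submodule.subset_span ⟨2, rfl⟩
    · exact Submodule.subset_span ⟨3, rfl⟩
    · rw [hβ4]
      exact add_mem (add_mem (add_mem (Submodule.subset_span ⟨0, pow_zero β⟩)
        (Submodule.subset_span ⟨1, pow_one β⟩)) (Submodule.subset_span ⟨2, rfl⟩))
        (Submodule.subset_span ⟨3, rfl⟩)
  have hdimAll : ∀ t : Fin 11, finrank (ZMod 2)
      (Algebra.adjoin (ZMod 2) ({uF α γ β t, vF α γ β t} : Set (GaloisField 2 (4 * r)))) = dimsF (4*r) t := by
    intro t
    fin_cases t
    · show finrank (ZMod 2) (Algebra.adjoin (ZMod 2) ({(1:GaloisField 2 (4 * r)), 1} : Set (GaloisField 2 (4 * r)))) = 1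
      have hset : ({(1:GaloisField 2 (4 * r)), 1} : Set (GaloisField 2 (4 * r))) = {1} := by simp
      rw [hset]
      have hbot : Algebra.adjoin (ZMod 2) ({(1:GaloisField 2 (4 * r))} : Set (GaloisField 2 (4 * r))) = ⊥ :=
        le_antisymm (Algebra.adjoin_le (by simp [Set.singleton_subset_iff])) bot_le
      rw [hbot]
      exact Subalgebra.finrank_bot
    · show finrank (ZMod 2) (Algebra.adjoin (ZMod 2) ({α, α} : Set (GaloisField 2 (4 * r)))) = 4*r
      exact aux_finrank_eq_of_orderOf_full hfr h16 _ α (Algebra.subset_adjoin (by simp)) hα0 hordfull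
    · show finrank (ZMod 2) (Algebra.adjoin (ZMod 2) ({α, α⁻¹} : Set (GaloisField 2 (4 * r)))) = 4*r
      exact aux_finrank_eq_of_orderOf_full hfr h16 _ α (Algebra.subset_adjoin (by simp)) hα0 hordfull
    · show finrank (ZMod 2) (Algebra.adjoin (ZMod 2) ({α, (1:GaloisField 2 (4 * r))} : Set (GaloisField 2 (4 * r)))) = 4*r
      exact aux_finrank_eq_of_orderOf_full hfr h16 _ α (Algebra.subset_adjoin (by simp)) hα0 hordfull
    · show finrank (ZMod 2) (Algebra.adjoin (ZMod 2) ({α^3, (1:GaloisField 2 (4 * r))} : Set (GaloisField 2 (4 * r)))) = 4*r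
      exact aux_finrank_eq_of_orderOf_third hfr h16 _ (α^3) (Algebra.subset_adjoin (by simp))
        (pow_ne_zero 3 hα0) hord3' h3dvd
    · show finrank (ZMod 2) (Algebra.adjoin (ZMod 2) ({(1:GaloisField 2 (4 * r)), α} : Set (GaloisField 2 (4 * r)))) = 4*r
      exact aux_finrank_eq_of_orderOf_full hfr h16 _ α (Algebra.subset_adjoin (by simp)) hα0 hordfull
    · show finrank (ZMod 2) (Algebra.adjoin (ZMod 2) ({(1:GaloisField 2 (4 * r)), α^3} : Set (GaloisField 2 (4 * r)))) = 4*r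
      exact aux_finrank_eq_of_orderOf_third hfr h16 _ (α^3) (Algebra.subset_adjoin (by simp))
        (pow_ne_zero 3 hα0) hord3' h3dvd
    · show finrank (ZMod 2) (Algebra.adjoin (ZMod 2) ({(1:GaloisField 2 (4 * r)), γ} : Set (GaloisField 2 (4 * r)))) = 2
      apply le_antisymm
      · apply aux_finrank_adjoin_le (fun i : Fin 2 => γ ^ (i:ℕ))
        · intro i j
          rw [← pow_add]
          exact hγspan _
        · exact ⟨0, pow_zero γ⟩
        · intro x hx
          simp only [Set.mem_insert_iff, Set.mem_singleton_iff] at hx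
          rcases hx with hx | hx <;> rw [hx]
          · exact Submodule.subset_span ⟨0, pow_zero γ⟩
          · exact Submodule.subset_span ⟨1, pow_one γ⟩
      · exact aux_finrank_ge_two_of_orderOf_three _ γ (Algebra.subset_adjoin (by simp)) hγ0 hordγ
    · show finrank (ZMod 2) (Algebra.adjoin (ZMod 2) ({β, β^2} : Set (GaloisField 2 (4 * r)))) = 4
      apply le_antisymm
      · apply aux_finrank_adjoin_le (fun i : Fin 4 => β ^ (i:ℕ))
        · intro i j
          rw [← pow_add]
          exact hβspan _
        · exact ⟨0, pow_zero β⟩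
        · intro x hx
          simp only [Set.mem_insert_iff, Set.mem_singleton_iff] at hx
          rcases hx with hx | hx <;> rw [hx]
          · exact Submodule.subset_span ⟨1, pow_one β⟩
          · exact Submodule.subset_span ⟨2, rfl⟩
      · exact aux_finrank_ge_four_of_orderOf_five _ β (Algebra.subset_adjoin (by simp)) hβ0 hordβ
    · show finrank (ZMod 2) (Algebra.adjoin (ZMod 2) ({α, α^2} : Set (GaloisField 2 (4 * r)))) = 4*r
      exact aux_finrank_eq_of_orderOf_full hfr h16 _ α (Algebra.subset_adjoin (by simp)) hα0 hordfull
    · show finrank (ZMod 2) (Algebra.adjoin (ZMod 2) ({α^3, (α^3)⁻¹} : Set (GaloisField 2 (4 * r)))) = 4*r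
      exact aux_finrank_eq_of_orderOf_third hfr h16 _ (α^3) (Algebra.subset_adjoin (by simp))
        (pow_ne_zero 3 hα0) hord3' h3dvd
  have hsum : ∑ t : Fin 11, finrank (ZMod 2)
      (Subalgebra.toSubmodule (Algebra.adjoin (ZMod 2) ({uF α γ β t, vF α γ β t} : Set (GaloisField 2 (4 * r))))) =
      32*r + 7 := by
    have hstep : ∀ t : Fin 11, finrank (ZMod 2)
        (Subalgebra.toSubmodule (Algebra.adjoin (ZMod 2) ({uF α γ β t, vF α γ β t} : Set (GaloisField 2 (4 * r))))) =
        dimsF (4*r) t := fun t => hdimAll t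
    rw [Finset.sum_congr rfl (fun t _ => hstep t)]
    simp [dimsF, Fin.sum_univ_succ]
    ring
  have hrangeval : finrank (ZMod 2) (LinearMap.range φl) = 32*r + 7 := by
    rw [hφl, Fintype.range_linearCombination, ← hspan, hpi, aux_finrank_pi_submodule]
    exact hsum
  have hdom : finrank (ZMod 2) ((ZMod n × ZMod n) → ZMod 2) = n * n := by
    rw [Module.finrank_pi, Fintype.card_prod, ZMod.card]
  have hrn := LinearMap.finrank_range_add_finrank_ker φl
  rw [hrangeval, hdom] at hrn
  rw [hKker, pow_two, ← hn]
  obtain ⟨N2, hN2⟩ : ∃ N2, n * n = N2 := ⟨_, rfl⟩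
  rw [hN2] at hrn ⊢
  clear hN2
  omega
end

section
/- Let r ≥ 1, n = 2^{4r} − 1, and let α be a primitive element of GF(2^{4r}); set γ = α^{n/3} and β = α^{n/5}. Let U = {(1,1), (α,α), (α,α^{−1}), (α,1), (α³,1), (1,α), (1,α³), (1,γ), (β,β²), (α,α²), (α³,α^{−3})} ⊆ GF(2^{4r})², and let C_U = {c : (ℤ/nℤ)² → F₂ : Σ_{i,j=0}^{n−1} c(i,j)·u^i v^j = 0 for every (u,v) ∈ U}, with bits lifted to GF(2^{4r}). Then every nonzero c ∈ C_U has Hamming weight at least 6. -/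
/-- The Hamming weight of a binary vector. -/
def hWeight {V : Type*} [Fintype V] (x : V → ZMod 2) : ℕ :=
  (Finset.univ.filter fun j => x j ≠ 0).card

section aux

variable {K : Type*} [Field K] [CharP K 2]

lemma char2_eq_of_add_eq_zero {a b : K} (h : a + b = 0) : a = b := by
  have h2 : (2 : K) = 0 := CharTwo.two_eq_zero
  linear_combination h - b * h2

lemma char2_pair4 (a b c d : K) (h1 : a + b + c + d = 0)
    (h3 : a ^ 3 + b ^ 3 + c ^ 3 + d ^ 3 = 0) :
    (a = b ∧ c = d) ∨ (a = c ∧ b = d) ∨ (a = d ∧ b = c) := by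
  have h2 : (2 : K) = 0 := CharTwo.two_eq_zero
  have hd : d = a + b + c := by linear_combination h1 - (a + b + c) * h2
  subst hd
  have hprod : (a + b) * (a + c) * (b + c) = 0 := by
    linear_combination h3 - (a^2*b + a^2*c + a*b^2 + b^2*c + a*c^2 + b*c^2
      + a^3 + b^3 + c^3 + 2*a*b*c) * h2
  rcases mul_eq_zero.mp hprod with hq | hbc
  · rcases mul_eq_zero.mp hq with hab | hac
    · left
      have hab' : a = b := char2_eq_of_add_eq_zero hab
      refine ⟨hab', ?_⟩
      have : c + (a + b + c) = 0 := by linear_combination h1 - hab' - b * h2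
      exact char2_eq_of_add_eq_zero this
    · right; left
      have hac' : a = c := char2_eq_of_add_eq_zero hac
      refine ⟨hac', ?_⟩
      have : b + (a + b + c) = 0 := by linear_combination h1 - hac' - c * h2
      exact char2_eq_of_add_eq_zero this
  · right; right
    have hbc' : b = c := char2_eq_of_add_eq_zero hbc
    refine ⟨?_, hbc'⟩
    have : a + (a + b + c) = 0 := by linear_combination h1 - hbc' - c * h2
    exact char2_eq_of_add_eq_zero this

end aux

set_option maxHeartbeats 1600000 in
theorem stmt_17 (r : ℕ) (hr : 1 ≤ r) (n : ℕ) (hn : n = 2 ^ (4 * r) - 1) [NeZero n]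
    (α : GaloisField 2 (4 * r)) (hα : IsPrimitiveRoot α (2 ^ (4 * r) - 1))
    (γ β : GaloisField 2 (4 * r)) (hγ : γ = α ^ (n / 3)) (hβ : β = α ^ (n / 5))
    (U : Set (GaloisField 2 (4 * r) × GaloisField 2 (4 * r)))
    (hU : U = {(1, 1), (α, α), (α, α⁻¹), (α, 1), (α ^ 3, 1), (1, α), (1, α ^ 3),
               (1, γ), (β, β ^ 2), (α, α ^ 2), (α ^ 3, (α ^ 3)⁻¹)}) :
    ∀ c : ZMod n × ZMod n → ZMod 2,
      (∀ uv ∈ U, ∑ p : ZMod n × ZMod n,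
          algebraMap (ZMod 2) (GaloisField 2 (4 * r)) (c p) *
            uv.1 ^ p.1.val * uv.2 ^ p.2.val = 0) →
      c ≠ 0 → 6 ≤ hWeight c := by
  intro c hc hc0
  by_contra hlt
  push_neg at hlt
  obtain ⟨S, hS⟩ : ∃ S : Finset (ZMod n × ZMod n),
      S = Finset.univ.filter (fun p => c p ≠ 0) := ⟨_, rfl⟩
  have hwS : hWeight c = S.card := by rw [hS]; rfl
  have hα' : IsPrimitiveRoot α n := hn ▸ hα
  have inj : ∀ x y : ZMod n, α ^ x.val = α ^ y.val → x = y := by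
    intro x y h
    exact ZMod.val_injective n (hα'.pow_inj (ZMod.val_lt x) (ZMod.val_lt y) h)
  have dup : ∀ p q : ZMod n × ZMod n, p ≠ q →
      α ^ p.1.val = α ^ q.1.val → α ^ p.2.val = α ^ q.2.val → False := by
    intro p q hne h1 h2
    exact hne (Prod.ext (inj _ _ h1) (inj _ _ h2))
  -- the checks restricted to the support
  have hone : ∀ p ∈ S, (algebraMap (ZMod 2) (GaloisField 2 (4 * r))) (c p) = 1 := by
    intro p hp
    rw [hS, Finset.mem_filter] at hp
    have h2 : ∀ a : ZMod 2, a ≠ 0 → a = 1 := by decide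
    rw [h2 _ hp.2, map_one]
  have key : ∀ u v : GaloisField 2 (4 * r), (u, v) ∈ U → ∑ p ∈ S, u ^ p.1.val * v ^ p.2.val = 0 := by
    intro u v huv
    have h := hc (u, v) huv
    have e1 : ∑ p ∈ S, (algebraMap (ZMod 2) (GaloisField 2 (4 * r))) (c p) * u ^ p.1.val * v ^ p.2.val
        = ∑ p : ZMod n × ZMod n, (algebraMap (ZMod 2) (GaloisField 2 (4 * r))) (c p) * u ^ p.1.val * v ^ p.2.val := by
      rw [hS]
      apply Finset.sum_filter_of_ne
      intro x _ hx h0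
      apply hx
      rw [h0, map_zero, zero_mul, zero_mul]
    have e2 : ∑ p ∈ S, u ^ p.1.val * v ^ p.2.val
        = ∑ p ∈ S, (algebraMap (ZMod 2) (GaloisField 2 (4 * r))) (c p) * u ^ p.1.val * v ^ p.2.val := by
      refine Finset.sum_congr rfl fun p hp => ?_
      rw [hone p hp, one_mul]
    rw [e2, e1]
    exact h
  -- membership facts
  have m11 : ((1 : GaloisField 2 (4 * r)), (1 : GaloisField 2 (4 * r))) ∈ U := by rw [hU]; simp
  have mα1 : (α, (1 : GaloisField 2 (4 * r))) ∈ U := by rw [hU]; simp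
  have mα31 : (α ^ 3, (1 : GaloisField 2 (4 * r))) ∈ U := by rw [hU]; simp
  have m1α : ((1 : GaloisField 2 (4 * r)), α) ∈ U := by rw [hU]; simp
  have m1α3 : ((1 : GaloisField 2 (4 * r)), α ^ 3) ∈ U := by rw [hU]; simp
  have mαα : (α, α) ∈ U := by rw [hU]; simp
  -- parity: the weight is even
  have hpar : 2 ∣ S.card := by
    have h := key 1 1 m11
    simp only [one_pow, one_mul, Finset.sum_const, nsmul_eq_mul, mul_one] at h
    exact (CharP.cast_eq_zero_iff (GaloisField 2 (4 * r)) 2 S.card).mp h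
  have hpos : S.card ≠ 0 := by
    intro h0
    apply hc0
    funext p
    by_contra hp
    have : p ∈ S := by rw [hS, Finset.mem_filter]; exact ⟨Finset.mem_univ p, hp⟩
    rw [Finset.card_eq_zero.mp h0] at this
    exact absurd this (Finset.notMem_empty p)
  have hle : S.card ≤ 5 := by omega
  have hcard : S.card = 2 ∨ S.card = 4 := by omega
  rcases hcard with hcard | hcard
  · -- weight 2
    obtain ⟨p, q, hpq, hSeq⟩ := Finset.card_eq_two.mp hcard
    have h1 := key α 1 mα1
    rw [hSeq, Finset.sum_pair hpq] at h1
    simp only [one_pow, mul_one] at h1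
    have h2 := key 1 α m1α
    rw [hSeq, Finset.sum_pair hpq] at h2
    simp only [one_pow, one_mul] at h2
    exact dup p q hpq (char2_eq_of_add_eq_zero h1) (char2_eq_of_add_eq_zero h2)
  · -- weight 4
    obtain ⟨p1, hp1⟩ := Finset.card_pos.mp (by omega : 0 < S.card)
    have herase3 : (S.erase p1).card = 3 := by
      rw [Finset.card_erase_of_mem hp1, hcard]
    obtain ⟨p2, p3, p4, h23, h24, h34, herase⟩ := Finset.card_eq_three.mp herase3
    have h12 : p1 ≠ p2 := by
      have : p2 ∈ S.erase p1 := by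
        rw [herase, Finset.mem_insert]
        exact Or.inl rfl
      exact fun h => (Finset.ne_of_mem_erase this) h.symm
    have h13 : p1 ≠ p3 := by
      have : p3 ∈ S.erase p1 := by
        rw [herase, Finset.mem_insert, Finset.mem_insert]
        exact Or.inr (Or.inl rfl)
      exact fun h => (Finset.ne_of_mem_erase this) h.symm
    have h14 : p1 ≠ p4 := by
      have : p4 ∈ S.erase p1 := by
        rw [herase, Finset.mem_insert, Finset.mem_insert, Finset.mem_singleton]
        exact Or.inr (Or.inr rfl)
      exact fun h => (Finset.ne_of_mem_erase this) h.symm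
    have hsum : ∀ f : ZMod n × ZMod n → GaloisField 2 (4 * r),
        ∑ p ∈ S, f p = f p1 + f p2 + f p3 + f p4 := by
      intro f
      have n2 : p2 ∉ ({p3, p4} : Finset (ZMod n × ZMod n)) := by
        rw [Finset.mem_insert, Finset.mem_singleton]
        rintro (h | h)
        exacts [h23 h, h24 h]
      have n3 : p3 ∉ ({p4} : Finset (ZMod n × ZMod n)) := by
        rw [Finset.mem_singleton]
        exact h34
      rw [← Finset.add_sum_erase S f hp1, herase, Finset.sum_insert n2,
        Finset.sum_insert n3, Finset.sum_singleton]
      ring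
    set a1 := α ^ p1.1.val with ha1e
    set a2 := α ^ p2.1.val with ha2e
    set a3 := α ^ p3.1.val with ha3e
    set a4 := α ^ p4.1.val with ha4e
    set b1 := α ^ p1.2.val with hb1e
    set b2 := α ^ p2.2.val with hb2e
    set b3 := α ^ p3.2.val with hb3e
    set b4 := α ^ p4.2.val with hb4e
    have ha : a1 + a2 + a3 + a4 = 0 := by
      have h := key α 1 mα1
      rw [hsum] at h
      simpa only [one_pow, mul_one] using h
    have ha3' : a1 ^ 3 + a2 ^ 3 + a3 ^ 3 + a4 ^ 3 = 0 := by
      have h := key (α ^ 3) 1 mα31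
      rw [hsum] at h
      simpa only [one_pow, mul_one, pow_right_comm α 3] using h
    have hb : b1 + b2 + b3 + b4 = 0 := by
      have h := key 1 α m1α
      rw [hsum] at h
      simpa only [one_pow, one_mul] using h
    have hb3' : b1 ^ 3 + b2 ^ 3 + b3 ^ 3 + b4 ^ 3 = 0 := by
      have h := key 1 (α ^ 3) m1α3
      rw [hsum] at h
      simpa only [one_pow, one_mul, pow_right_comm α 3] using h
    have hab : a1 * b1 + a2 * b2 + a3 * b3 + a4 * b4 = 0 := by
      have h := key α α mαα
      rw [hsum] at h
      exact h
    rcases char2_pair4 a1 a2 a3 a4 ha ha3' with ⟨ea, ea'⟩ | ⟨ea, ea'⟩ | ⟨ea, ea'⟩ <;>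
      rcases char2_pair4 b1 b2 b3 b4 hb hb3' with ⟨eb, eb'⟩ | ⟨eb, eb'⟩ | ⟨eb, eb'⟩
    -- (A1,B1)
    · exact dup p1 p2 h12 ea eb
    -- (A1,B2): a1=a2, a3=a4, b1=b3, b2=b4
    · rw [ea, ea', eb, eb'] at hab
      have hfac : (a2 + a4) * (b3 + b4) = 0 := by linear_combination hab
      rcases mul_eq_zero.mp hfac with h | h
      · exact dup p2 p4 h24 (char2_eq_of_add_eq_zero h) eb'
      · exact dup p3 p4 h34 ea' (char2_eq_of_add_eq_zero h)
    -- (A1,B3): a1=a2, a3=a4, b1=b4, b2=b3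
    · rw [ea, ea', eb, eb'] at hab
      have hfac : (a2 + a4) * (b3 + b4) = 0 := by linear_combination hab
      rcases mul_eq_zero.mp hfac with h | h
      · exact dup p1 p4 h14 (ea.trans (char2_eq_of_add_eq_zero h)) eb
      · exact dup p3 p4 h34 ea' (char2_eq_of_add_eq_zero h)
    -- (A2,B1): a1=a3, a2=a4, b1=b2, b3=b4
    · rw [ea, ea', eb, eb'] at hab
      have hfac : (a3 + a4) * (b2 + b4) = 0 := by linear_combination hab
      rcases mul_eq_zero.mp hfac with h | h
      · exact dup p3 p4 h34 (char2_eq_of_add_eq_zero h) eb'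
      · exact dup p2 p4 h24 ea' (char2_eq_of_add_eq_zero h)
    -- (A2,B2)
    · exact dup p1 p3 h13 ea eb
    -- (A2,B3): a1=a3, a2=a4, b1=b4, b2=b3
    · rw [ea, ea', eb, eb'] at hab
      have hfac : (a3 + a4) * (b3 + b4) = 0 := by linear_combination hab
      rcases mul_eq_zero.mp hfac with h | h
      · exact dup p1 p4 h14 (ea.trans (char2_eq_of_add_eq_zero h)) eb
      · exact dup p1 p3 h13 ea (eb.trans (char2_eq_of_add_eq_zero h).symm)
    -- (A3,B1): a1=a4, a2=a3, b1=b2, b3=b4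
    · rw [ea, ea', eb, eb'] at hab
      have hfac : (a3 + a4) * (b2 + b4) = 0 := by linear_combination hab
      rcases mul_eq_zero.mp hfac with h | h
      · exact dup p3 p4 h34 (char2_eq_of_add_eq_zero h) eb'
      · exact dup p1 p4 h14 ea (eb.trans (char2_eq_of_add_eq_zero h))
    -- (A3,B2): a1=a4, a2=a3, b1=b3, b2=b4
    · rw [ea, ea', eb, eb'] at hab
      have hfac : (a3 + a4) * (b3 + b4) = 0 := by linear_combination hab
      rcases mul_eq_zero.mp hfac with h | h
      · exact dup p1 p3 h13 (ea.trans (char2_eq_of_add_eq_zero h).symm) eb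
      · exact dup p2 p3 h23 ea' (eb'.trans (char2_eq_of_add_eq_zero h).symm)
    -- (A3,B3)
    · exact dup p1 p4 h14 ea eb
end

section
/- Let F be a field of characteristic 2 and let β ∈ F satisfy β⁵ = 1 and β ≠ 1. Then for all pairwise distinct natural numbers c₁, c₂, c₃ ∈ {0, 1, 2, 3, 4}, we have β^{c₁} + β^{c₂} + β^{c₃} ≠ 0. -/
set_option maxHeartbeats 1000000 in
theorem stmt_18 (F : Type*) [Field F] [CharP F 2]
    (β : F) (hβ5 : β ^ 5 = 1) (hβ1 : β ≠ 1) :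
    ∀ c₁ c₂ c₃ : ℕ, c₁ < 5 → c₂ < 5 → c₃ < 5 →
      c₁ ≠ c₂ → c₁ ≠ c₃ → c₂ ≠ c₃ →
      β ^ c₁ + β ^ c₂ + β ^ c₃ ≠ 0 := by
  have hβ0 : β ≠ 0 := by
    intro h0
    rw [h0] at hβ5
    simp at hβ5
  have hk : ∀ k : ℕ, 0 < k → k < 5 → β ^ k ≠ 1 := by
    intro k hk1 hk2 h
    have h1 := orderOf_dvd_of_pow_eq_one h
    have h2 := orderOf_dvd_of_pow_eq_one hβ5
    have hd : orderOf β ∣ Nat.gcd k 5 := Nat.dvd_gcd h1 h2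
    have hg : Nat.gcd k 5 = 1 := by interval_cases k <;> decide
    rw [hg, Nat.dvd_one] at hd
    exact hβ1 (orderOf_eq_one_iff.mp hd)
  have hsum : 1 + β + β ^ 2 + β ^ 3 + β ^ 4 = 0 := by
    have hz : (β - 1) * (1 + β + β ^ 2 + β ^ 3 + β ^ 4) = 0 := by linear_combination hβ5
    rcases mul_eq_zero.mp hz with h | h
    · exact absurd (sub_eq_zero.mp h) hβ1
    · exact h
  have pair : ∀ d e : ℕ, d < e → e < 5 → β ^ d + β ^ e = 0 → False := by
    intro d e hde he5 h
    have hE : β ^ d = β ^ e := by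
      rw [eq_neg_of_add_eq_zero_left h, CharTwo.neg_eq]
    have h1 : β ^ (e - d) = 1 := by
      apply mul_left_cancel₀ (pow_ne_zero d hβ0)
      rw [← pow_add, mul_one, show d + (e - d) = e by omega, ← hE]
    exact hk (e - d) (by omega) (by omega) h1
  intro c₁ c₂ c₃ h1 h2 h3 h12 h13 h23
  interval_cases c₁ <;> interval_cases c₂ <;> interval_cases c₃ <;>
    intro h <;>
    first
    | omega
    | exact pair 0 1 (by norm_num) (by norm_num) (by linear_combination hsum - h)
    | exact pair 0 2 (by norm_num) (by norm_num) (by linear_combination hsum - h)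
    | exact pair 0 3 (by norm_num) (by norm_num) (by linear_combination hsum - h)
    | exact pair 0 4 (by norm_num) (by norm_num) (by linear_combination hsum - h)
    | exact pair 1 2 (by norm_num) (by norm_num) (by linear_combination hsum - h)
    | exact pair 1 3 (by norm_num) (by norm_num) (by linear_combination hsum - h)
    | exact pair 1 4 (by norm_num) (by norm_num) (by linear_combination hsum - h)
    | exact pair 2 3 (by norm_num) (by norm_num) (by linear_combination hsum - h)
    | exact pair 2 4 (by norm_num) (by norm_num) (by linear_combination hsum - h)
    | exact pair 3 4 (by norm_num) (by norm_num) (by linear_combination hsum - h)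
end
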